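/- arXiv:math/0601604 — 10 statements merged into one kernel-verified Lean document; each statement's English description precedes it below -/
import Mathlib

section
/- Let u = (u_n) be a sequence over a finite alphabet that is not eventually periodic, and suppose its k-kernel (the set of subsequences (u_{k^i n + j}) for i ≥ 0, 0 ≤ j < k^i) has cardinality m. If a word of the form U V^s (with U a finite word, V a nonempty finite word, s a rational ≥ 1, and V^s denoting V repeated s times with a fractional prefix) is a prefix of u, then |U V^s| < k^m · |U V|. -/
/-- `L` is a prefix of the infinite sequence `u`. -/
def IsPrefixSeq {A : Type*} (L : List A) (u : ℕ → A) : Prop :=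
  ∀ i, i < L.length → L[i]? = some (u i)

/-- The `k`-kernel of a sequence. -/
def kKernel {A : Type*} (k : ℕ) (u : ℕ → A) : Set (ℕ → A) :=
  {v | ∃ i j : ℕ, j < k ^ i ∧ v = fun n => u (k ^ i * n + j)}

def EventuallyPeriodic {A : Type*} (u : ℕ → A) : Prop :=
  ∃ p > 0, ∃ N, ∀ n ≥ N, u (n + p) = u n

/-- `V^s`: `⌊s⌋` copies of `V` followed by the prefix of `V` of length `⌈(s-⌊s⌋)|V|⌉`. -/
def fracPow {A : Type*} (V : List A) (s : ℚ) : List A :=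
  (List.replicate (⌊s⌋).toNat V).flatten ++ V.take (⌈(s - ⌊s⌋) * V.length⌉).toNat

/-!
Suppose `u` has period `p = |V|` on `[|U|, |U V^s|)` with `|U V^s| ≥ k^m |U V|`. Every kernel
element is `(u (k^i n + j))ₙ` with `i < m`, because as long as the levels `i ≤ t` keep producing
new kernel elements their union grows, and once it stops growing it never grows again. Hence
every kernel element has period `p` on `[|U|, k |U V|)`. The kernel is closed under
`v ↦ (v (k n + r))ₙ`, and such a family of local periods propagates to all of `[|U|, ∞)`,
so `u` would be eventually periodic.
-/

section Period

variable {α : Type*}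

def HasPeriodOn (f : ℕ → α) (p a b : ℕ) : Prop :=
  ∀ n, a ≤ n → n + p < b → f (n + p) = f n

theorem HasPeriodOn.apply_add_mul {f : ℕ → α} {p a b x : ℕ} (h : HasPeriodOn f p a b)
    (hx : a ≤ x) : ∀ {t : ℕ}, x + t * p < b → f (x + t * p) = f x
  | 0, _ => by simp
  | t + 1, hlt => by
    rw [Nat.succ_mul, ← add_assoc] at hlt ⊢
    rw [h _ (by omega) hlt]
    exact h.apply_add_mul hx (by omega)

theorem List.hasPeriod_length_of_prefix_append {L V : List α} (hL : L <+: V ++ L) :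
    L.HasPeriod V.length := by
  rw [List.hasPeriod_iff_getElem?]
  intro i hi
  obtain ⟨t, ht⟩ := hL
  have h := congrArg (·[i + V.length]?) ht
  rwa [List.getElem?_append_left (by omega), List.getElem?_append_right (by omega),
    Nat.add_sub_cancel, eq_comm] at h

theorem fracPow_hasPeriod (V : List α) (s : ℚ) : (fracPow V s).HasPeriod V.length := by
  refine List.hasPeriod_length_of_prefix_append ?_
  unfold fracPow
  rw [← List.append_assoc, ← List.flatten_cons, ← List.replicate_succ,
    List.replicate_succ', List.flatten_concat, List.append_assoc, List.prefix_append_right_inj]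
  exact (List.take_prefix _ V).trans (List.prefix_append V _)

theorem IsPrefixSeq.hasPeriodOn {u : ℕ → α} {U V : List α} {s : ℚ}
    (h : IsPrefixSeq (U ++ fracPow V s) u) :
    HasPeriodOn u V.length U.length (U ++ fracPow V s).length := by
  intro n hn hlt
  rw [List.length_append] at hlt
  have hsucc := h (n + V.length) (by simpa using hlt)
  have hself := h n (by simp; omega)
  rw [List.getElem?_append_right (by omega), Nat.sub_add_comm hn,
    ← List.hasPeriod_iff_getElem?.mp (fracPow_hasPeriod V s) _ (by omega),
    ← List.getElem?_append_right (by omega), hself] at hsucc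
  exact (Option.some.inj hsucc).symm

end Period

theorem Set.exists_lt_ncard_succ_subset {α : Type*} {S : Set α} (hS : S.Finite)
    {f : ℕ → Set α} (hf : Monotone f) (hfS : ∀ t, f t ⊆ S) (h0 : (f 0).Nonempty) :
    ∃ t < S.ncard, f (t + 1) ⊆ f t := by
  by_contra! hgrow
  have hcard : ∀ t ≤ S.ncard, t + 1 ≤ (f t).ncard := by
    intro t
    induction t with
    | zero => exact fun _ => (Set.ncard_pos (hS.subset (hfS 0))).mpr h0
    | succ t ih =>
      intro ht
      have hss : f t ⊂ f (t + 1) := Set.ssubset_def.mpr ⟨hf t.le_succ, hgrow t ht⟩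
      have := Set.ncard_lt_ncard hss (hS.subset (hfS (t + 1)))
      have := ih (by omega)
      omega
  have := Set.ncard_le_ncard (hfS S.ncard) hS
  have := hcard S.ncard le_rfl
  omega

section Kernel

variable {α : Type*} {k : ℕ} {u : ℕ → α}

variable (k u) in
def kKernelLevel (i : ℕ) : Set (ℕ → α) :=
  {v | ∃ j, j < k ^ i ∧ v = fun n => u (k ^ i * n + j)}

theorem mem_kKernel_iff {v : ℕ → α} : v ∈ kKernel k u ↔ ∃ i, v ∈ kKernelLevel k u i :=
  Iff.rfl

theorem self_mem_kKernelLevel_zero : u ∈ kKernelLevel k u 0 :=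
  ⟨0, by simp, by simp⟩

theorem comp_mem_kKernelLevel_succ {w : ℕ → α} {i r : ℕ} (hw : w ∈ kKernelLevel k u i)
    (hr : r < k) : (fun x => w (k * x + r)) ∈ kKernelLevel k u (i + 1) := by
  obtain ⟨j, hj, rfl⟩ := hw
  refine ⟨k ^ i * r + j, ?_, ?_⟩
  · calc k ^ i * r + j < k ^ i * (r + 1) := by rw [mul_add_one]; omega
      _ ≤ k ^ (i + 1) := by rw [pow_succ]; exact Nat.mul_le_mul_left _ hr
  · funext x
    exact congrArg u (by ring)

theorem comp_mem_kKernel {v : ℕ → α} (hv : v ∈ kKernel k u) {r : ℕ} (hr : r < k) :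
    (fun x => v (k * x + r)) ∈ kKernel k u :=
  let ⟨i, hi⟩ := mem_kKernel_iff.mp hv
  ⟨i + 1, comp_mem_kKernelLevel_succ hi hr⟩

theorem exists_comp_of_mem_kKernelLevel_succ (hk : 0 < k) {v : ℕ → α} {i : ℕ}
    (hv : v ∈ kKernelLevel k u (i + 1)) :
    ∃ w ∈ kKernelLevel k u i, ∃ r < k, v = fun x => w (k * x + r) := by
  obtain ⟨j, hj, rfl⟩ := hv
  have hpos : 0 < k ^ i := pow_pos hk i
  refine ⟨_, ⟨j % k ^ i, Nat.mod_lt _ hpos, rfl⟩, j / k ^ i, ?_, ?_⟩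
  · rwa [Nat.div_lt_iff_lt_mul hpos, mul_comm, ← pow_succ]
  · funext x
    congr 1
    conv_lhs => rw [← Nat.div_add_mod j (k ^ i), pow_succ]
    ring

theorem kKernelLevel_subset_of_succ_subset (hk : 0 < k) {t : ℕ}
    (hstab : (⋃ i ≤ t + 1, kKernelLevel k u i) ⊆ ⋃ i ≤ t, kKernelLevel k u i) (i : ℕ) :
    kKernelLevel k u i ⊆ ⋃ i ≤ t, kKernelLevel k u i := by
  induction i with
  | zero => exact Set.subset_biUnion_of_mem (u := kKernelLevel k u) (Nat.zero_le t)
  | succ i ih =>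
    intro v hv
    obtain ⟨w, hw, r, hr, rfl⟩ := exists_comp_of_mem_kKernelLevel_succ hk hv
    obtain ⟨i', hi't, hw'⟩ := Set.mem_iUnion₂.mp (ih hw)
    exact hstab (Set.mem_iUnion₂.mpr ⟨i' + 1, by omega, comp_mem_kKernelLevel_succ hw' hr⟩)

end Kernel

theorem exists_mem_kKernelLevel_lt_ncard {α : Type*} {k : ℕ} {u : ℕ → α} (hk : 0 < k)
    (hfin : (kKernel k u).Finite) {v : ℕ → α} (hv : v ∈ kKernel k u) :
    ∃ i < (kKernel k u).ncard, v ∈ kKernelLevel k u i := by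
  obtain ⟨t, ht, hstab⟩ := Set.exists_lt_ncard_succ_subset hfin
    (f := fun t => ⋃ i ≤ t, kKernelLevel k u i)
    (fun _ _ hst => Set.biUnion_mono (fun i (hi : i ≤ _) => hi.trans hst) fun _ _ => le_rfl)
    (fun _ => Set.iUnion₂_subset fun i _ v hv => mem_kKernel_iff.mpr ⟨i, hv⟩)
    ⟨u, Set.mem_iUnion₂.mpr ⟨0, le_rfl, self_mem_kKernelLevel_zero⟩⟩
  obtain ⟨i, hi⟩ := mem_kKernel_iff.mp hv
  obtain ⟨i', hi't, hv'⟩ := Set.mem_iUnion₂.mp (kKernelLevel_subset_of_succ_subset hk hstab i hi)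
  exact ⟨i', by omega, hv'⟩

theorem HasPeriodOn.comp_mul_pow_add {α : Type*} {u : ℕ → α} {p a L k i j : ℕ}
    (h : HasPeriodOn u p a L) (hj : j < k ^ i) (hL : k ^ (i + 1) * (a + p) ≤ L) :
    HasPeriodOn (fun n => u (k ^ i * n + j)) p a (k * (a + p)) := by
  intro n hn hlt
  have hx : a ≤ k ^ i * n + j :=
    (hn.trans (Nat.le_mul_of_pos_left n (by omega))).trans le_self_add
  calc u (k ^ i * (n + p) + j) = u (k ^ i * n + j + k ^ i * p) := by ring_nf
    _ = u (k ^ i * n + j) := h.apply_add_mul hx <| by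
      calc k ^ i * n + j + k ^ i * p < k ^ i * (n + p + 1) := by rw [mul_add_one, mul_add]; omega
        _ ≤ k ^ i * (k * (a + p)) := Nat.mul_le_mul_left _ hlt
        _ = k ^ (i + 1) * (a + p) := by ring
        _ ≤ L := hL

/-- Writing `n + p = k (z + p) + r`, the value `v (n + p)` is that of the member `(v (k m + r))ₘ`
at `z + p`, hence at `z < n`, i.e. `v (k z + r)`, and `n = k z + r + (k - 1) p`. -/
theorem apply_add_eq_of_hasPeriodOn_of_comp_mem {α : Type*} {S : Set (ℕ → α)} {k p a : ℕ}
    (hk : 2 ≤ k) (hS : ∀ v ∈ S, ∀ r < k, (fun n => v (k * n + r)) ∈ S)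
    (hloc : ∀ v ∈ S, HasPeriodOn v p a (k * (a + p))) :
    ∀ n, a ≤ n → ∀ v ∈ S, v (n + p) = v n := by
  rcases Nat.eq_zero_or_pos p with rfl | hp
  · simp
  intro n
  induction n using Nat.strong_induction_on with
  | _ n ih =>
  intro hn v hv
  by_cases hwin : n + p < k * (a + p)
  · exact hloc v hv n hn hwin
  obtain ⟨y, r, hr, hdiv⟩ : ∃ y r, r < k ∧ k * y + r = n + p :=
    ⟨_, _, Nat.mod_lt _ (by omega), Nat.div_add_mod (n + p) k⟩
  have hy : a + p ≤ y := Nat.lt_succ_iff.mp <| Nat.lt_of_mul_lt_mul_left (a := k) (by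
    rw [Nat.mul_succ]; omega)
  have hyn : y < n + p := by nlinarith
  obtain ⟨z, rfl⟩ : ∃ z, y = z + p := ⟨y - p, by omega⟩
  have hchild : v (k * (z + p) + r) = v (k * z + r) :=
    ih z (by omega) (by omega) _ (hS v hv r hr)
  have hnx : k * z + r + (k - 1) * p = n := by
    have : (k - 1) * p + p = k * p := by
      rw [Nat.sub_one_mul, Nat.sub_add_cancel (Nat.le_mul_of_pos_left p (by omega))]
    rw [mul_add] at hdiv
    omega
  have hper : HasPeriodOn v p a (n + p) := fun m hm hlt => ih m (by omega) hm v hv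
  calc v (n + p) = v (k * z + r) := by rw [← hdiv, hchild]
    _ = v n := by
      rw [← hnx]
      exact (hper.apply_add_mul (by nlinarith) (by omega)).symm

theorem stmt0_general {A : Type*} (k m : ℕ) (hk : 2 ≤ k) (u : ℕ → A)
    (hnp : ¬ EventuallyPeriodic u)
    (hfin : (kKernel k u).Finite) (hm : (kKernel k u).ncard = m)
    (U V : List A) (hV : V ≠ []) (s : ℚ)
    (hpre : IsPrefixSeq (U ++ fracPow V s) u) :
    (U ++ fracPow V s).length < k ^ m * (U ++ V).length := by
  by_contra! hlong
  have hloc : ∀ v ∈ kKernel k u, HasPeriodOn v V.length U.length (k * (U.length + V.length)) := by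
    intro v hv
    obtain ⟨i, hi, j, hj, rfl⟩ := exists_mem_kKernelLevel_lt_ncard (by omega) hfin hv
    refine hpre.hasPeriodOn.comp_mul_pow_add hj (le_trans ?_ hlong)
    rw [List.length_append]
    exact Nat.mul_le_mul_right _ (Nat.pow_le_pow_right (by omega) (by omega))
  refine hnp ⟨V.length, List.length_pos_iff.mpr hV, U.length, fun n hn => ?_⟩
  exact apply_add_eq_of_hasPeriodOn_of_comp_mem hk (fun v hv r hr => comp_mem_kKernel hv hr) hloc
    n hn u (mem_kKernel_iff.mpr ⟨0, self_mem_kKernelLevel_zero⟩)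

theorem stmt0 {A : Type*} [Fintype A] (k m : ℕ) (hk : 2 ≤ k) (u : ℕ → A)
    (hnp : ¬ EventuallyPeriodic u)
    (hfin : (kKernel k u).Finite) (hm : (kKernel k u).ncard = m)
    (U V : List A) (hV : V ≠ []) (s : ℚ) (hs : 1 ≤ s)
    (hpre : IsPrefixSeq (U ++ fracPow V s) u) :
    (U ++ fracPow V s).length < k ^ m * (U ++ V).length :=
  stmt0_general k m hk u hnp hfin hm U V hV s hpre
end

section
/- Let u be a sequence over a finite alphabet, k ≥ 2, and say a triple of integers (h, p, l) is admissible for u if 1 ≤ p ≤ h ≤ l, u_{n−p} = u_n for all n with h ≤ n < l, and u_{l−p} ≠ u_l. If (h, p, l) is admissible for u, r is the remainder of l modulo k, u' is the sequence n ↦ u_{kn+r}, l' = ⌊l/k⌋ and h' = l' + p − ⌊(l + p − h)/k⌋, then h' ≤ h, and if moreover l' ≥ h', then the triple (h', p, l') is admissible for u'. -/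
/-- A triple `(h,p,l)` is admissible for the sequence `u`. -/
def Admissible {A : Type*} (u : ℕ → A) (h p l : ℕ) : Prop :=
  1 ≤ p ∧ p ≤ h ∧ h ≤ l ∧ (∀ n, h ≤ n → n < l → u (n - p) = u n) ∧ u (l - p) ≠ u l

/-!
Write `l = k l' + r` and `q = ⌊(l + p - h) / k⌋`. The bound `h' ≤ h` is `⌊l / k⌋ ≤ ⌊(l - d) / k⌋ + d`
for `d = h - p`. If `h' ≤ l'` then `p ≤ q`, so `k p ≤ l + p - h`: each position `k n + r` with
`h' ≤ n ≤ l'` lies at least `(k - 1) p` above `h`, and chaining `k` steps of the period `p` of `u`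
on `[h, l)` gives `u (k (n - p) + r) = u (k n + r)` for `n < l'`, while `k - 1` steps give
`u (k (l' - p) + r) = u (l - p) ≠ u l`.
-/

theorem Nat.div_le_sub_div_add (l d k : ℕ) : l / k ≤ (l - d) / k + d := by
  rcases Nat.eq_zero_or_pos k with rfl | hk
  · simp
  have hd : d ≤ k * d := Nat.le_mul_of_pos_left d hk
  calc l / k ≤ (l - d + k * d) / k := Nat.div_le_div_right (by omega)
    _ = (l - d) / k + d := Nat.add_mul_div_left _ _ hk

theorem apply_eq_apply_add_mul_of_period {A : Type*} {u : ℕ → A} {h p l : ℕ}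
    (hper : ∀ n, h ≤ n → n < l → u (n - p) = u n) {a : ℕ} (ha : h ≤ a + p) :
    ∀ {j : ℕ}, a + j * p < l → u a = u (a + j * p)
  | 0, _ => by simp
  | j + 1, hj => by
    rw [add_one_mul, ← add_assoc] at hj ⊢
    rw [apply_eq_apply_add_mul_of_period hper ha (j := j) (by omega), ← hper _ (by omega) hj,
      Nat.add_sub_cancel]

namespace Admissible

variable {A : Type*} {u : ℕ → A} {h p l : ℕ}

theorem div_add_sub_div_le (hadm : Admissible u h p l) (k : ℕ) :
    l / k + p - (l + p - h) / k ≤ h := by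
  obtain ⟨-, hph, hhl, -⟩ := hadm
  have := Nat.div_le_sub_div_add l (h - p) k
  rw [show l + p - h = l - (h - p) by omega]
  omega

theorem decimate (hadm : Admissible u h p l) {k : ℕ}
    (hle : l / k + p - (l + p - h) / k ≤ l / k) :
    Admissible (fun n => u (k * n + l % k)) (l / k + p - (l + p - h) / k) p (l / k) := by
  obtain ⟨hp, hph, hhl, hper, hne⟩ := hadm
  set l' := l / k
  set q := (l + p - h) / k
  have hl : k * l' + l % k = l := Nat.div_add_mod l k
  have hq : k * q ≤ l + p - h := Nat.mul_div_le _ _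
  have hql : q ≤ l' := Nat.div_le_div_right (by omega)
  have hpq : p ≤ q := by omega
  have hk : 0 < k := Nat.pos_of_ne_zero fun hk => by simp [q, hk] at hpq; omega
  have hkp : k * p ≤ k * q := Nat.mul_le_mul_left k hpq
  refine ⟨hp, by omega, hle, fun n hn hnl => ?_, ?_⟩
  · have hkn : k * (l' + p - q) ≤ k * n := Nat.mul_le_mul_left k hn
    have hkn' : k * n < k * l' := Nat.mul_lt_mul_of_pos_left hnl hk
    have hsub : k * (n - p) + k * p = k * n := by rw [← mul_add, Nat.sub_add_cancel (by omega)]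
    have hstart : k * (l' + p - q) + k * q = k * l' + k * p := by
      rw [← mul_add, ← mul_add, Nat.sub_add_cancel (by omega)]
    have := apply_eq_apply_add_mul_of_period hper (a := k * (n - p) + l % k) (j := k)
      (by omega) (by omega)
    rwa [add_right_comm, hsub] at this
  · have hsub : k * (l' - p) + k * p = k * l' := by
      rw [← mul_add, Nat.sub_add_cancel (by omega)]
    have hpred : (k - 1) * p + p = k * p := by
      rw [Nat.sub_one_mul, Nat.sub_add_cancel (Nat.le_mul_of_pos_left p hk)]
    have := apply_eq_apply_add_mul_of_period hper (a := k * (l' - p) + l % k) (j := k - 1)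
      (by omega) (by omega)
    simp only [hl]
    rw [this, show k * (l' - p) + l % k + (k - 1) * p = l - p by omega]
    exact hne

end Admissible

theorem stmt1_general {A : Type*} (k : ℕ) (u : ℕ → A) (h p l : ℕ)
    (hadm : Admissible u h p l) :
    l / k + p - (l + p - h) / k ≤ h ∧
      (l / k + p - (l + p - h) / k ≤ l / k →
        Admissible (fun n => u (k * n + l % k)) (l / k + p - (l + p - h) / k) p (l / k)) :=
  ⟨hadm.div_add_sub_div_le k, hadm.decimate⟩

theorem stmt1 {A : Type*} (k : ℕ) (hk : 2 ≤ k) (u : ℕ → A) (h p l : ℕ)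
    (hadm : Admissible u h p l) :
    l / k + p - (l + p - h) / k ≤ h ∧
      (l / k + p - (l + p - h) / k ≤ l / k →
        Admissible (fun n => u (k * n + l % k)) (l / k + p - (l + p - h) / k) p (l / k)) :=
  stmt1_general k u h p l hadm
end

section
/- Let u be a k-automatic sequence (equivalently, a sequence whose k-kernel is finite) with k-kernel of cardinality m, and assume u is not eventually periodic. Then for every triple of integers (h, p, l) with 1 ≤ p ≤ h ≤ l such that u_{n−p} = u_n for all h ≤ n < l and u_{l−p} ≠ u_l, one has l < h·k^m. -/
section

variable {A : Type*}

lemma apply_add_mul_eq_of_forall_sub_eq {u : ℕ → A} {h p l z : ℕ}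
    (hrep : ∀ n, h ≤ n → n < l → u (n - p) = u n) (hz : h ≤ z + p) :
    ∀ t, z + p * t < l → u (z + p * t) = u z := by
  intro t
  induction t with
  | zero => simp
  | succ t ih =>
    intro ht
    have hstep := hrep (z + p * t + p) (by nlinarith) (by linarith [mul_add p t 1])
    rw [Nat.add_sub_cancel] at hstep
    rw [mul_add, mul_one, ← add_assoc, ← hstep]
    exact ih (by linarith [mul_add p t 1])

lemma exists_lt_le_ncard_kKernel_eq {k : ℕ} (hk : 0 < k) {u : ℕ → A}
    (hfin : (kKernel k u).Finite) (l : ℕ) :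
    ∃ a b, a < b ∧ b ≤ (kKernel k u).ncard ∧
      ∀ n, u (k ^ a * n + l % k ^ a) = u (k ^ b * n + l % k ^ b) := by
  have hmaps : ∀ i ∈ Set.Iic (kKernel k u).ncard,
      (fun n => u (k ^ i * n + l % k ^ i)) ∈ kKernel k u :=
    fun i _ => ⟨i, l % k ^ i, Nat.mod_lt _ (pow_pos hk i), rfl⟩
  obtain ⟨a, ha, b, hb, hne, hab⟩ := Set.exists_ne_map_eq_of_ncard_lt_of_maps_to
    (by rw [Set.ncard_Iic_nat]; omega) hmaps hfin
  rcases hne.lt_or_gt with hlt | hgt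
  · exact ⟨a, b, hlt, hb, congrFun hab⟩
  · exact ⟨b, a, hgt, ha, fun n => (congrFun hab n).symm⟩

lemma apply_sub_eq_of_apply_mul_add_eq {u : ℕ → A} {h p l K K' N r r' : ℕ}
    (hp : 1 ≤ p) (hph : p ≤ h) (hrep : ∀ n, h ≤ n → n < l → u (n - p) = u n)
    (hK : 2 * K ≤ K') (hr : r < K) (hN : h ≤ N) (hl : K' * N + r' = l)
    (heq : ∀ n, u (K * n + r) = u (K' * n + r')) :
    u (l - p) = u l := by
  obtain ⟨Q, rfl⟩ : ∃ Q, N = Q + p := ⟨N - p, by omega⟩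
  have hQK : Q ≤ K * Q := Nat.le_mul_of_pos_left Q (by omega)
  have hQK' : Q ≤ K' * Q := Nat.le_mul_of_pos_left Q (by omega)
  have hKK' : p * K ≤ p * K' := Nat.mul_le_mul_left p (by omega)
  have hwithin : K * Q + r + p * K < l := calc
    K * Q + r + p * K < K * (Q + p) + K := by linarith
    _ ≤ 2 * K * (Q + p) := by nlinarith
    _ ≤ K' * (Q + p) := Nat.mul_le_mul_right _ hK
    _ ≤ l := by omega
  have hshiftK : u (K * (Q + p) + r) = u (K * Q + r) := by
    rw [← apply_add_mul_eq_of_forall_sub_eq hrep (by omega) K hwithin]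
    ring_nf
  have hsplit : K' * Q + r' + p * (K' - 1) = l - p := by
    rw [Nat.mul_sub, mul_one, ← hl]
    have : p ≤ p * K' := Nat.le_mul_of_pos_right p (by omega)
    rw [mul_add, mul_comm K' p]
    omega
  have hshiftK' : u (l - p) = u (K' * Q + r') := by
    rw [← hsplit]
    exact apply_add_mul_eq_of_forall_sub_eq hrep (by omega) _ (by omega)
  calc u (l - p) = u (K' * Q + r') := hshiftK'
    _ = u (K * Q + r) := (heq Q).symm
    _ = u (K * (Q + p) + r) := hshiftK.symm
    _ = u (K' * (Q + p) + r') := heq (Q + p)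
    _ = u l := by rw [hl]

end

theorem stmt2_general {A : Type*} (k m : ℕ) (hk : 2 ≤ k) (u : ℕ → A)
    (hfin : (kKernel k u).Finite) (hm : (kKernel k u).ncard = m)
    (h p l : ℕ) (hp : 1 ≤ p) (hph : p ≤ h)
    (hrep : ∀ n, h ≤ n → n < l → u (n - p) = u n)
    (hbreak : u (l - p) ≠ u l) :
    l < h * k ^ m := by
  by_contra! hlong
  obtain ⟨a, b, hab, hbm, heq⟩ := exists_lt_le_ncard_kKernel_eq (by omega) hfin l
  have hkb : h * k ^ b ≤ l :=
    (Nat.mul_le_mul_left h (Nat.pow_le_pow_right (by omega) (hm ▸ hbm))).trans hlong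
  have hpow : 2 * k ^ a ≤ k ^ b := calc
    2 * k ^ a ≤ k * k ^ a := Nat.mul_le_mul_right _ hk
    _ = k ^ (a + 1) := (pow_succ' k a).symm
    _ ≤ k ^ b := Nat.pow_le_pow_right (by omega) hab
  exact hbreak (apply_sub_eq_of_apply_mul_add_eq hp hph hrep hpow
    (Nat.mod_lt l (by positivity)) ((Nat.le_div_iff_mul_le (by positivity)).2 hkb)
    (Nat.div_add_mod l (k ^ b)) heq)

theorem stmt2 {A : Type*} (k m : ℕ) (hk : 2 ≤ k) (u : ℕ → A)
    (hfin : (kKernel k u).Finite) (hm : (kKernel k u).ncard = m)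
    (hnp : ¬ EventuallyPeriodic u)
    (h p l : ℕ) (hp : 1 ≤ p) (hph : p ≤ h) (hhl : h ≤ l)
    (hrep : ∀ n, h ≤ n → n < l → u (n - p) = u n)
    (hbreak : u (l - p) ≠ u l) :
    l < h * k ^ m :=
  stmt2_general k m hk u hfin hm h p l hp hph hrep hbreak
end

section
/- Let b ≥ 2, let U and V be finite words over {0,…,b−1} of lengths r and s ≥ 1 respectively, and let p/q be the rational number whose b-adic expansion is 0.U V V V… (preperiod U, period V), i.e. p/q = Σ_{n≥1} a_n b^{−n} where (a_n) has preperiod U and period V. Let ξ = Σ_{n≥1} b_n b^{−n} with digits b_n ∈ {0,…,b−1}. If there exists an integer j > r such that a_n = b_n for all 1 ≤ n < j and a_j ≠ b_j, then |ξ − p/q| > b^{−(j+s)}. -/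
/-!
Write `x` and `y` for the values of `a` and `c`. As the expansions agree before position `j`,
`y - x = (c j - a j) / b ^ j + (tail of c after j) - (tail of a after j)`. If `a j < c j`, the tail
of `c` is nonnegative, and the tail of `a` is `b ^ (-j)` minus the tail of the complementary digits
`b - 1 - a n`; by periodicity these are at least `1` at positions `j + s` and `j + 2 s`, which gives
the strict bound. The case `c j < a j` reduces to this one by replacing every digit `d` by
`b - 1 - d`, which preserves periodicity and negates `y - x`.
-/

noncomputable section

namespace BaseExpansion

def IsDigitSeq (β : ℝ) (d : ℕ → ℝ) : Prop := ∀ n, 0 ≤ d n ∧ d n ≤ β - 1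

def tail (β : ℝ) (d : ℕ → ℝ) (k : ℕ) : ℝ := ∑' n, d (n + k + 1) / β ^ (n + k + 1)

variable {β : ℝ} {d e : ℕ → ℝ}

theorem IsDigitSeq.complement (hd : IsDigitSeq β d) : IsDigitSeq β (fun n => β - 1 - d n) :=
  fun n => ⟨by linarith [(hd n).2], by linarith [(hd n).1]⟩

theorem IsDigitSeq.summable (hβ : 1 < β) (hd : IsDigitSeq β d) (k : ℕ) :
    Summable (fun n => d (n + k + 1) / β ^ (n + k + 1)) := by
  have hβ0 : 0 < β := by linarith
  have hgeom : Summable (fun m => (β - 1) * β⁻¹ ^ m) :=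
    (summable_geometric_of_lt_one (by positivity) (inv_lt_one_of_one_lt₀ hβ)).mul_left _
  refine Summable.of_nonneg_of_le (fun n => div_nonneg (hd _).1 (by positivity)) (fun n => ?_)
    ((summable_nat_add_iff (k + 1)).mpr hgeom)
  rw [inv_pow, ← div_eq_mul_inv]
  exact div_le_div_of_nonneg_right (hd _).2 (by positivity)

theorem summable_const_tail (hβ : 1 < β) (k : ℕ) :
    Summable (fun n => (β - 1) / β ^ (n + k + 1)) :=
  IsDigitSeq.summable (d := fun _ => β - 1) hβ (fun _ => ⟨by linarith, le_rfl⟩) k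

theorem tail_nonneg (hβ : 1 < β) (hd : IsDigitSeq β d) (k : ℕ) : 0 ≤ tail β d k :=
  tsum_nonneg fun n => div_nonneg (hd _).1 (by positivity)

theorem tail_eq_add_tail (hβ : 1 < β) (hd : IsDigitSeq β d) (k : ℕ) :
    tail β d k = d (k + 1) / β ^ (k + 1) + tail β d (k + 1) := by
  rw [tail, (hd.summable hβ k).tsum_eq_zero_add, tail, zero_add]
  congr 1
  exact tsum_congr fun n => by rw [show n + 1 + k + 1 = n + (k + 1) + 1 by omega]

theorem tail_sub_tail_of_eqOn (hβ : 1 < β) (hd : IsDigitSeq β d) (he : IsDigitSeq β e) {k : ℕ}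
    (hagree : ∀ n, 1 ≤ n → n ≤ k → d n = e n) :
    tail β d 0 - tail β e 0 = tail β d k - tail β e k := by
  induction k with
  | zero => rfl
  | succ k ih =>
    rw [ih fun n h1 h2 => hagree n h1 (by omega), tail_eq_add_tail hβ hd,
      tail_eq_add_tail hβ he, hagree (k + 1) (by omega) le_rfl]
    ring

theorem tail_const (hβ : 1 < β) (k : ℕ) : tail β (fun _ => β - 1) k = 1 / β ^ k := by
  have hβ0 : 0 < β := by linarith
  have hterm : ∀ n, (β - 1) / β ^ (n + k + 1) = (β - 1) / β ^ (k + 1) * β⁻¹ ^ n := by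
    intro n
    rw [inv_pow, pow_add, pow_add]; field_simp; ring
  rw [tail, tsum_congr hterm, tsum_mul_left,
    tsum_geometric_of_lt_one (by positivity) (inv_lt_one_of_one_lt₀ hβ)]
  have : β - 1 ≠ 0 := by linarith
  field_simp
  ring

theorem tail_complement (hβ : 1 < β) (hd : IsDigitSeq β d) (k : ℕ) :
    tail β (fun n => β - 1 - d n) k = 1 / β ^ k - tail β d k := by
  rw [← tail_const hβ k, tail, tail, tail,
    ← (summable_const_tail hβ k).tsum_sub (hd.summable hβ k)]
  exact tsum_congr fun n => sub_div _ _ _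

theorem lt_tail (hβ : 1 < β) (hd : IsDigitSeq β d) {k m m' : ℕ} (hkm : k < m) (hmm' : m < m')
    (hpos : 0 < d m') : d m / β ^ m < tail β d k := by
  obtain ⟨i, rfl⟩ : ∃ i, m = i + k + 1 := ⟨m - k - 1, by omega⟩
  obtain ⟨i', rfl⟩ : ∃ i', m' = i' + k + 1 := ⟨m' - k - 1, by omega⟩
  have hpair := (hd.summable hβ k).sum_le_tsum {i, i'}
    (fun n _ => div_nonneg (hd _).1 (by positivity))
  rw [Finset.sum_pair (by omega)] at hpair
  have : 0 < d (i' + k + 1) / β ^ (i' + k + 1) := div_pos hpos (by positivity)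
  rw [tail]
  linarith

variable {a c : ℕ → ℝ}

theorem lt_tail_sub_tail_of_digit_lt (hβ : 1 < β) (ha : IsDigitSeq β a) (hc : IsDigitSeq β c)
    {k s : ℕ} (hs : 1 ≤ s) (hagree : ∀ n, 1 ≤ n → n ≤ k → a n = c n)
    (hlt : a (k + 1) + 1 ≤ c (k + 1)) (hper : ∀ n, k < n → a (n + s) = a n) :
    1 / β ^ (k + 1 + s) < tail β c 0 - tail β a 0 := by
  have hper₁ : a (k + 1 + s) = a (k + 1) := hper _ (by omega)
  have hper₂ : a (k + 1 + s + s) = a (k + 1) := by rw [hper _ (by omega), hper₁]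
  have hgap : 1 ≤ β - 1 - a (k + 1) := by linarith [(hc (k + 1)).2]
  have hcompl :
      (β - 1 - a (k + 1 + s)) / β ^ (k + 1 + s) < tail β (fun n => β - 1 - a n) (k + 1) :=
    lt_tail hβ ha.complement (m' := k + 1 + s + s) (by omega) (by omega) (by
      simp only [hper₂]; linarith)
  have hjump : 1 / β ^ (k + 1) ≤ (c (k + 1) - a (k + 1)) / β ^ (k + 1) := by
    gcongr; linarith
  calc 1 / β ^ (k + 1 + s) ≤ (β - 1 - a (k + 1 + s)) / β ^ (k + 1 + s) := by
        rw [hper₁]; gcongr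
    _ < 1 / β ^ (k + 1) - tail β a (k + 1) := tail_complement hβ ha (k + 1) ▸ hcompl
    _ ≤ (c (k + 1) - a (k + 1)) / β ^ (k + 1) + tail β c (k + 1) - tail β a (k + 1) := by
        linarith [tail_nonneg hβ hc (k + 1)]
    _ = tail β c 0 - tail β a 0 := by
        rw [tail_sub_tail_of_eqOn hβ hc ha fun n h₁ h₂ => (hagree n h₁ h₂).symm,
          tail_eq_add_tail hβ hc k, tail_eq_add_tail hβ ha k]
        ring

theorem lt_abs_tail_sub_tail (hβ : 1 < β) (ha : IsDigitSeq β a) (hc : IsDigitSeq β c)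
    {k s : ℕ} (hs : 1 ≤ s) (hagree : ∀ n, 1 ≤ n → n ≤ k → a n = c n)
    (hne : a (k + 1) + 1 ≤ c (k + 1) ∨ c (k + 1) + 1 ≤ a (k + 1))
    (hper : ∀ n, k < n → a (n + s) = a n) :
    1 / β ^ (k + 1 + s) < |tail β c 0 - tail β a 0| := by
  rcases hne with hlt | hgt
  · exact (lt_tail_sub_tail_of_digit_lt hβ ha hc hs hagree hlt hper).trans_le (le_abs_self _)
  · have hcompl := lt_tail_sub_tail_of_digit_lt hβ ha.complement hc.complement hs
      (fun n h₁ h₂ => by simp only [hagree n h₁ h₂]) (by linarith)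
      (fun n hn => by simp only [hper n hn])
    rw [tail_complement hβ ha, tail_complement hβ hc] at hcompl
    linarith [neg_le_abs (tail β c 0 - tail β a 0)]

theorem isDigitSeq_natCast {b : ℕ} {d : ℕ → ℕ} (hd : ∀ n, d n < b) :
    IsDigitSeq b (fun n => (d n : ℝ)) := fun n =>
  ⟨Nat.cast_nonneg _, le_sub_iff_add_le.mpr <| by
    dsimp only; exact_mod_cast Nat.add_one_le_iff.mpr (hd n)⟩

end BaseExpansion

end

theorem stmt3 (b r s : ℕ) (hb : 2 ≤ b) (hs : 1 ≤ s)
    (a c : ℕ → ℕ) (ha : ∀ n, a n < b) (hc : ∀ n, c n < b)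
    -- `a` has preperiod of length `r` and period of length `s`
    (hper : ∀ n, r < n → a (n + s) = a n)
    (j : ℕ) (hj : r < j)
    (hagree : ∀ n, 1 ≤ n → n < j → a n = c n) (hdiff : a j ≠ c j) :
    (1 : ℝ) / (b : ℝ) ^ (j + s) <
      |(∑' n : ℕ, (c (n + 1) : ℝ) / (b : ℝ) ^ (n + 1)) -
        ∑' n : ℕ, (a (n + 1) : ℝ) / (b : ℝ) ^ (n + 1)| := by
  obtain ⟨k, rfl⟩ : ∃ k, j = k + 1 := ⟨j - 1, by omega⟩
  have hβ : (1 : ℝ) < b := by exact_mod_cast hb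
  refine BaseExpansion.lt_abs_tail_sub_tail hβ
    (BaseExpansion.isDigitSeq_natCast ha) (BaseExpansion.isDigitSeq_natCast hc) hs
    (fun n h₁ h₂ => by exact_mod_cast hagree n h₁ (by omega)) ?_
    (fun n hn => by exact_mod_cast hper n (by omega))
  rcases hdiff.lt_or_gt with h | h
  · exact Or.inl (by exact_mod_cast h)
  · exact Or.inr (by exact_mod_cast h)
end

section
/- No Liouville number is automatic: if b ≥ 2 and the sequence of b-adic digits of a real number ξ is generated by a finite automaton, then ξ is not a Liouville number. -/
set_option maxHeartbeats 1000000


namespace AutoLiouville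

noncomputable def Ftail (b : ℕ) (a : ℕ → ℕ) (j : ℕ) : ℝ :=
  ∑' ν : ℕ, (a (j + ν + 1) : ℝ) / (b : ℝ) ^ (ν + 1)


lemma mem_kernel (k : ℕ) (a : ℕ → ℕ) (i j : ℕ) (hj : j < k ^ i) :
    (fun n => a (k ^ i * n + j)) ∈ kKernel k a := ⟨i, j, hj, rfl⟩

lemma kernel_val_lt {b k : ℕ} {a : ℕ → ℕ} (ha : ∀ n, a n < b)
    {v : ℕ → ℕ} (hv : v ∈ kKernel k a) (n : ℕ) : v n < b := by
  obtain ⟨i, j, hj, rfl⟩ := hv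
  exact ha _

noncomputable def σf (b k : ℕ) (a : ℕ → ℕ) (ha : ∀ n, a n < b) (n : ℕ) :
    (kKernel k a) → Fin b :=
  fun v => ⟨v.1 n, kernel_val_lt ha v.2 n⟩

lemma σf_eq_iff {b k : ℕ} {a : ℕ → ℕ} {ha : ∀ n, a n < b} {n n' : ℕ}
    (h : σf b k a ha n = σf b k a ha n') (i j : ℕ) (hj : j < k ^ i) :
    a (k ^ i * n + j) = a (k ^ i * n' + j) := by
  have := congrFun h ⟨_, mem_kernel k a i j hj⟩
  simpa [σf, Fin.ext_iff] using this

lemma pigeonhole {b k : ℕ} (a : ℕ → ℕ) (ha : ∀ n, a n < b)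
    (hker : (kKernel k a).Finite) :
    ∃ t d : ℕ, 1 ≤ t ∧ 1 ≤ d ∧
      ∀ i j, j < k ^ i → a (k ^ i * t + j) = a (k ^ i * (t + d) + j) := by
  have : Finite (kKernel k a) := hker.to_subtype
  obtain ⟨m₁, m₂, hne, heq⟩ :=
    Finite.exists_ne_map_eq_of_infinite (fun n : ℕ => σf b k a ha (n + 1))
  rcases hne.lt_or_gt with h | h
  · exact ⟨m₁ + 1, m₂ - m₁, Nat.le_add_left _ _, by omega, by
      intro i j hj
      have : m₁ + 1 + (m₂ - m₁) = m₂ + 1 := by omega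
      rw [this]
      exact σf_eq_iff heq i j hj⟩
  · exact ⟨m₂ + 1, m₁ - m₂, Nat.le_add_left _ _, by
      omega, by
      intro i j hj
      have : m₂ + 1 + (m₁ - m₂) = m₁ + 1 := by omega
      rw [this]
      exact σf_eq_iff heq.symm i j hj⟩


/-- CORE lemma: quantitative non-periodicity at all scales. -/
lemma core {b k : ℕ} (hb : 2 ≤ b) (hk : 2 ≤ k) (a : ℕ → ℕ) (ha : ∀ n, a n < b)
    (hker : (kKernel k a).Finite)
    (hnep : ¬ ∃ r s, 1 ≤ s ∧ ∀ n, r ≤ n → a (n + s) = a n)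
    (t₀ d₀ : ℕ) (hd₀ : 1 ≤ d₀) :
    ∃ E, ∀ m, ∃ x, t₀ * k ^ m ≤ x ∧ x < E * k ^ m ∧ a x ≠ a (x + d₀ * k ^ m) := by
  have : Finite (kKernel k a) := hker.to_subtype
  set σ := σf b k a ha with hσ
  -- the sequence of relations
  set Rel : ℕ → Set (((kKernel k a) → Fin b) × ((kKernel k a) → Fin b)) :=
    fun m => {p | ∃ ν ν', σ ν = p.1 ∧ σ ν' = p.2 ∧
      ∀ y, y < k ^ m → a (k ^ m * ν + y) = a (k ^ m * ν' + y)} with hRel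
  have charac : ∀ m ν ν', (σ ν, σ ν') ∈ Rel m ↔
      ∀ y, y < k ^ m → a (k ^ m * ν + y) = a (k ^ m * ν' + y) := by
    intro m ν ν'
    constructor
    · rintro ⟨μ, μ', h1, h2, h3⟩ y hy
      have e1 := σf_eq_iff (h1 : σ μ = σ ν).symm m y hy
      have e2 := σf_eq_iff (h2 : σ μ' = σ ν').symm m y hy
      rw [e1, e2]
      exact h3 y hy
    · intro h
      exact ⟨ν, ν', rfl, rfl, h⟩
  -- failure sets
  set S : Set (((kKernel k a) → Fin b) × ((kKernel k a) → Fin b)) → Set ℕ :=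
    fun R => {ν | t₀ ≤ ν ∧ (σ ν, σ (ν + d₀)) ∉ R} with hS
  have hPm : ∀ m, (S (Rel m)).Nonempty := by
    intro m
    by_contra hemp
    rw [Set.not_nonempty_iff_eq_empty] at hemp
    apply hnep
    refine ⟨t₀ * k ^ m, d₀ * k ^ m, ?_, ?_⟩
    · have : 1 ≤ k ^ m := Nat.one_le_pow _ _ (by omega)
      exact Nat.mul_le_mul hd₀ this
    · intro n hn
      set ν := n / k ^ m with hν
      set y := n % k ^ m with hy
      have hkm : 0 < k ^ m := Nat.pow_pos (by omega)
      have hdec : k ^ m * ν + y = n := Nat.div_add_mod n (k ^ m)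
      have hν₀ : t₀ ≤ ν := by
        rw [hν]
        exact Nat.le_div_iff_mul_le hkm |>.2 (by omega)
      have hmem : ν ∉ S (Rel m) := by rw [hemp]; exact Set.notMem_empty _
      rw [hS] at hmem
      simp only [Set.mem_setOf_eq, not_and, not_not] at hmem
      have hrel := hmem hν₀
      rw [charac] at hrel
      have := hrel y (Nat.mod_lt _ hkm)
      have harith : k ^ m * (ν + d₀) + y = (k ^ m * ν + y) + d₀ * k ^ m := by
        rw [Nat.mul_add, Nat.mul_comm (k ^ m) d₀]; omega
      rw [harith, hdec] at this
      exact this.symm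
  -- the first-failure function factors through Rel
  have hfin : (Set.range fun m => sInf (S (Rel m))).Finite := by
    have h1 : (Set.range fun m => sInf (S (Rel m))) ⊆
        (fun R => sInf (S R)) '' Set.univ := by
      rintro x ⟨m, rfl⟩
      exact ⟨Rel m, Set.mem_univ _, rfl⟩
    exact (Set.finite_univ.image _).subset h1
  obtain ⟨E, hE⟩ := hfin.bddAbove
  refine ⟨E + t₀ + d₀ + 2, fun m => ?_⟩
  have hmem := Nat.sInf_mem (hPm m)
  set ν := sInf (S (Rel m)) with hνdef
  have hνE : ν ≤ E := hE ⟨m, rfl⟩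
  rw [hS] at hmem
  obtain ⟨hν₀, hnotrel⟩ := hmem
  rw [charac] at hnotrel
  push_neg at hnotrel
  obtain ⟨y, hy, hne⟩ := hnotrel
  refine ⟨k ^ m * ν + y, ?_, ?_, ?_⟩
  · calc t₀ * k ^ m ≤ ν * k ^ m := Nat.mul_le_mul_right _ hν₀
      _ = k ^ m * ν := Nat.mul_comm _ _
      _ ≤ k ^ m * ν + y := Nat.le_add_right _ _
  · calc k ^ m * ν + y < k ^ m * ν + k ^ m := by omega
      _ = (ν + 1) * k ^ m := by ring
      _ ≤ (E + t₀ + d₀ + 2) * k ^ m := Nat.mul_le_mul_right _ (by omega)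
  · have harith : k ^ m * (ν + d₀) + y = (k ^ m * ν + y) + d₀ * k ^ m := by
      rw [Nat.mul_add, Nat.mul_comm (k ^ m) d₀]; omega
    rw [harith] at hne
    exact hne



variable {b : ℕ} {a : ℕ → ℕ}

lemma summable_tail (hb : 2 ≤ b) (ha : ∀ n, a n < b) (j : ℕ) :
    Summable (fun ν : ℕ => (a (j + ν + 1) : ℝ) / (b : ℝ) ^ (ν + 1)) := by
  have hb0 : (0:ℝ) < b := by positivity
  refine Summable.of_nonneg_of_le (f := fun ν : ℕ => ((b:ℝ)⁻¹) ^ ν)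
    (fun ν => by positivity) (fun ν => ?_)
    (summable_geometric_of_lt_one (by positivity)
      (inv_lt_one_of_one_lt₀ (by exact_mod_cast (by omega : 1 < b))))
  have h1 : (a (j + ν + 1) : ℝ) ≤ (b : ℝ) := by
    exact_mod_cast (ha (j + ν + 1)).le
  have h2 : (0:ℝ) < (b:ℝ) ^ (ν + 1) := by positivity
  have hg : ((b:ℝ)⁻¹)^ν = (b:ℝ) / (b:ℝ)^(ν+1) := by
    rw [inv_pow]; field_simp [pow_succ]; ring
  show (a (j + ν + 1) : ℝ) / (b : ℝ) ^ (ν + 1) ≤ ((b:ℝ)⁻¹) ^ ν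
  rw [hg]
  exact (div_le_div_iff_of_pos_right h2).2 h1

lemma tail_nonneg (hb : 2 ≤ b) (j : ℕ) : 0 ≤ Ftail b a j :=
  tsum_nonneg (fun ν => by positivity)

lemma tail_split (hb : 2 ≤ b) (ha : ∀ n, a n < b) (j L : ℕ) :
    Ftail b a j = (∑ ν ∈ Finset.range L, (a (j + ν + 1) : ℝ) / (b : ℝ) ^ (ν + 1))
      + Ftail b a (j + L) / (b : ℝ) ^ L := by
  have hb0 : (0:ℝ) < b := by positivity
  have hsum := summable_tail hb ha j
  rw [Ftail, ← hsum.sum_add_tsum_nat_add L]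
  congr 1
  have : ∀ ν : ℕ, (a (j + (ν + L) + 1) : ℝ) / (b : ℝ) ^ ((ν + L) + 1)
      = ((a ((j + L) + ν + 1) : ℝ) / (b : ℝ) ^ (ν + 1)) / (b:ℝ) ^ L := by
    intro ν
    have h1 : j + (ν + L) + 1 = (j + L) + ν + 1 := by omega
    rw [h1, div_div, ← pow_add]
    congr 2
    omega
  rw [tsum_congr this, tsum_div_const]
  rfl

lemma geom_digit_sum (hb : 2 ≤ b) (L : ℕ) :
    (∑ ν ∈ Finset.range L, ((b:ℝ) - 1) / (b : ℝ) ^ (ν + 1)) = 1 - ((b:ℝ) ^ L)⁻¹ := by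
  have hb0 : (0:ℝ) < b := by positivity
  induction L with
  | zero => simp
  | succ n ih =>
    rw [Finset.sum_range_succ, ih]
    have h1 : (b:ℝ) ^ (n+1) ≠ 0 := by positivity
    have h2 : (b:ℝ) ^ n ≠ 0 := by positivity
    field_simp
    ring

lemma digit_le (hb : 2 ≤ b) (ha : ∀ n, a n < b) (n : ℕ) : (a n : ℝ) ≤ (b:ℝ) - 1 := by
  have := ha n
  have : (a n : ℝ) + 1 ≤ (b : ℝ) := by exact_mod_cast this
  linarith

lemma digit_sum_le (hb : 2 ≤ b) (ha : ∀ n, a n < b) (j L : ℕ) :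
    (∑ ν ∈ Finset.range L, (a (j + ν + 1) : ℝ) / (b : ℝ) ^ (ν + 1))
      ≤ 1 - ((b:ℝ) ^ L)⁻¹ := by
  have hb0 : (0:ℝ) < b := by positivity
  rw [← geom_digit_sum hb L]
  apply Finset.sum_le_sum
  intro ν _
  exact (div_le_div_iff_of_pos_right (by positivity)).2 (digit_le hb ha _)

lemma tail_le_one (hb : 2 ≤ b) (ha : ∀ n, a n < b) (j : ℕ) : Ftail b a j ≤ 1 := by
  have hb0 : (0:ℝ) < b := by positivity
  have h := summable_tail hb ha j
  apply h.tsum_le_of_sum_range_le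
  intro n
  calc (∑ ν ∈ Finset.range n, (a (j + ν + 1) : ℝ) / (b : ℝ) ^ (ν + 1))
      ≤ 1 - ((b:ℝ) ^ n)⁻¹ := digit_sum_le hb ha j n
    _ ≤ 1 := by
      have : (0:ℝ) < ((b:ℝ) ^ n)⁻¹ := by positivity
      linarith

lemma tail_ge_single (hb : 2 ≤ b) (ha : ∀ n, a n < b) (j ν₀ : ℕ)
    (h : 1 ≤ a (j + ν₀ + 1)) : ((b:ℝ) ^ (ν₀ + 1))⁻¹ ≤ Ftail b a j := by
  have hb0 : (0:ℝ) < b := by positivity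
  have h1 : ((b:ℝ) ^ (ν₀+1))⁻¹ ≤ (a (j + ν₀ + 1) : ℝ) / (b : ℝ) ^ (ν₀ + 1) := by
    rw [inv_eq_one_div]
    exact (div_le_div_iff_of_pos_right (by positivity)).2 (by exact_mod_cast h)
  refine le_trans h1 ((summable_tail hb ha j).le_tsum ν₀ (fun ν _ => by positivity))

lemma tail_le_sub (hb : 2 ≤ b) (ha : ∀ n, a n < b) (j ν₀ : ℕ)
    (h : a (j + ν₀ + 1) + 2 ≤ b) : Ftail b a j ≤ 1 - ((b:ℝ) ^ (ν₀ + 1))⁻¹ := by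
  have hb0 : (0:ℝ) < b := by positivity
  have hsplit := tail_split hb ha j (ν₀ + 1)
  have hpart : (∑ ν ∈ Finset.range (ν₀ + 1), (a (j + ν + 1) : ℝ) / (b : ℝ) ^ (ν + 1))
      ≤ 1 - 2 * ((b:ℝ) ^ (ν₀ + 1))⁻¹ := by
    rw [Finset.sum_range_succ]
    have h1 : (∑ ν ∈ Finset.range ν₀, (a (j + ν + 1) : ℝ) / (b : ℝ) ^ (ν + 1))
        ≤ 1 - ((b:ℝ) ^ ν₀)⁻¹ := digit_sum_le hb ha j ν₀
    have h2 : (a (j + ν₀ + 1) : ℝ) ≤ (b:ℝ) - 2 := by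
      have : (a (j + ν₀ + 1) : ℝ) + 2 ≤ (b : ℝ) := by exact_mod_cast h
      linarith
    have h3 : (a (j + ν₀ + 1) : ℝ) / (b : ℝ) ^ (ν₀ + 1)
        ≤ ((b:ℝ) - 2) / (b : ℝ) ^ (ν₀ + 1) :=
      (div_le_div_iff_of_pos_right (by positivity)).2 h2
    have h4 : ((b:ℝ)^ν₀)⁻¹ = (b:ℝ) * ((b:ℝ)^(ν₀+1))⁻¹ := by
      rw [pow_succ]
      field_simp
    have h5 : ((b:ℝ) - 2) / (b : ℝ) ^ (ν₀ + 1)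
        = (b:ℝ) * ((b:ℝ)^(ν₀+1))⁻¹ - 2 * ((b:ℝ)^(ν₀+1))⁻¹ := by
      field_simp
    linarith [h1, h3]
  have htail : Ftail b a (j + (ν₀+1)) / (b:ℝ) ^ (ν₀+1) ≤ ((b:ℝ) ^ (ν₀ + 1))⁻¹ := by
    rw [div_eq_mul_inv]
    have := tail_le_one hb ha (j + (ν₀+1))
    have h6 : (0:ℝ) ≤ ((b:ℝ) ^ (ν₀+1))⁻¹ := by positivity
    nlinarith [tail_nonneg (a := a) hb (j + (ν₀+1))]
  linarith [hsplit, hpart, htail]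

lemma tail_agree (hb : 2 ≤ b) (ha : ∀ n, a n < b) (j j' L : ℕ)
    (h : ∀ ν, 1 ≤ ν → ν ≤ L → a (j + ν) = a (j' + ν)) :
    |Ftail b a j - Ftail b a j'| ≤ ((b:ℝ) ^ L)⁻¹ := by
  have hb0 : (0:ℝ) < b := by positivity
  rw [tail_split hb ha j L, tail_split hb ha j' L]
  have hsame : (∑ ν ∈ Finset.range L, (a (j + ν + 1) : ℝ) / (b : ℝ) ^ (ν + 1))
      = (∑ ν ∈ Finset.range L, (a (j' + ν + 1) : ℝ) / (b : ℝ) ^ (ν + 1)) := by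
    apply Finset.sum_congr rfl
    intro ν hν
    rw [Finset.mem_range] at hν
    have := h (ν + 1) (by omega) (by omega)
    rw [show j + ν + 1 = j + (ν+1) by omega, show j' + ν + 1 = j' + (ν+1) by omega, this]
  rw [hsame]
  have e1 : (0:ℝ) ≤ Ftail b a (j + L) := tail_nonneg hb _
  have e2 : Ftail b a (j + L) ≤ 1 := tail_le_one hb ha _
  have e3 : (0:ℝ) ≤ Ftail b a (j' + L) := tail_nonneg hb _
  have e4 : Ftail b a (j' + L) ≤ 1 := tail_le_one hb ha _
  have hpos : (0:ℝ) < (b:ℝ) ^ L := by positivity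
  have heq : ((∑ ν ∈ Finset.range L, (a (j' + ν + 1) : ℝ) / (b : ℝ) ^ (ν + 1))
        + Ftail b a (j + L) / (b:ℝ) ^ L)
      - ((∑ ν ∈ Finset.range L, (a (j' + ν + 1) : ℝ) / (b : ℝ) ^ (ν + 1))
        + Ftail b a (j' + L) / (b:ℝ) ^ L)
      = (Ftail b a (j + L) - Ftail b a (j' + L)) / (b:ℝ) ^ L := by ring
  rw [heq, abs_div, abs_of_pos hpos, div_le_iff₀ hpos, inv_mul_cancel₀ (ne_of_gt hpos)]
  rw [abs_le]
  constructor <;> linarith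



def Ia (b : ℕ) (z : ℤ) (a : ℕ → ℕ) (j : ℕ) : ℤ :=
  z * (b:ℤ) ^ j + ∑ n ∈ Finset.range j, (a (n + 1) : ℤ) * (b : ℤ) ^ (j - 1 - n)



lemma Ia_succ (hb : 2 ≤ b) (z : ℤ) (j : ℕ) :
    Ia b z a (j + 1) = b * Ia b z a j + a (j + 1) := by
  rw [Ia, Ia, Finset.sum_range_succ]
  have h1 : ∀ n ∈ Finset.range j, (a (n + 1) : ℤ) * (b : ℤ) ^ (j + 1 - 1 - n)
      = (b:ℤ) * ((a (n + 1) : ℤ) * (b : ℤ) ^ (j - 1 - n)) := by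
    intro n hn
    rw [Finset.mem_range] at hn
    have : j + 1 - 1 - n = (j - 1 - n) + 1 := by omega
    rw [this, pow_succ]
    ring
  rw [Finset.sum_congr rfl h1, ← Finset.mul_sum]
  have : j + 1 - 1 - j = 0 := by omega
  rw [this, pow_succ, pow_zero]
  ring

lemma decomp (hb : 2 ≤ b) (ha : ∀ n, a n < b) (z : ℤ) (ξ : ℝ)
    (hξ : ξ = (z : ℝ) + ∑' n : ℕ, (a (n + 1) : ℝ) / (b : ℝ) ^ (n + 1)) (j : ℕ) :
    (b:ℝ) ^ j * ξ = (Ia b z a j : ℝ) + Ftail b a j := by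
  have hb0 : (0:ℝ) < b := by positivity
  have h0 : ξ = (z:ℝ) + Ftail b a 0 := by
    rw [hξ]; congr 1; rw [Ftail]; apply tsum_congr; intro ν; rw [Nat.zero_add]
  have hsplit := tail_split hb ha 0 j
  simp only [Nat.zero_add] at hsplit
  have hterm : ∀ n ∈ Finset.range j,
      (b:ℝ)^j * ((a (n+1):ℝ)/(b:ℝ)^(n+1)) = (a (n+1):ℝ) * (b:ℝ)^(j-1-n) := by
    intro n hn
    rw [Finset.mem_range] at hn
    have he : (b:ℝ)^(j-1-n) * (b:ℝ)^(n+1) = (b:ℝ)^j := by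
      rw [← pow_add]; congr 1; omega
    have hd : (b:ℝ)^j / (b:ℝ)^(n+1) = (b:ℝ)^(j-1-n) := by
      rw [div_eq_iff (by positivity : (0:ℝ) < (b:ℝ)^(n+1)).ne', he]
    calc (b:ℝ)^j * ((a (n+1):ℝ)/(b:ℝ)^(n+1))
        = (a (n+1):ℝ) * ((b:ℝ)^j / (b:ℝ)^(n+1)) := by ring
      _ = (a (n+1):ℝ) * (b:ℝ)^(j-1-n) := by rw [hd]
  have hIa : (Ia b z a j : ℝ)
      = (z:ℝ) * (b:ℝ)^j + ∑ n ∈ Finset.range j, (a (n+1):ℝ) * (b:ℝ)^(j-1-n) := by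
    rw [Ia]; push_cast; ring
  rw [h0, hsplit, hIa]
  rw [mul_add, mul_add, Finset.mul_sum, Finset.sum_congr rfl hterm]
  have hF : (b:ℝ)^j * (Ftail b a j / (b:ℝ)^j) = Ftail b a j := by
    field_simp
  rw [hF]
  ring

lemma rational_of_ep (hb : 2 ≤ b) (ha : ∀ n, a n < b) (z : ℤ) (ξ : ℝ)
    (hξ : ξ = (z : ℝ) + ∑' n : ℕ, (a (n + 1) : ℝ) / (b : ℝ) ^ (n + 1))
    (r s : ℕ) (hs : 1 ≤ s) (hper : ∀ n, r ≤ n → a (n + s) = a n) :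
    ¬ Irrational ξ := by
  intro hirr
  have hb0 : (0:ℝ) < b := by positivity
  have hbs : 1 ≤ b ^ s := Nat.one_le_pow _ _ (by omega)
  set Q : ℕ := b ^ r * (b ^ s - 1) with hQ
  set N : ℤ := Ia b z a (r + s) - Ia b z a r with hN
  have hFeq : Ftail b a (r + s) = Ftail b a r := by
    apply tsum_congr
    intro ν
    have : (r + s) + ν + 1 = (r + ν + 1) + s := by omega
    rw [this, hper (r + ν + 1) (by omega)]
  have hQR : (Q:ℝ) = (b:ℝ)^(r+s) - (b:ℝ)^r := by
    rw [hQ]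
    push_cast [Nat.cast_sub hbs]
    rw [pow_add]
    ring
  have hQξ : (Q:ℝ) * ξ = (N:ℝ) := by
    rw [hQR, hN, sub_mul, decomp hb ha z ξ hξ (r+s), decomp hb ha z ξ hξ r, hFeq]
    push_cast
    ring
  have hQ0 : (0:ℝ) < (Q:ℝ) := by
    have : 0 < Q := by
      apply Nat.mul_pos (Nat.pow_pos (by omega))
      have h2s : 2 ≤ b ^ s := le_trans
        (by simpa using Nat.pow_le_pow_right (by norm_num : 1 ≤ 2) hs)
        (Nat.pow_le_pow_left hb s)
      omega
    exact_mod_cast this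
  exact hirr ⟨(N:ℚ)/(Q:ℚ), by
    push_cast
    rw [div_eq_iff hQ0.ne']
    linarith [hQξ]⟩


lemma tail_lt_one {b : ℕ} {a : ℕ → ℕ} (hb : 2 ≤ b) (ha : ∀ n, a n < b)
    (hnep : ¬ ∃ r s, 1 ≤ s ∧ ∀ n, r ≤ n → a (n + s) = a n) (j : ℕ) :
    Ftail b a j < 1 := by
  by_cases hex : ∃ ν, a (j + ν + 1) + 2 ≤ b
  · obtain ⟨ν₀, h⟩ := hex
    have := tail_le_sub hb ha j ν₀ h
    have hpos : (0:ℝ) < ((b:ℝ) ^ (ν₀+1))⁻¹ := by positivity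
    linarith
  · exfalso
    apply hnep
    push_neg at hex
    refine ⟨j + 1, 1, le_refl 1, fun n hn => ?_⟩
    have h1 : a n = b - 1 := by
      have h2 := hex (n - j - 1)
      have h3 := ha n
      have : j + (n - j - 1) + 1 = n := by omega
      rw [this] at h2
      omega
    have h4 : a (n + 1) = b - 1 := by
      have h2 := hex (n - j)
      have h3 := ha (n + 1)
      have : j + (n - j) + 1 = n + 1 := by omega
      rw [this] at h2
      omega
    rw [h1, h4]

end AutoLiouville


/-- No Liouville number is automatic: if the `b`-adic digit sequence of `ξ` is generated
by a finite automaton (equivalently, has finite `k`-kernel), then `ξ` is not Liouville. -/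
theorem stmt5 (b k : ℕ) (hb : 2 ≤ b) (hk : 2 ≤ k)
    (a : ℕ → ℕ) (ha : ∀ n, a n < b)
    (hker : (kKernel k a).Finite)
    (ξ : ℝ) (z : ℤ) (hξ : ξ = (z : ℝ) + ∑' n : ℕ, (a (n + 1) : ℝ) / (b : ℝ) ^ (n + 1)) :
    ¬ Liouville ξ := by
  classical
  intro hL
  have hirr : Irrational ξ := hL.irrational
  have hnep : ¬ ∃ r s, 1 ≤ s ∧ ∀ n, r ≤ n → a (n + s) = a n := by
    rintro ⟨r, s, hs, hper⟩
    exact AutoLiouville.rational_of_ep hb ha z ξ hξ r s hs hper hirr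
  obtain ⟨t, d, ht1, hd1, hmatch⟩ := AutoLiouville.pigeonhole a ha hker
  obtain ⟨E₁, hE₁⟩ := AutoLiouville.core hb hk a ha hker hnep 1 1 le_rfl
  obtain ⟨E₂, hE₂⟩ := AutoLiouville.core hb hk a ha hker hnep (t + 1) d hd1
  set E₃ := E₁ + E₂ + t + d + 5 with hE₃def
  set C4 := (E₁ + 1) * k * (E₃ + 1) + 2 * E₃ + t + d + 10 with hC4def
  set τ := (2 * b + 2) * k * C4 + 3 with hτdef
  obtain ⟨p, qz, hqz1, hξne, happ⟩ := hL τ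
  set q := qz.toNat with hqdef
  have hq2 : 2 ≤ q := by omega
  have hqzq : (qz : ℝ) = (q : ℝ) := by
    have : (q : ℤ) = qz := Int.toNat_of_nonneg (by omega)
    exact_mod_cast this.symm
  have hqR1 : (1:ℝ) < (q:ℝ) := by exact_mod_cast hq2
  set ε := |ξ - (p : ℝ) / (qz : ℝ)| with hεdef
  have hεnn : 0 ≤ ε := abs_nonneg _
  have hε : ε < ((q : ℝ) ^ τ)⁻¹ := by
    rw [hεdef, ← hqzq]
    calc |ξ - (p:ℝ)/(qz:ℝ)| < 1 / (qz:ℝ) ^ τ := happ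
      _ = ((qz:ℝ) ^ τ)⁻¹ := one_div _
  -- choice of scale m
  have hmex : ∃ m, 2 * b ^ 2 * q ≤ b ^ (k ^ m) := by
    refine ⟨2 * b ^ 2 * q, ?_⟩
    set n := 2 * b ^ 2 * q
    have h1 : n < 2 ^ n := Nat.lt_two_pow_self
    have h2 : 2 ^ n ≤ b ^ n := Nat.pow_le_pow_left hb n
    have h3 : b ^ n ≤ b ^ (k ^ n) := Nat.pow_le_pow_right (by omega)
      (Nat.le_of_lt (Nat.lt_pow_self (n := n) (by omega)))
    omega
  set m := Nat.find hmex with hmdef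
  have hup : 2 * b ^ 2 * q ≤ b ^ (k ^ m) := Nat.find_spec hmex
  have hm1 : 1 ≤ m := by
    rcases Nat.eq_zero_or_pos m with h | h
    · exfalso
      rw [h] at hup
      simp only [pow_zero, pow_one] at hup
      nlinarith
    · exact h
  have hlowm : b ^ (k ^ (m - 1)) < 2 * b ^ 2 * q := by
    have := Nat.find_min hmex (show m - 1 < m by omega)
    omega
  set ℓ := k ^ m with hℓdef
  have hℓ2 : 2 ≤ ℓ := by
    calc 2 ≤ k := hk
      _ = k ^ 1 := (pow_one k).symm
      _ ≤ k ^ m := Nat.pow_le_pow_right (by omega) hm1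
  have hKB : b ^ ℓ ≤ (2 * b ^ 2 * q) ^ k := by
    have h1 : ℓ = k ^ (m - 1) * k := by
      rw [hℓdef, ← pow_succ]
      congr 1
      omega
    rw [h1, pow_mul]
    exact Nat.pow_le_pow_left hlowm.le k
  -- master smallness inequality
  have master : ∀ X : ℕ, X ≤ C4 * ℓ → (b:ℝ) ^ X * ε ≤ ((q:ℝ) ^ 3)⁻¹ := by
    intro X hX
    have n1 : b ^ X ≤ b ^ (C4 * ℓ) := Nat.pow_le_pow_right (by omega) hX
    have n2 : b ^ (C4 * ℓ) = (b ^ ℓ) ^ C4 := by rw [← pow_mul, Nat.mul_comm]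
    have n3 : (b ^ ℓ) ^ C4 ≤ ((2 * b ^ 2 * q) ^ k) ^ C4 := Nat.pow_le_pow_left hKB C4
    have n5 : 2 * b ^ 2 * q ≤ q ^ (2 * b + 2) := by
      have e1 : b ≤ 2 ^ b := (Nat.lt_two_pow_self (n := b)).le
      have e2 : b ≤ q ^ b := e1.trans (Nat.pow_le_pow_left hq2 b)
      have e3 : b ^ 2 ≤ (q ^ b) ^ 2 := Nat.pow_le_pow_left e2 2
      calc 2 * b ^ 2 * q ≤ q * (q ^ b) ^ 2 * q :=
            Nat.mul_le_mul (Nat.mul_le_mul hq2 e3) le_rfl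
        _ = q ^ 1 * q ^ (b * 2) * q ^ 1 := by rw [pow_one, ← pow_mul]
        _ = q ^ (1 + b * 2 + 1) := by rw [← pow_add, ← pow_add]
        _ = q ^ (2 * b + 2) := by congr 1; omega
    have n6 : ((2 * b ^ 2 * q) ^ k) ^ C4 ≤ q ^ ((2 * b + 2) * (k * C4)) := by
      calc ((2 * b ^ 2 * q) ^ k) ^ C4 = (2 * b ^ 2 * q) ^ (k * C4) := by rw [← pow_mul]
        _ ≤ (q ^ (2 * b + 2)) ^ (k * C4) := Nat.pow_le_pow_left n5 _
        _ = q ^ ((2 * b + 2) * (k * C4)) := by rw [← pow_mul]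
    have n7 : b ^ X ≤ q ^ (τ - 3) := by
      have he : (2 * b + 2) * (k * C4) = τ - 3 := by
        rw [hτdef, ← Nat.mul_assoc]
        omega
      rw [← he]
      omega
    have n8 : (b:ℝ) ^ X ≤ (q:ℝ) ^ (τ - 3) := by exact_mod_cast n7
    have n9 : (q:ℝ) ^ (τ - 3) * ((q:ℝ) ^ τ)⁻¹ = ((q:ℝ) ^ 3)⁻¹ := by
      have hτ3 : (q:ℝ) ^ τ = (q:ℝ) ^ (τ - 3) * (q:ℝ) ^ 3 := by
        have hee : τ - 3 + 3 = τ := by omega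
        rw [← pow_add, hee]
      rw [hτ3]
      have h0 : ((q:ℝ)^(τ-3)) ≠ 0 := by positivity
      have h3 : ((q:ℝ)^3) ≠ 0 := by positivity
      field_simp
    calc (b:ℝ) ^ X * ε ≤ (q:ℝ) ^ (τ - 3) * ε :=
          mul_le_mul_of_nonneg_right n8 hεnn
      _ ≤ (q:ℝ) ^ (τ - 3) * ((q:ℝ) ^ τ)⁻¹ :=
          mul_le_mul_of_nonneg_left hε.le (by positivity)
      _ = ((q:ℝ) ^ 3)⁻¹ := n9
  have hq3small : ((q:ℝ) ^ 3)⁻¹ < 1 := by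
    rw [inv_lt_one_iff₀]
    right
    exact one_lt_pow₀ hqR1 (by norm_num)
  -- the approximation from the pigeonhole repetition
  set r := ℓ * t with hrdef
  set s := ℓ * d with hsdef
  have hs1 : 1 ≤ s := by
    rw [hsdef]
    exact Nat.one_le_iff_ne_zero.2 (by positivity)
  have hbs2 : 2 ≤ b ^ s := by
    calc 2 = 2 ^ 1 := rfl
      _ ≤ 2 ^ s := Nat.pow_le_pow_right (by omega) hs1
      _ ≤ b ^ s := Nat.pow_le_pow_left hb s
  set Q : ℕ := b ^ r * (b ^ s - 1) with hQdef
  have hQ1 : 1 ≤ Q := by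
    have : 1 ≤ b ^ r := Nat.one_le_pow _ _ (by omega)
    have : 1 ≤ b ^ s - 1 := by omega
    calc 1 = 1 * 1 := rfl
      _ ≤ Q := by rw [hQdef]; exact Nat.mul_le_mul (by omega) (by omega)
  have hQle : Q ≤ b ^ ((t + d) * ℓ) := by
    calc Q ≤ b ^ r * b ^ s := Nat.mul_le_mul le_rfl (by omega)
      _ = b ^ (r + s) := (pow_add b r s).symm
      _ = b ^ ((t + d) * ℓ) := by congr 1; rw [hrdef, hsdef]; ring
  set N : ℤ := AutoLiouville.Ia b z a (r + s) - AutoLiouville.Ia b z a r with hNdef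
  have hQRpos : (0:ℝ) < (Q:ℝ) := by exact_mod_cast hQ1
  have hQR : (Q:ℝ) = (b:ℝ) ^ (r + s) - (b:ℝ) ^ r := by
    rw [hQdef]
    push_cast [Nat.cast_sub (by omega : 1 ≤ b ^ s)]
    rw [pow_add]
    ring
  have hQξ : (Q:ℝ) * ξ - (N:ℝ) =
      AutoLiouville.Ftail b a (r + s) - AutoLiouville.Ftail b a r := by
    rw [hQR, hNdef, sub_mul, AutoLiouville.decomp hb ha z ξ hξ (r + s),
      AutoLiouville.decomp hb ha z ξ hξ r]
    push_cast
    ring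
  have hagree : ∀ ν, 1 ≤ ν → ν ≤ ℓ - 1 → a (r + ν) = a ((r + s) + ν) := by
    intro ν h1 h2
    have hm := hmatch m ν (by omega : ν < k ^ m)
    have e1 : k ^ m * t = r := by rw [hrdef, hℓdef]
    have e2 : k ^ m * (t + d) = r + s := by rw [hrdef, hsdef, hℓdef]; ring
    rw [e1, e2] at hm
    exact hm
  have hFF : |AutoLiouville.Ftail b a (r + s) - AutoLiouville.Ftail b a r|
      ≤ (((b:ℝ)) ^ (ℓ - 1))⁻¹ := by
    rw [abs_sub_comm]
    exact AutoLiouville.tail_agree hb ha r (r + s) (ℓ - 1) hagree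
  by_cases hsplit : p * (Q:ℤ) = N * qz
  · -- EQUALITY CASE
    have hQz : (0:ℤ) < (Q:ℤ) := by exact_mod_cast hQ1
    have hQ0R : (Q:ℝ) ≠ 0 := ne_of_gt hQRpos
    have hbR1 : (1:ℝ) ≤ (b:ℝ) := by exact_mod_cast (by omega : 1 ≤ b)
    have hPQ : (p:ℝ)/(qz:ℝ) = (N:ℝ)/(Q:ℝ) := by
      have hc : (p:ℝ) * (Q:ℝ) = (N:ℝ) * (qz:ℝ) := by exact_mod_cast hsplit
      rw [hqzq] at hc
      rw [hqzq, div_eq_div_iff (by positivity) (by positivity)]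
      exact hc
    have hεN : ε = |ξ - (N:ℝ)/(Q:ℝ)| := by rw [hεdef, hPQ]
    set M := E₃ * ℓ with hMdef
    set η := (b:ℝ)^M * ε with hηdef
    have hηnn : 0 ≤ η := mul_nonneg (by positivity) hεnn
    have hxapprox : ∀ x, x ≤ M → |(b:ℝ)^x * ξ - (b:ℝ)^x * ((N:ℝ)/(Q:ℝ))| ≤ η := by
      intro x hxM
      have h1 : |(b:ℝ)^x * ξ - (b:ℝ)^x * ((N:ℝ)/(Q:ℝ))| = (b:ℝ)^x * ε := by
        rw [← mul_sub, abs_mul, abs_of_pos (show (0:ℝ) < (b:ℝ)^x by positivity), ← hεN]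
      rw [h1, hηdef]
      exact mul_le_mul_of_nonneg_right (pow_le_pow_right₀ hbR1 hxM) hεnn
    have hE₃C4 : E₃ ≤ C4 := by rw [hC4def]; omega
    have hMC4 : M ≤ C4 * ℓ := by
      rw [hMdef]; exact Nat.mul_le_mul_right ℓ hE₃C4
    have hηq3 : η ≤ ((q:ℝ)^3)⁻¹ := master M hMC4
    have hη1 : η < 1 := lt_of_le_of_lt hηq3 hq3small
    have hηQ : η * (Q:ℝ) < 1 := by
      have hXc : (t+d+E₃) * ℓ ≤ C4 * ℓ := Nat.mul_le_mul_right ℓ (by rw [hC4def]; omega)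
      have h2 : η * (Q:ℝ) ≤ (b:ℝ)^((t+d+E₃)*ℓ) * ε := by
        rw [hηdef]
        have hQb : (Q:ℝ) ≤ (b:ℝ)^((t+d)*ℓ) := by exact_mod_cast hQle
        calc (b:ℝ)^M * ε * (Q:ℝ) ≤ (b:ℝ)^M * ε * (b:ℝ)^((t+d)*ℓ) := by
              exact mul_le_mul_of_nonneg_left hQb (by positivity)
          _ = (b:ℝ)^(M + (t+d)*ℓ) * ε := by rw [pow_add]; ring
          _ = (b:ℝ)^((t+d+E₃)*ℓ) * ε := by
              congr 2
              rw [hMdef]; ring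
      calc η * (Q:ℝ) ≤ (b:ℝ)^((t+d+E₃)*ℓ) * ε := h2
        _ ≤ ((q:ℝ)^3)⁻¹ := master _ hXc
        _ < 1 := hq3small
    have hηQinv : η < ((Q:ℝ))⁻¹ := by
      rw [inv_eq_one_div, lt_div_iff₀ hQRpos]
      exact hηQ
    by_cases hdvd : ∃ x, x ≤ M ∧ (Q:ℤ) ∣ (b:ℤ)^x * N
    · -- CASE β : constant digit run
      obtain ⟨x₀, hx0M, J, hJ⟩ := hdvd
      have hρJ : (b:ℝ)^x₀ * ((N:ℝ)/(Q:ℝ)) = (J:ℝ) := by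
        have hc : (b:ℝ)^x₀ * (N:ℝ) = (Q:ℝ) * (J:ℝ) := by exact_mod_cast hJ
        rw [mul_div_assoc', div_eq_iff hQ0R, hc]
        ring
      have happx := hxapprox x₀ hx0M
      rw [hρJ, AutoLiouville.decomp hb ha z ξ hξ x₀] at happx
      have hF0 : 0 ≤ AutoLiouville.Ftail b a x₀ := AutoLiouville.tail_nonneg hb x₀
      have hF1 : AutoLiouville.Ftail b a x₀ < 1 := AutoLiouville.tail_lt_one hb ha hnep x₀
      have habs := abs_le.1 happx
      set D : ℤ := AutoLiouville.Ia b z a x₀ - J with hDdef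
      have hDr : ((D:ℤ):ℝ) = (AutoLiouville.Ia b z a x₀ : ℝ) - (J:ℝ) := by
        rw [hDdef]; push_cast; ring
      have hDcases : D = 0 ∧ AutoLiouville.Ftail b a x₀ ≤ η
          ∨ D = -1 ∧ 1 - η ≤ AutoLiouville.Ftail b a x₀ := by
        have c1 : ((D:ℤ):ℝ) < 1 := by rw [hDr]; linarith [habs.2]
        have c2 : (-2:ℝ) < ((D:ℤ):ℝ) := by rw [hDr]; linarith [habs.1]
        have hD1 : D < 1 := by exact_mod_cast c1
        have hD2 : (-2:ℤ) < D := by exact_mod_cast c2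
        rcases (by omega : D = 0 ∨ D = -1) with h0 | h0
        · left
          refine ⟨h0, ?_⟩
          have : ((D:ℤ):ℝ) = 0 := by rw [h0]; norm_num
          rw [hDr] at this
          linarith [habs.2]
        · right
          refine ⟨h0, ?_⟩
          have : ((D:ℤ):ℝ) = -1 := by rw [h0]; norm_num
          rw [hDr] at this
          linarith [habs.1]
      have hrunF : ∃ c0, ∀ ν, 1 ≤ ν → (b:ℝ)^ν * η < 1 → a (x₀ + ν) = c0 := by
        rcases hDcases with ⟨_, hFη⟩ | ⟨_, hFη⟩
        · refine ⟨0, fun ν h1 h2 => ?_⟩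
          by_contra hne0
          have hge : 1 ≤ a (x₀ + ν - 1 + 1) := by
            rw [show x₀ + ν - 1 + 1 = x₀ + ν by omega]; omega
          have hsing := AutoLiouville.tail_ge_single hb ha x₀ (ν-1)
            (by rw [show x₀ + (ν-1) + 1 = x₀ + ν by omega]; omega)
          rw [show ν - 1 + 1 = ν by omega] at hsing
          have hc : ((b:ℝ)^ν)⁻¹ ≤ η := le_trans hsing hFη
          have hone : (1:ℝ) ≤ (b:ℝ)^ν * η := by
            calc (1:ℝ) = (b:ℝ)^ν * ((b:ℝ)^ν)⁻¹ :=
                  (mul_inv_cancel₀ (by positivity)).symm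
              _ ≤ (b:ℝ)^ν * η := mul_le_mul_of_nonneg_left hc (by positivity)
          linarith
        · refine ⟨b - 1, fun ν h1 h2 => ?_⟩
          by_contra hneb
          have hge : a (x₀ + (ν-1) + 1) + 2 ≤ b := by
            rw [show x₀ + (ν-1) + 1 = x₀ + ν by omega]
            have := ha (x₀ + ν)
            omega
          have hsub := AutoLiouville.tail_le_sub hb ha x₀ (ν-1) hge
          rw [show ν - 1 + 1 = ν by omega] at hsub
          have hc : ((b:ℝ)^ν)⁻¹ ≤ η := by linarith
          have hone : (1:ℝ) ≤ (b:ℝ)^ν * η := by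
            calc (1:ℝ) = (b:ℝ)^ν * ((b:ℝ)^ν)⁻¹ :=
                  (mul_inv_cancel₀ (by positivity)).symm
              _ ≤ (b:ℝ)^ν * η := mul_le_mul_of_nonneg_left hc (by positivity)
          linarith
      obtain ⟨c0, hc0⟩ := hrunF
      set W := (E₁ + 1) * k * (M + 2) with hWdef
      have hrun : ∀ ν, 1 ≤ ν → ν ≤ W → a (x₀ + ν) = c0 := by
        intro ν h1 h2
        apply hc0 ν h1
        have hXc : W + M ≤ C4 * ℓ := by
          have w1 : M + 2 ≤ (E₃ + 1) * ℓ := by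
            have he : (E₃+1)*ℓ = E₃*ℓ + ℓ := by ring
            omega
          have w2 : W ≤ (E₁+1) * k * ((E₃+1) * ℓ) := Nat.mul_le_mul_left _ w1
          have w3 : (E₁+1) * k * ((E₃+1) * ℓ) = ((E₁+1) * k * (E₃+1)) * ℓ := by ring
          have w6 : ((E₁+1)*k*(E₃+1) + E₃) * ℓ ≤ C4 * ℓ :=
            Nat.mul_le_mul_right ℓ (by rw [hC4def]; omega)
          have w7 : ((E₁+1)*k*(E₃+1) + E₃) * ℓ
              = ((E₁+1)*k*(E₃+1)) * ℓ + E₃ * ℓ := by ring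
          omega
        have hbν : (b:ℝ)^ν * η ≤ (b:ℝ)^(W+M) * ε := by
          rw [hηdef, ← mul_assoc, ← pow_add]
          exact mul_le_mul_of_nonneg_right (pow_le_pow_right₀ hbR1 (by omega)) hεnn
        have hfin := le_trans hbν (master (W+M) hXc)
        linarith [hq3small]
      have hm2ex : ∃ m₂, x₀ + 1 ≤ k ^ m₂ := by
        refine ⟨x₀ + 1, ?_⟩
        have := Nat.lt_pow_self (n := x₀ + 1) (show 1 < k by omega)
        omega
      set m₂ := Nat.find hm2ex with hm2def
      have hm2s : x₀ + 1 ≤ k ^ m₂ := Nat.find_spec hm2ex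
      have hm2b : k ^ m₂ ≤ k * (x₀ + 1) := by
        rcases Nat.eq_zero_or_pos m₂ with h0 | h0
        · have hpos : 0 < k * (x₀ + 1) := Nat.mul_pos (by omega) (by omega)
          rw [h0, pow_zero]
          omega
        · have hmin := Nat.find_min hm2ex (show m₂ - 1 < m₂ by omega)
          push_neg at hmin
          have he : k ^ m₂ = k * k ^ (m₂ - 1) := by
            rw [← pow_succ']
            congr 1
            omega
          rw [he]
          exact Nat.mul_le_mul_left k (by omega)
      obtain ⟨x₁, hx1l, hx1u, hx1ne⟩ := hE₁ m₂
      rw [one_mul] at hx1l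
      rw [one_mul] at hx1ne
      apply hx1ne
      have hup2 : x₁ + k ^ m₂ ≤ W := by
        have u1 : x₁ + k^m₂ ≤ (E₁+1) * k^m₂ := by
          have he : (E₁+1)*k^m₂ = E₁*k^m₂ + k^m₂ := by ring
          omega
        have u2 : (E₁+1) * k^m₂ ≤ (E₁+1)*(k*(x₀+1)) := Nat.mul_le_mul_left _ hm2b
        have u3 : (E₁+1)*(k*(x₀+1)) ≤ (E₁+1)*(k*(M+2)) :=
          Nat.mul_le_mul_left _ (Nat.mul_le_mul_left k (by omega))
        have u4 : (E₁+1)*(k*(M+2)) = W := by rw [hWdef]; ring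
        omega
      have e1 := hrun (x₁ - x₀) (by omega) (by omega)
      have e2 := hrun (x₁ + k^m₂ - x₀) (by omega) (by omega)
      rw [show x₀ + (x₁ - x₀) = x₁ by omega] at e1
      rw [show x₀ + (x₁ + k^m₂ - x₀) = x₁ + k^m₂ by omega] at e2
      rw [e1, e2]
    · -- CASE α : digit periodicity, contradiction with CORE(t+1, d)
      push_neg at hdvd
      have hfl : ∀ x, x ≤ M →
          AutoLiouville.Ia b z a x = ((b:ℤ)^x * N) / (Q:ℤ) := by
        intro x hxM
        set c : ℤ := (b:ℤ)^x * N with hcdef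
        have hmod0 : c % (Q:ℤ) ≠ 0 := by
          intro h
          exact hdvd x hxM (Int.dvd_of_emod_eq_zero h)
        have hmodnn : 0 ≤ c % (Q:ℤ) := Int.emod_nonneg c (ne_of_gt hQz)
        have hmod2 : c % (Q:ℤ) < (Q:ℤ) := Int.emod_lt_of_pos c hQz
        have hdecomp : c = (Q:ℤ) * (c / (Q:ℤ)) + c % (Q:ℤ) :=
          (Int.mul_ediv_add_emod c (Q:ℤ)).symm
        have hρ : (b:ℝ)^x * ((N:ℝ)/(Q:ℝ)) = ((c:ℤ):ℝ)/(Q:ℝ) := by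
          rw [hcdef]; push_cast; ring
        have happx := hxapprox x hxM
        rw [hρ, AutoLiouville.decomp hb ha z ξ hξ x] at happx
        have hF0 : 0 ≤ AutoLiouville.Ftail b a x := AutoLiouville.tail_nonneg hb x
        have hF1 : AutoLiouville.Ftail b a x < 1 :=
          AutoLiouville.tail_lt_one hb ha hnep x
        set fl : ℤ := c / (Q:ℤ) with hfldef
        have hcR : ((c:ℤ):ℝ)/(Q:ℝ) = (fl:ℝ) + ((c % (Q:ℤ) : ℤ):ℝ)/(Q:ℝ) := by
          have hc2 : ((c:ℤ):ℝ) = (Q:ℝ)*(fl:ℝ) + ((c % (Q:ℤ) : ℤ):ℝ) := by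
            rw [hfldef]
            exact_mod_cast congrArg (fun y : ℤ => (y:ℝ)) hdecomp
          rw [hc2]
          field_simp
        rw [hcR] at happx
        have habs := abs_le.1 happx
        have hrem1 : (1:ℝ) ≤ ((c % (Q:ℤ) : ℤ):ℝ) := by
          have : (1:ℤ) ≤ c % (Q:ℤ) := by omega
          exact_mod_cast this
        have hrem2 : ((c % (Q:ℤ) : ℤ):ℝ) ≤ (Q:ℝ) - 1 := by
          have h2 : c % (Q:ℤ) ≤ (Q:ℤ) - 1 := by omega
          have h3 : ((c % (Q:ℤ) : ℤ):ℝ) ≤ (((Q:ℤ) - 1 : ℤ):ℝ) := by exact_mod_cast h2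
          push_cast at h3
          linarith
        have hb1 : ((Q:ℝ))⁻¹ ≤ ((c % (Q:ℤ) : ℤ):ℝ)/(Q:ℝ) := by
          rw [inv_eq_one_div]
          exact (div_le_div_iff_of_pos_right hQRpos).2 hrem1
        have hb2 : ((c % (Q:ℤ) : ℤ):ℝ)/(Q:ℝ) ≤ 1 - (Q:ℝ)⁻¹ := by
          have h4 : ((c % (Q:ℤ) : ℤ):ℝ)/(Q:ℝ) ≤ ((Q:ℝ) - 1)/(Q:ℝ) :=
            (div_le_div_iff_of_pos_right hQRpos).2 hrem2
          have h5 : ((Q:ℝ) - 1)/(Q:ℝ) = 1 - (Q:ℝ)⁻¹ := by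
            field_simp
          linarith
        have hup1 : (AutoLiouville.Ia b z a x : ℝ) < (fl:ℝ) + 1 := by
          linarith [habs.2]
        have hlo1 : (fl:ℝ) < (AutoLiouville.Ia b z a x : ℝ) + 1 := by
          linarith [habs.1]
        have i1 : AutoLiouville.Ia b z a x < fl + 1 := by exact_mod_cast hup1
        have i2 : fl < AutoLiouville.Ia b z a x + 1 := by exact_mod_cast hlo1
        omega
      have hQcastZ : (Q:ℤ) = (b:ℤ)^r * ((b:ℤ)^s - 1) := by
        rw [hQdef]
        push_cast [Nat.cast_sub (by omega : 1 ≤ b ^ s)]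
        ring
      have hflper : ∀ x, r ≤ x →
          ((b:ℤ)^(x+s) * N) / (Q:ℤ) = ((b:ℤ)^x * N)/(Q:ℤ) + (b:ℤ)^(x-r) * N := by
        intro x hx
        have e2 : (b:ℤ)^(x-r) * (b:ℤ)^r = (b:ℤ)^x := by
          rw [← pow_add]
          congr 1
          omega
        have he : (b:ℤ)^(x+s)*N = (b:ℤ)^x*N + ((b:ℤ)^(x-r)*N)*(Q:ℤ) := by
          rw [hQcastZ, pow_add, ← e2]
          ring
        rw [he, Int.add_mul_ediv_right _ _ (ne_of_gt hQz)]
      have hper : ∀ x, r ≤ x → x + s + 1 ≤ M → a (x + 1 + s) = a (x + 1) := by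
        intro x hx1 hx2
        have d1 : (a (x+1):ℤ)
            = AutoLiouville.Ia b z a (x+1) - b * AutoLiouville.Ia b z a x := by
          rw [AutoLiouville.Ia_succ hb z x]; ring
        have d2 : (a (x+1+s):ℤ)
            = AutoLiouville.Ia b z a (x+s+1) - b * AutoLiouville.Ia b z a (x+s) := by
          rw [show x+1+s = (x+s)+1 by omega, AutoLiouville.Ia_succ hb z (x+s)]
          ring
        rw [hfl (x+1) (by omega), hfl x (by omega)] at d1
        rw [hfl (x+s+1) (by omega), hfl (x+s) (by omega)] at d2
        rw [show x+s+1 = (x+1)+s by omega] at d2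
        rw [hflper (x+1) (by omega), hflper x hx1] at d2
        have e3 : (b:ℤ)^(x+1-r) = b * (b:ℤ)^(x-r) := by
          rw [← pow_succ']
          congr 1
          omega
        have hfinal : (a (x+1+s):ℤ) = (a (x+1):ℤ) := by
          rw [d2, d1, e3]
          ring
        exact_mod_cast hfinal
      obtain ⟨x₁, hx1l, hx1u, hx1ne⟩ := hE₂ m
      apply hx1ne
      have hrℓ : (t+1) * k ^ m = r + ℓ := by rw [hrdef, hℓdef]; ring
      rw [hrℓ] at hx1l
      have hsd : d * k ^ m = s := by rw [hsdef, hℓdef]; ring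
      rw [hsd]
      have hEineq : E₂ * ℓ + d * ℓ + 1 ≤ M := by
        have h2 : (E₂ + d + 1) * ℓ ≤ E₃ * ℓ := Nat.mul_le_mul_right ℓ (by omega)
        have h3 : (E₂+d+1)*ℓ = E₂*ℓ + d*ℓ + ℓ := by ring
        omega
      have hx1uℓ : x₁ < E₂ * ℓ := by rw [hℓdef]; exact hx1u
      have hsdℓ : d * ℓ = s := by rw [hsdef]; ring
      have hxM : (x₁ - 1) + s + 1 ≤ M := by omega
      have hthis := hper (x₁ - 1) (by omega) hxM
      rw [show x₁ - 1 + 1 = x₁ by omega] at hthis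
      exact hthis.symm
  · -- MAIN CASE: triangle inequality
    have hint : (1:ℝ) ≤ |((p * (Q:ℤ) - N * qz : ℤ) : ℝ)| := by
      have h0 : p * (Q:ℤ) - N * qz ≠ 0 := sub_ne_zero.2 hsplit
      have h1 : 1 ≤ |p * (Q:ℤ) - N * qz| := Int.one_le_abs h0
      calc (1:ℝ) = ((1:ℤ):ℝ) := by norm_num
        _ ≤ ((|p * (Q:ℤ) - N * qz|:ℤ):ℝ) := by exact_mod_cast h1
        _ = |((p * (Q:ℤ) - N * qz : ℤ) : ℝ)| := by rw [Int.cast_abs]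
    have hdiffeq : (p:ℝ)/(qz:ℝ) - (N:ℝ)/(Q:ℝ)
        = ((p * (Q:ℤ) - N * qz : ℤ):ℝ) / ((q:ℝ) * (Q:ℝ)) := by
      have hq0 : (q:ℝ) ≠ 0 := by positivity
      have hQ0 : (Q:ℝ) ≠ 0 := ne_of_gt hQRpos
      push_cast
      rw [hqzq]
      field_simp
    have h1 : ((q:ℝ) * (Q:ℝ))⁻¹ ≤ |(p:ℝ)/(qz:ℝ) - (N:ℝ)/(Q:ℝ)| := by
      rw [hdiffeq, abs_div, abs_of_pos (show (0:ℝ) < (q:ℝ)*(Q:ℝ) by positivity),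
        inv_eq_one_div]
      exact (div_le_div_iff_of_pos_right (by positivity)).2 hint
    have h2 : |ξ - (N:ℝ)/(Q:ℝ)| ≤ ((b:ℝ)^(ℓ-1))⁻¹ / (Q:ℝ) := by
      have he : ξ - (N:ℝ)/(Q:ℝ) = ((Q:ℝ)*ξ - (N:ℝ))/(Q:ℝ) := by
        have hQ0 : (Q:ℝ) ≠ 0 := ne_of_gt hQRpos
        field_simp
      rw [he, abs_div, abs_of_pos hQRpos, hQξ]
      exact (div_le_div_iff_of_pos_right hQRpos).2 hFF
    have h3 : ((b:ℝ)^(ℓ-1))⁻¹ ≤ ((2:ℝ)*(q:ℝ))⁻¹ := by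
      have hn : 2*q ≤ b^(ℓ-1) := by
        have e1 : b ^ ℓ = b^(ℓ-1) * b := by rw [← pow_succ]; congr 1; omega
        have e2 : (2*b*q)*b ≤ b^(ℓ-1)*b := by
          calc (2*b*q)*b = 2*b^2*q := by ring
            _ ≤ b ^ ℓ := hup
            _ = b^(ℓ-1)*b := e1
        have e3 : 2*b*q ≤ b^(ℓ-1) := Nat.le_of_mul_le_mul_right e2 (by omega)
        calc 2*q = 2*1*q := by ring
          _ ≤ 2*b*q := Nat.mul_le_mul (Nat.mul_le_mul le_rfl (by omega)) le_rfl
          _ ≤ b^(ℓ-1) := e3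
      have hcast : (2:ℝ)*(q:ℝ) ≤ (b:ℝ)^(ℓ-1) := by exact_mod_cast hn
      exact inv_anti₀ (by positivity) hcast
    have h4 : |(p:ℝ)/(qz:ℝ) - (N:ℝ)/(Q:ℝ)| ≤ ε + ((2:ℝ)*(q:ℝ))⁻¹/(Q:ℝ) := by
      have he : (p:ℝ)/(qz:ℝ) - (N:ℝ)/(Q:ℝ)
          = ((p:ℝ)/(qz:ℝ) - ξ) + (ξ - (N:ℝ)/(Q:ℝ)) := by ring
      rw [he]
      calc |((p:ℝ)/(qz:ℝ) - ξ) + (ξ - (N:ℝ)/(Q:ℝ))|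
          ≤ |(p:ℝ)/(qz:ℝ) - ξ| + |ξ - (N:ℝ)/(Q:ℝ)| := abs_add_le _ _
        _ ≤ ε + ((2:ℝ)*(q:ℝ))⁻¹/(Q:ℝ) := by
            refine add_le_add (le_of_eq ?_) (h2.trans ?_)
            · rw [hεdef, abs_sub_comm]
            · exact (div_le_div_iff_of_pos_right hQRpos).2 h3
    have h5 : ((q:ℝ)*(Q:ℝ))⁻¹ ≤ ε + ((2:ℝ)*(q:ℝ))⁻¹/(Q:ℝ) := h1.trans h4
    have h6 : (1:ℝ) ≤ 2*(q:ℝ)*(Q:ℝ)*ε := by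
      have he : ((2:ℝ)*(q:ℝ))⁻¹/(Q:ℝ) = ((q:ℝ)*(Q:ℝ))⁻¹/2 := by
        rw [div_eq_mul_inv, div_eq_mul_inv, ← mul_inv, ← mul_inv]
        congr 1
        ring
      rw [he] at h5
      have h7 : ((q:ℝ)*(Q:ℝ))⁻¹/2 ≤ ε := by linarith
      calc (1:ℝ) = 2*((q:ℝ)*(Q:ℝ)) * (((q:ℝ)*(Q:ℝ))⁻¹/2) := by
            rw [show 2*((q:ℝ)*(Q:ℝ)) * (((q:ℝ)*(Q:ℝ))⁻¹/2)
                = ((q:ℝ)*(Q:ℝ)) * ((q:ℝ)*(Q:ℝ))⁻¹ by ring,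
              mul_inv_cancel₀ (by positivity : ((q:ℝ)*(Q:ℝ)) ≠ 0)]
        _ ≤ 2*((q:ℝ)*(Q:ℝ)) * ε := mul_le_mul_of_nonneg_left h7 (by positivity)
        _ = 2*(q:ℝ)*(Q:ℝ)*ε := by ring
    have h8 : (Q:ℝ)*ε ≤ ((q:ℝ)^3)⁻¹ := by
      have hX : (t+d)*ℓ ≤ C4*ℓ := Nat.mul_le_mul_right ℓ (by omega)
      have h9 := master ((t+d)*ℓ) hX
      have hQb : (Q:ℝ) ≤ (b:ℝ)^((t+d)*ℓ) := by exact_mod_cast hQle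
      calc (Q:ℝ)*ε ≤ (b:ℝ)^((t+d)*ℓ)*ε := mul_le_mul_of_nonneg_right hQb hεnn
        _ ≤ ((q:ℝ)^3)⁻¹ := h9
    have h10 : (1:ℝ) ≤ 2*(q:ℝ)*((q:ℝ)^3)⁻¹ := by
      calc (1:ℝ) ≤ 2*(q:ℝ)*(Q:ℝ)*ε := h6
        _ = 2*(q:ℝ)*((Q:ℝ)*ε) := by ring
        _ ≤ 2*(q:ℝ)*((q:ℝ)^3)⁻¹ := mul_le_mul_of_nonneg_left h8 (by positivity)
    have h11 : 2*(q:ℝ)*((q:ℝ)^3)⁻¹ < 1 := by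
      have he : 2*(q:ℝ)*((q:ℝ)^3)⁻¹ = 2/((q:ℝ)^2) := by
        have hq0 : (q:ℝ) ≠ 0 := by positivity
        rw [div_eq_mul_inv]
        have h3 : ((q:ℝ)^3)⁻¹ = ((q:ℝ)^2)⁻¹ * (q:ℝ)⁻¹ := by
          rw [← mul_inv, ← pow_succ]
        rw [h3]
        field_simp
      rw [he, div_lt_one (by positivity)]
      have hq2R : (2:ℝ) ≤ (q:ℝ) := by exact_mod_cast hq2
      nlinarith [hq2R]
    linarith
end

section
/- Let b ≥ 2 and let ξ_b = Σ_{k≥0} a_k b^{−k}, where (a_n) is the Thue–Morse sequence (a_n = parity of the number of 1's in the binary expansion of n). Then the irrationality measure of ξ_b satisfies μ(ξ_b) ≤ 5. -/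
/-!
Let `w` be the first `2 ^ m` letters of the Thue–Morse word and `w̄` its complement, so that the
word begins `w w̄ w̄ w`. Reading `w w̄ w̄ w̄ ⋯` in base `b` gives a rational `r_m` with denominator
dividing `b ^ (2 ^ m - 1) * (b ^ 2 ^ m - 1)`, and `ξ_b - r_m` is `-b ^ (-3 * 2 ^ m)` times
`∏ k < m, (1 - b ^ (-2 ^ k)) ∈ [1/4, 1]`, up to an error `O(b ^ (-4 * 2 ^ m))`. The numerator
of `r_m` is `±1` modulo `b`, so the reduced denominator of `r_m` is still at least
`b ^ (2 ^ m - 1)`.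

Given `p / q` with `q` large, take the least `m` with `Y = b ^ 2 ^ m ≥ 10 q`, so that `Y < 100 q²`.
Either `p / q = r_m`, and then `q ≥ Y / b` gives `|ξ_b - p / q| ≫ q⁻³`, or `p / q ≠ r_m`, and then
`|ξ_b - p / q| ≥ 1 / (q Y²) - |ξ_b - r_m| ≥ 1 / (2 q Y²) ≫ q⁻⁵`.
-/

/-- The Thue–Morse sequence: parity of the number of `1`s in the binary expansion. -/
def thueMorse (n : ℕ) : ℕ := (Nat.digits 2 n).sum % 2

open Finset Filter

theorem thueMorse_le_one (n : ℕ) : thueMorse n ≤ 1 :=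
  Nat.le_of_lt_succ (Nat.mod_lt _ two_pos)

theorem thueMorse_two_mul (n : ℕ) : thueMorse (2 * n) = thueMorse n := by
  rcases Nat.eq_zero_or_pos n with rfl | hn
  · rfl
  · simp [thueMorse, Nat.digits_def' one_lt_two (by omega : 0 < 2 * n)]

theorem thueMorse_two_mul_add_one (n : ℕ) :
    thueMorse (2 * n + 1) = (thueMorse n + 1) % 2 := by
  rw [thueMorse, Nat.digits_def' one_lt_two (Nat.succ_pos (2 * n)),
    show (2 * n).succ / 2 = n by omega, List.sum_cons, thueMorse]
  omega

theorem thueMorse_two_pow_add {k j : ℕ} (hj : j < 2 ^ k) :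
    thueMorse (2 ^ k + j) = 1 - thueMorse j := by
  induction k generalizing j with
  | zero =>
    obtain rfl : j = 0 := by simpa using hj
    rfl
  | succ k ih =>
    obtain ⟨i, rfl | rfl⟩ : ∃ i, j = 2 * i ∨ j = 2 * i + 1 := ⟨j / 2, by omega⟩
    · rw [pow_succ, show 2 ^ k * 2 + 2 * i = 2 * (2 ^ k + i) by ring, thueMorse_two_mul,
        thueMorse_two_mul, ih (by rw [pow_succ] at hj; omega)]
    · rw [pow_succ, show 2 ^ k * 2 + (2 * i + 1) = 2 * (2 ^ k + i) + 1 by ring,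
        thueMorse_two_mul_add_one, thueMorse_two_mul_add_one, ih (by rw [pow_succ] at hj; omega)]
      have := thueMorse_le_one i
      omega

section Blocks

variable {K : Type*} [CommRing K]

def tmBlock (x : K) (L : ℕ) : K := ∑ j ∈ range L, (thueMorse j : K) * x ^ j

def tmBlockCompl (x : K) (L : ℕ) : K := ∑ j ∈ range L, (1 - (thueMorse j : K)) * x ^ j

theorem thueMorse_two_pow_add_cast {k j : ℕ} (hj : j < 2 ^ k) :
    (thueMorse (2 ^ k + j) : K) = 1 - thueMorse j := by
  rw [thueMorse_two_pow_add hj, Nat.cast_sub (thueMorse_le_one j), Nat.cast_one]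

theorem tmBlock_two_pow_succ (x : K) (m : ℕ) :
    tmBlock x (2 ^ (m + 1)) = tmBlock x (2 ^ m) + x ^ 2 ^ m * tmBlockCompl x (2 ^ m) := by
  rw [tmBlock, pow_succ, mul_two, sum_range_add, tmBlockCompl, mul_sum]
  congr 1
  refine sum_congr rfl fun j hj => ?_
  rw [thueMorse_two_pow_add_cast (mem_range.mp hj), pow_add]
  ring

theorem tmBlockCompl_two_pow_succ (x : K) (m : ℕ) :
    tmBlockCompl x (2 ^ (m + 1)) = tmBlockCompl x (2 ^ m) + x ^ 2 ^ m * tmBlock x (2 ^ m) := by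
  rw [tmBlockCompl, pow_succ, mul_two, sum_range_add, tmBlock, mul_sum]
  congr 1
  refine sum_congr rfl fun j hj => ?_
  rw [thueMorse_two_pow_add_cast (mem_range.mp hj), pow_add]
  ring

theorem tmBlockCompl_sub_tmBlock (x : K) (m : ℕ) :
    tmBlockCompl x (2 ^ m) - tmBlock x (2 ^ m) = ∏ k ∈ range m, (1 - x ^ 2 ^ k) := by
  induction m with
  | zero => simp [tmBlock, tmBlockCompl, thueMorse]
  | succ m ih =>
    rw [tmBlock_two_pow_succ, tmBlockCompl_two_pow_succ, prod_range_succ, ← ih]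
    ring

theorem tmBlock_four_mul_two_pow (x : K) (m : ℕ) :
    tmBlock x (4 * 2 ^ m) = tmBlock x (2 ^ m) + (x ^ 2 ^ m + (x ^ 2 ^ m) ^ 2) *
      tmBlockCompl x (2 ^ m) + (x ^ 2 ^ m) ^ 3 * tmBlock x (2 ^ m) := by
  rw [show 4 * 2 ^ m = 2 ^ (m + 2) by ring, tmBlock_two_pow_succ, tmBlock_two_pow_succ,
    tmBlockCompl_two_pow_succ, pow_succ 2 m, pow_mul]
  ring

end Blocks

/-- The power series with the eventually periodic coefficients `w w̄ w̄ w̄ ⋯`, where `w` is the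
Thue–Morse prefix of length `2 ^ m` and `w̄` its complement. -/
def tmApprox {K : Type*} [Field K] (x : K) (m : ℕ) : K :=
  tmBlock x (2 ^ m) + tmBlockCompl x (2 ^ m) * x ^ 2 ^ m / (1 - x ^ 2 ^ m)

noncomputable def tmSeries (x : ℝ) : ℝ := ∑' n, (thueMorse n : ℝ) * x ^ n

section Estimates

variable {x : ℝ}

theorem thueMorse_mul_pow_le (hx : 0 ≤ x) (n : ℕ) : (thueMorse n : ℝ) * x ^ n ≤ x ^ n :=
  mul_le_of_le_one_left (pow_nonneg hx n) (by exact_mod_cast thueMorse_le_one n)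

theorem summable_thueMorse_mul_pow (hx0 : 0 ≤ x) (hx1 : x < 1) :
    Summable fun n => (thueMorse n : ℝ) * x ^ n :=
  (summable_geometric_of_lt_one hx0 hx1).of_nonneg_of_le (fun n => by positivity)
    (thueMorse_mul_pow_le hx0)

theorem tmSeries_eq_tmBlock_add_tsum (hx0 : 0 ≤ x) (hx1 : x < 1) (N : ℕ) :
    tmSeries x = tmBlock x N + ∑' n, (thueMorse (n + N) : ℝ) * x ^ (n + N) :=
  ((summable_thueMorse_mul_pow hx0 hx1).sum_add_tsum_nat_add N).symm

theorem tsum_thueMorse_mul_pow_add_le (hx0 : 0 ≤ x) (hx1 : x < 1) (N : ℕ) :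
    ∑' n, (thueMorse (n + N) : ℝ) * x ^ (n + N) ≤ x ^ N / (1 - x) := by
  have hgeom := summable_geometric_of_lt_one hx0 hx1
  calc ∑' n, (thueMorse (n + N) : ℝ) * x ^ (n + N) ≤ ∑' n, x ^ N * x ^ n :=
        ((summable_nat_add_iff N).mpr (summable_thueMorse_mul_pow hx0 hx1)).tsum_le_tsum
          (fun n => (thueMorse_mul_pow_le hx0 _).trans_eq (by rw [add_comm, pow_add]))
          (hgeom.mul_left _)
    _ = x ^ N / (1 - x) := by
        rw [tsum_mul_left, tsum_geometric_of_lt_one hx0 hx1, div_eq_mul_inv]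

theorem tmBlockCompl_nonneg (hx : 0 ≤ x) (L : ℕ) : 0 ≤ tmBlockCompl x L :=
  sum_nonneg fun j _ => mul_nonneg (sub_nonneg.mpr (by exact_mod_cast thueMorse_le_one j))
    (pow_nonneg hx j)

theorem tmBlockCompl_le (hx0 : 0 ≤ x) (hx1 : x < 1) (L : ℕ) :
    tmBlockCompl x L ≤ 1 / (1 - x) := by
  calc tmBlockCompl x L ≤ ∑ j ∈ range L, x ^ j :=
        sum_le_sum fun j _ => mul_le_of_le_one_left (pow_nonneg hx0 j)
          (sub_le_self _ (Nat.cast_nonneg _))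
    _ ≤ ∑' j, x ^ j := (summable_geometric_of_lt_one hx0 hx1).sum_le_tsum _
          fun j _ => pow_nonneg hx0 j
    _ = 1 / (1 - x) := by rw [tsum_geometric_of_lt_one hx0 hx1, one_div]

theorem prod_one_sub_pow_two_pow_le_one (hx0 : 0 ≤ x) (hx1 : x ≤ 1) (m : ℕ) :
    ∏ k ∈ range m, (1 - x ^ 2 ^ k) ≤ 1 :=
  prod_le_one (fun _ _ => sub_nonneg.mpr (pow_le_one₀ hx0 hx1))
    fun _ _ => sub_le_self _ (pow_nonneg hx0 _)

theorem prod_one_sub_pow_two_pow_nonneg (hx0 : 0 ≤ x) (hx1 : x ≤ 1) (m : ℕ) :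
    0 ≤ ∏ k ∈ range m, (1 - x ^ 2 ^ k) :=
  prod_nonneg fun _ _ => sub_nonneg.mpr (pow_le_one₀ hx0 hx1)

theorem quarter_le_prod_one_sub_pow_two_pow (hx0 : 0 ≤ x) (hx : x ≤ 1 / 2) {m : ℕ}
    (hm : 1 ≤ m) : 1 / 4 ≤ ∏ k ∈ range m, (1 - x ^ 2 ^ k) := by
  -- the stronger bound `(1 + 2 x ^ 2 ^ m) / 4` propagates once `x ^ 2 ^ m ≤ 1 / 4`
  suffices h : (1 + 2 * x ^ 2 ^ m) / 4 ≤ ∏ k ∈ range m, (1 - x ^ 2 ^ k) by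
    nlinarith [pow_nonneg hx0 (2 ^ m)]
  induction m, hm using Nat.le_induction with
  | base => simp only [pow_one, range_one, prod_singleton, pow_zero]; nlinarith
  | succ m hm ih =>
    have hu : x ^ 2 ^ m ≤ 1 / 4 := by
      calc x ^ 2 ^ m ≤ x ^ 2 := pow_le_pow_of_le_one hx0 (by linarith)
            (by simpa using Nat.pow_le_pow_right two_pos hm)
        _ ≤ 1 / 4 := by nlinarith
    have hu0 := pow_nonneg hx0 (2 ^ m)
    rw [prod_range_succ, pow_succ, pow_mul]
    nlinarith [mul_le_mul_of_nonneg_right ih (by linarith : 0 ≤ 1 - x ^ 2 ^ m)]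

theorem tmSeries_sub_tmApprox (hx0 : 0 ≤ x) (hx1 : x < 1) (m : ℕ) :
    tmSeries x - tmApprox x m = -(x ^ 2 ^ m) ^ 3 * ∏ k ∈ range m, (1 - x ^ 2 ^ k) +
      (∑' n, (thueMorse (n + 4 * 2 ^ m) : ℝ) * x ^ (n + 4 * 2 ^ m) -
        tmBlockCompl x (2 ^ m) * (x ^ 2 ^ m) ^ 4 / (1 - x ^ 2 ^ m)) := by
  have hu : 1 - x ^ 2 ^ m ≠ 0 := (sub_pos.mpr (pow_lt_one₀ hx0 hx1 (by positivity))).ne'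
  rw [tmSeries_eq_tmBlock_add_tsum hx0 hx1 (4 * 2 ^ m), tmBlock_four_mul_two_pow, tmApprox,
    ← tmBlockCompl_sub_tmBlock]
  field_simp
  ring

theorem exists_tmSeries_sub_tmApprox_eq (hx0 : 0 ≤ x) (hx : x ≤ 1 / 2) (m : ℕ) :
    ∃ R, |R| ≤ 4 * (x ^ 2 ^ m) ^ 4 ∧
      tmSeries x - tmApprox x m = -(x ^ 2 ^ m) ^ 3 * ∏ k ∈ range m, (1 - x ^ 2 ^ k) + R := by
  refine ⟨_, ?_, tmSeries_sub_tmApprox hx0 (by linarith) m⟩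
  set u := x ^ 2 ^ m
  have hu0 : 0 ≤ u := pow_nonneg hx0 _
  have hu : u ≤ 1 / 2 := (pow_le_of_le_one hx0 (by linarith) (by positivity)).trans hx
  have hT : ∑' n, (thueMorse (n + 4 * 2 ^ m) : ℝ) * x ^ (n + 4 * 2 ^ m) ≤ 2 * u ^ 4 := by
    refine (tsum_thueMorse_mul_pow_add_le hx0 (by linarith) _).trans ?_
    rw [div_le_iff₀ (by linarith), mul_comm 4, pow_mul]
    nlinarith [pow_nonneg hu0 4]
  have hT0 : 0 ≤ ∑' n, (thueMorse (n + 4 * 2 ^ m) : ℝ) * x ^ (n + 4 * 2 ^ m) :=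
    tsum_nonneg fun n => by positivity
  have hC : tmBlockCompl x (2 ^ m) ≤ 2 :=
    (tmBlockCompl_le hx0 (by linarith) _).trans (by rw [div_le_iff₀ (by linarith)]; linarith)
  have hS : tmBlockCompl x (2 ^ m) * u ^ 4 / (1 - u) ≤ 4 * u ^ 4 := by
    rw [div_le_iff₀ (by linarith)]
    nlinarith [pow_nonneg hu0 4, tmBlockCompl_nonneg hx0 (2 ^ m)]
  have hS0 : 0 ≤ tmBlockCompl x (2 ^ m) * u ^ 4 / (1 - u) :=
    div_nonneg (mul_nonneg (tmBlockCompl_nonneg hx0 _) (by positivity)) (by linarith)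
  rw [abs_le]
  constructor <;> linarith

theorem abs_tmSeries_sub_tmApprox_le (hx0 : 0 ≤ x) (hx : x ≤ 1 / 2) (m : ℕ) :
    |tmSeries x - tmApprox x m| ≤ 5 * (x ^ 2 ^ m) ^ 3 := by
  obtain ⟨R, hR, hξ⟩ := exists_tmSeries_sub_tmApprox_eq hx0 hx m
  have hP := prod_one_sub_pow_two_pow_le_one hx0 (by linarith) m
  have hP0 := prod_one_sub_pow_two_pow_nonneg hx0 (by linarith) m
  have hu0 : 0 ≤ x ^ 2 ^ m := pow_nonneg hx0 _
  have hu : x ^ 2 ^ m ≤ 1 := pow_le_one₀ hx0 (by linarith)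
  rw [hξ]
  refine (abs_add_le _ _).trans ?_
  rw [abs_mul, abs_neg, abs_of_nonneg (pow_nonneg hu0 3), abs_of_nonneg hP0]
  nlinarith [pow_nonneg hu0 3, pow_le_pow_of_le_one hu0 hu (by norm_num : 3 ≤ 4)]

theorem le_abs_tmSeries_sub_tmApprox (hx0 : 0 ≤ x) (hx : x ≤ 1 / 2) {m : ℕ} (hm : 3 ≤ m) :
    (x ^ 2 ^ m) ^ 3 / 8 ≤ |tmSeries x - tmApprox x m| := by
  obtain ⟨R, hR, hξ⟩ := exists_tmSeries_sub_tmApprox_eq hx0 hx m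
  have hP := quarter_le_prod_one_sub_pow_two_pow hx0 hx (by omega : 1 ≤ m)
  have hu0 : 0 ≤ x ^ 2 ^ m := pow_nonneg hx0 _
  have hu : x ^ 2 ^ m ≤ 1 / 32 := by
    calc x ^ 2 ^ m ≤ x ^ 8 := pow_le_pow_of_le_one hx0 (by linarith)
          (by simpa using Nat.pow_le_pow_right two_pos hm)
      _ ≤ (1 / 2) ^ 8 := pow_le_pow_left₀ hx0 hx 8
      _ ≤ 1 / 32 := by norm_num
  rw [hξ]
  refine le_trans ?_ (neg_le_abs _)
  nlinarith [(abs_le.mp hR).2, pow_nonneg hu0 3]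

end Estimates

namespace Rat

theorem den_dvd_of_mul_intCast_eq {r : ℚ} {D N : ℤ} (h : r * D = N) : (r.den : ℤ) ∣ D := by
  rcases eq_or_ne D 0 with rfl | hD
  · exact dvd_zero _
  · rw [eq_div_of_mul_eq (Int.cast_ne_zero.mpr hD) h, ← divInt_eq_div]
    exact den_dvd N D

theorem pow_dvd_den_of_mul_intCast_eq {r : ℚ} {b E N : ℤ} {k : ℕ} (h : r * (b ^ k * E : ℤ) = N)
    (hN : IsCoprime N b) : b ^ k ∣ (r.den : ℤ) := by
  have hcross : r.num * (b ^ k * E) = N * r.den := by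
    have : (r.num : ℚ) * (b ^ k * E : ℤ) = N * r.den := by rw [← h, ← mul_den_eq_num]; ring
    exact_mod_cast this
  exact (hN.pow_right.symm).dvd_of_dvd_mul_left ⟨r.num * E, by rw [← hcross]; ring⟩

theorem den_le_of_intCast_div_eq {r : ℚ} {p q : ℤ} (hq : 0 < q) (h : (p / q : ℝ) = r) :
    (r.den : ℤ) ≤ q := by
  have hr : r * q = p := by
    rw [← (show (p / q : ℚ) = r by exact_mod_cast h)]
    field_simp
  exact Int.le_of_dvd hq (den_dvd_of_mul_intCast_eq hr)

theorem one_div_mul_den_le_abs_intCast_div_sub {r : ℚ} {p q : ℤ} (hq : 0 < q)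
    (h : (p / q : ℝ) ≠ r) : 1 / (q * r.den) ≤ |(p / q : ℝ) - r| := by
  have hq' : (0 : ℝ) < q := Int.cast_pos.mpr hq
  have hd : (0 : ℝ) < r.den := Nat.cast_pos.mpr r.den_pos
  have hne : p * r.den - r.num * q ≠ 0 := by
    contrapose! h
    rw [Rat.cast_def, div_eq_div_iff hq'.ne' hd.ne']
    exact_mod_cast (by linarith : p * (r.den : ℤ) = r.num * q)
  have key : (p / q : ℝ) - r = ((p * r.den - r.num * q : ℤ) : ℝ) / (q * r.den) := by
    rw [Rat.cast_def]
    push_cast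
    field_simp
  rw [key, abs_div, abs_of_pos (mul_pos hq' hd)]
  gcongr
  exact_mod_cast Int.one_le_abs hne

end Rat

theorem exists_le_lt_sq_of_tendsto {Y : ℕ → ℝ} (hY0 : ∀ m, 0 ≤ Y m)
    (hsq : ∀ m, Y (m + 1) ≤ Y m ^ 2) (htend : Tendsto Y atTop atTop) {z : ℝ} (hz : Y 0 < z) :
    ∃ m, z ≤ Y m ∧ Y m < z ^ 2 := by
  classical
  have hex : ∃ m, z ≤ Y m := (htend.eventually_ge_atTop z).exists
  obtain ⟨n, hn⟩ : ∃ n, Nat.find hex = n + 1 :=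
    Nat.exists_eq_succ_of_ne_zero fun h => (Nat.find_spec hex).not_gt (h ▸ hz)
  have hprev : Y n < z := not_le.mp (Nat.find_min hex (by omega))
  refine ⟨n + 1, hn ▸ Nat.find_spec hex, (hsq n).trans_lt ?_⟩
  exact pow_lt_pow_left₀ hprev (hY0 n) two_ne_zero

theorem one_div_two_mul_sq_le_abs_sub {ξ Y c : ℝ} {r : ℚ} {p q : ℤ} (hq : 0 < q) (hY : 0 < Y)
    (hden : (r.den : ℝ) ≤ Y ^ 2) (hYq : 2 * c * q ≤ Y) (hup : |ξ - r| ≤ c / Y ^ 3)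
    (hne : (p / q : ℝ) ≠ r) : 1 / (2 * (q * Y ^ 2)) ≤ |ξ - p / q| := by
  have hq' : (0 : ℝ) < q := Int.cast_pos.mpr hq
  have hsep := Rat.one_div_mul_den_le_abs_intCast_div_sub hq hne
  have hden' : 1 / (q * Y ^ 2) ≤ 1 / (q * r.den) := by
    gcongr
  have hclose : c / Y ^ 3 ≤ 1 / (2 * (q * Y ^ 2)) := by
    rw [div_le_div_iff₀ (by positivity) (by positivity)]
    nlinarith [mul_le_mul_of_nonneg_right hYq (by positivity : 0 ≤ Y ^ 2)]
  have htri : |(p / q : ℝ) - r| ≤ |ξ - p / q| + |ξ - r| :=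
    (abs_sub_le _ ξ _).trans_eq (by rw [abs_sub_comm])
  have : 1 / (2 * (q * Y ^ 2)) = 1 / (q * Y ^ 2) - 1 / (2 * (q * Y ^ 2)) := by ring
  linarith

theorem eventually_one_div_rpow_le_abs_sub_of_approx {ξ : ℝ} {r : ℕ → ℚ} {Y : ℕ → ℝ}
    {c₁ c₂ c₃ : ℝ} (hc₁ : 0 < c₁) (hc₂ : 0 < c₂) (hc₃ : 0 < c₃) (hY0 : ∀ m, 0 ≤ Y m)
    (hsq : ∀ m, Y (m + 1) ≤ Y m ^ 2) (htend : Tendsto Y atTop atTop)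
    (hden_le : ∀ m, ((r m).den : ℝ) ≤ Y m ^ 2) (hden_ge : ∀ m, c₃ * Y m ≤ (r m).den)
    (hlow : ∀ m, c₁ / Y m ^ 3 ≤ |ξ - r m|) (hup : ∀ m, |ξ - r m| ≤ c₂ / Y m ^ 3)
    {τ : ℝ} (hτ : 5 < τ) :
    ∀ᶠ q : ℤ in atTop, ∀ p : ℤ, 1 / (q : ℝ) ^ τ ≤ |ξ - p / q| := by
  have hq : Tendsto (fun q : ℤ => (q : ℝ)) atTop atTop := tendsto_intCast_atTop_atTop
  filter_upwards [hq.eventually_gt_atTop 0, hq.eventually_gt_atTop (Y 0 / (2 * c₂)),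
    hq.eventually ((tendsto_rpow_atTop (by linarith : 0 < τ - 5)).eventually_ge_atTop
      (2 * (2 * c₂) ^ 4)),
    hq.eventually ((tendsto_rpow_atTop (by linarith : 0 < τ - 3)).eventually_ge_atTop
      (1 / (c₁ * c₃ ^ 3)))] with q hq0 hqY0 hq5 hq3 p
  -- at the scale `Y m ≥ 2 c₂ q`, the error `|ξ - r m|` is at most half the gap `1 / (q Y m ^ 2)`
  obtain ⟨m, hmz, hmz2⟩ := exists_le_lt_sq_of_tendsto hY0 hsq htend
    (z := 2 * c₂ * q) (by rwa [div_lt_iff₀' (by positivity)] at hqY0)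
  have hYm : 0 < Y m := lt_of_lt_of_le (by positivity) hmz
  have hqτ : ∀ k : ℕ, (q : ℝ) ^ τ = (q : ℝ) ^ (τ - k) * (q : ℝ) ^ k := fun k => by
    rw [← Real.rpow_natCast, ← Real.rpow_add hq0, sub_add_cancel]
  by_cases heq : (p / q : ℝ) = r m
  · have hqden : c₃ * Y m ≤ q := (hden_ge m).trans
      (by exact_mod_cast Rat.den_le_of_intCast_div_eq (Int.cast_pos.mp hq0) heq)
    rw [heq]
    refine le_trans ?_ (hlow m)
    rw [div_le_div_iff₀ (by positivity) (by positivity), hqτ 3]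
    rw [div_le_iff₀ (by positivity)] at hq3
    calc 1 * Y m ^ 3 ≤ (q : ℝ) ^ (τ - 3) * (c₁ * c₃ ^ 3) * Y m ^ 3 := by gcongr
      _ = c₁ * (q : ℝ) ^ (τ - 3) * (c₃ * Y m) ^ 3 := by ring
      _ ≤ c₁ * (q : ℝ) ^ (τ - 3) * (q : ℝ) ^ 3 := by gcongr
      _ = c₁ * ((q : ℝ) ^ (τ - 3) * (q : ℝ) ^ 3) := by ring
  · refine le_trans ?_
      (one_div_two_mul_sq_le_abs_sub (Int.cast_pos.mp hq0) hYm (hden_le m) hmz (hup m) heq)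
    apply one_div_le_one_div_of_le (by positivity)
    have hY4 : Y m ^ 2 ≤ (2 * c₂) ^ 4 * (q : ℝ) ^ 4 := by
      nlinarith [pow_lt_pow_left₀ hmz2 hYm.le two_ne_zero]
    rw [hqτ 5, Nat.cast_ofNat]
    nlinarith [mul_le_mul_of_nonneg_right hq5 (by positivity : (0 : ℝ) ≤ (q : ℝ) ^ 5),
      mul_le_mul_of_nonneg_left hY4 (by positivity : (0 : ℝ) ≤ 2 * q)]

theorem finite_setOf_abs_sub_lt_one_div_rpow {ξ τ : ℝ} (hτ : 0 ≤ τ)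
    (h : ∀ᶠ q : ℤ in atTop, ∀ p : ℤ, 1 / (q : ℝ) ^ τ ≤ |ξ - p / q|) :
    {pq : ℤ × ℤ | 1 ≤ pq.2 ∧ |ξ - pq.1 / pq.2| < 1 / (pq.2 : ℝ) ^ τ}.Finite := by
  obtain ⟨Q, hQ⟩ := eventually_atTop.mp h
  set M := ⌈Q * (|ξ| + 1)⌉
  refine ((Set.finite_Icc (-M) M).prod (Set.finite_Icc 1 Q)).subset ?_
  rintro ⟨p, q⟩ ⟨hq1, hpq⟩
  have hqQ : q ≤ Q := by
    by_contra! hQq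
    exact (hQ q hQq.le p).not_gt hpq
  have hq : (1 : ℝ) ≤ q := by exact_mod_cast hq1
  have hclose : |ξ - p / q| < 1 :=
    hpq.trans_le (by rw [div_le_one (by positivity)]; exact Real.one_le_rpow hq hτ)
  have hp : |(p : ℝ)| ≤ Q * (|ξ| + 1) := by
    have hdiv : |(p / q : ℝ)| ≤ |ξ| + 1 := by
      have := abs_sub_abs_le_abs_sub (p / q : ℝ) ξ
      rw [abs_sub_comm] at this
      linarith
    rw [abs_div, abs_of_pos (by linarith : (0 : ℝ) < q), div_le_iff₀ (by linarith)] at hdiv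
    nlinarith [abs_nonneg ξ, (Int.cast_le (R := ℝ)).mpr hqQ]
  have hpM : |p| ≤ M := by
    exact_mod_cast (Int.cast_abs (R := ℝ) ▸ hp).trans (Int.le_ceil _)
  exact ⟨abs_le.mp hpM, hq1, hqQ⟩

theorem pow_pred_mul_sum_mul_inv_pow {K : Type*} [Field K] {b : K} (hb : b ≠ 0) (f : ℕ → K)
    (L : ℕ) :
    b ^ (L - 1) * ∑ j ∈ range L, f j * b⁻¹ ^ j = ∑ j ∈ range L, f j * b ^ (L - 1 - j) := by
  rw [mul_sum]
  refine sum_congr rfl fun j hj => ?_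
  rw [pow_sub₀ b hb (show j ≤ L - 1 by have := mem_range.mp hj; omega), inv_pow]
  ring

theorem dvd_sum_mul_pow_pred_sub_sub {b : ℤ} (f : ℕ → ℤ) (n : ℕ) :
    b ∣ ∑ j ∈ range (n + 1), f j * b ^ (n + 1 - 1 - j) - f n := by
  rw [sum_range_succ, Nat.add_sub_cancel, Nat.sub_self, pow_zero, mul_one, add_sub_cancel_right]
  exact dvd_sum fun j hj => Dvd.dvd.mul_left
    (dvd_pow_self b (by have := mem_range.mp hj; omega)) _

/-- The numerator of `tmApprox (1 / b) m` over the denominator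
`b ^ (2 ^ m - 1) * (b ^ 2 ^ m - 1)`. -/
def tmNumerator (b : ℤ) (m : ℕ) : ℤ :=
  (∑ j ∈ range (2 ^ m), (thueMorse j : ℤ) * b ^ (2 ^ m - 1 - j)) * (b ^ 2 ^ m - 1) +
    ∑ j ∈ range (2 ^ m), (1 - (thueMorse j : ℤ)) * b ^ (2 ^ m - 1 - j)

theorem tmApprox_inv_mul_eq {b : ℤ} (hb : 1 < b) (m : ℕ) :
    tmApprox (b⁻¹ : ℚ) m * (b ^ (2 ^ m - 1) * (b ^ 2 ^ m - 1) : ℤ) = tmNumerator b m := by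
  have hb0 : (b : ℚ) ≠ 0 := by positivity
  have hy : (b : ℚ) ^ 2 ^ m - 1 ≠ 0 :=
    sub_ne_zero.mpr (one_lt_pow₀ (by exact_mod_cast hb) (by positivity)).ne'
  have hA := pow_pred_mul_sum_mul_inv_pow hb0 (fun j => (thueMorse j : ℚ)) (2 ^ m)
  have hC := pow_pred_mul_sum_mul_inv_pow hb0 (fun j => 1 - (thueMorse j : ℚ)) (2 ^ m)
  rw [tmNumerator, tmApprox, tmBlock, tmBlockCompl]
  push_cast
  rw [← hA, ← hC, inv_pow]
  field_simp

theorem isCoprime_tmNumerator (b : ℤ) (m : ℕ) : IsCoprime (tmNumerator b m) b := by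
  obtain ⟨n, hn⟩ : ∃ n, 2 ^ m = n + 1 := Nat.exists_eq_succ_of_ne_zero (by positivity)
  have hP := dvd_sum_mul_pow_pred_sub_sub (b := b) (fun j => (thueMorse j : ℤ)) n
  have hC := dvd_sum_mul_pow_pred_sub_sub (b := b) (fun j => 1 - (thueMorse j : ℤ)) n
  rw [← hn, ← Int.modEq_iff_dvd] at hP hC
  have hy : b ^ 2 ^ m ≡ 0 [ZMOD b] :=
    Int.modEq_zero_iff_dvd.mpr (dvd_pow_self b (by positivity))
  -- the numerator is `1 - 2 t = ±1` modulo `b`, where `t = thueMorse (2 ^ m - 1)`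
  have key : (thueMorse n : ℤ) * (0 - 1) + (1 - thueMorse n) ≡ tmNumerator b m [ZMOD b] :=
    (hP.mul (hy.symm.sub rfl)).add hC
  rcases Nat.le_one_iff_eq_zero_or_eq_one.mp (thueMorse_le_one n) with h | h <;>
    rw [h] at key <;> norm_num at key
  · simpa using IsCoprime.add_one_left_of_dvd (Int.ModEq.dvd key)
  · simpa using IsCoprime.sub_one_left_of_dvd (Int.ModEq.dvd key)

theorem den_tmApprox_le {b : ℕ} (hb : 2 ≤ b) (m : ℕ) :
    (tmApprox (b⁻¹ : ℚ) m).den ≤ (b ^ 2 ^ m) ^ 2 := by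
  have h := tmApprox_inv_mul_eq (b := b) (by omega) m
  rw [Int.cast_natCast] at h
  have hy : (1 : ℤ) < b ^ 2 ^ m := one_lt_pow₀ (by omega) (by positivity)
  have hpos : (0 : ℤ) < b ^ (2 ^ m - 1) * (b ^ 2 ^ m - 1) := by
    have : (0 : ℤ) < b ^ (2 ^ m - 1) := by positivity
    nlinarith
  have hle : (b : ℤ) ^ (2 ^ m - 1) * (b ^ 2 ^ m - 1) ≤ (b ^ 2 ^ m) ^ 2 :=
    (mul_le_mul (pow_le_pow_right₀ (by omega) (Nat.sub_le _ _)) (sub_le_self _ zero_le_one)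
      (by linarith) (by positivity)).trans_eq (sq _).symm
  exact_mod_cast (Int.le_of_dvd hpos (Rat.den_dvd_of_mul_intCast_eq h)).trans hle

theorem pow_two_pow_le_mul_den_tmApprox {b : ℕ} (hb : 2 ≤ b) (m : ℕ) :
    b ^ 2 ^ m ≤ b * (tmApprox (b⁻¹ : ℚ) m).den := by
  have h := tmApprox_inv_mul_eq (b := b) (by omega) m
  rw [Int.cast_natCast] at h
  have hdvd : b ^ (2 ^ m - 1) ∣ (tmApprox (b⁻¹ : ℚ) m).den := by
    exact_mod_cast Rat.pow_dvd_den_of_mul_intCast_eq h (isCoprime_tmNumerator b m)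
  calc b ^ 2 ^ m = b * b ^ (2 ^ m - 1) := by
        rw [← pow_succ', Nat.sub_add_cancel Nat.one_le_two_pow]
    _ ≤ b * (tmApprox (b⁻¹ : ℚ) m).den := by
        gcongr
        exact Nat.le_of_dvd (Rat.den_pos _) hdvd

theorem cast_tmApprox_inv (b : ℕ) (m : ℕ) :
    ((tmApprox (b⁻¹ : ℚ) m : ℚ) : ℝ) = tmApprox (b : ℝ)⁻¹ m := by
  simp [tmApprox, tmBlock, tmBlockCompl]

theorem stmt6 (b : ℕ) (hb : 2 ≤ b)
    (ξ : ℝ) (hξ : ξ = ∑' n : ℕ, (thueMorse n : ℝ) / (b : ℝ) ^ n) :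
    -- the irrationality measure of the Thue–Morse–Mahler number `ξ_b` is at most `5`
    ∀ τ : ℝ, (5 : ℝ) < τ →
      {pq : ℤ × ℤ | 1 ≤ pq.2 ∧ Int.gcd pq.1 pq.2 = 1 ∧
        |ξ - (pq.1 : ℝ) / (pq.2 : ℝ)| < 1 / (pq.2 : ℝ) ^ τ}.Finite := by
  intro τ hτ
  have hb0 : (0 : ℝ) < b := by positivity
  have hx : (b : ℝ)⁻¹ ≤ 1 / 2 := by
    rw [one_div]; exact inv_anti₀ two_pos (by exact_mod_cast hb)
  have hξ' : ξ = tmSeries (b : ℝ)⁻¹ := by simp only [hξ, tmSeries, inv_pow, div_eq_mul_inv]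
  have hY : Tendsto (fun m => (b : ℝ) ^ 2 ^ (m + 3)) atTop atTop :=
    (tendsto_pow_atTop_atTop_of_one_lt (by exact_mod_cast (by omega : 1 < b))).comp
      ((tendsto_pow_atTop_atTop_of_one_lt one_lt_two).comp (tendsto_add_atTop_nat 3))
  refine (finite_setOf_abs_sub_lt_one_div_rpow (by linarith) ?_).subset fun _ h => ⟨h.1, h.2.2⟩
  refine eventually_one_div_rpow_le_abs_sub_of_approx
    (r := fun m => tmApprox (b⁻¹ : ℚ) (m + 3)) (c₁ := 1 / 8) (c₂ := 5) (c₃ := 1 / b)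
    (by norm_num) (by norm_num) (by positivity) (fun m => by positivity) (fun m => ?_) hY
    (fun m => ?_) (fun m => ?_) (fun m => ?_) (fun m => ?_) hτ
  · rw [pow_succ 2 (m + 3), pow_mul]
  · exact_mod_cast den_tmApprox_le hb (m + 3)
  · rw [one_div, inv_mul_le_iff₀ hb0]
    exact_mod_cast pow_two_pow_le_mul_den_tmApprox hb (m + 3)
  · rw [cast_tmApprox_inv, hξ']
    convert le_abs_tmSeries_sub_tmApprox (by positivity) hx (by omega : 3 ≤ m + 3) using 1
    rw [inv_pow]
    ring
  · rw [cast_tmApprox_inv, hξ']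
    convert abs_tmSeries_sub_tmApprox_le (by positivity) hx (m + 3) using 1
    rw [inv_pow]
    ring
end

section
/- Let σ be the Thue–Morse morphism (0 ↦ 01, 1 ↦ 10) and let a be its fixed point starting with 0. Then for every n ≥ 2, the word σ^n(011)·σ^n(01)·0110 (equivalently (σ^n(011))^{5/3}·0110) is a prefix of a. -/
/-- The Thue–Morse morphism `0 ↦ 01`, `1 ↦ 10`, extended to words. -/
def tmMorph (L : List (Fin 2)) : List (Fin 2) :=
  L.flatMap fun c => if c = 0 then [0, 1] else [1, 0]

/-!
Since `a` is a fixed point of `σ` with `a 0 = 0`, every `σ^m(0)` is a prefix of `a`.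
As `010` occurs in `σ^3(0) = 01101001` right after `011`, applying `σ^n` shows that
`σ^n(011) σ^n(01) σ^n(0)` is a prefix of `a`, and for `n ≥ 2` the block `σ^n(0)` begins with
`σ^2(0) = 0110`.
-/

theorem IsPrefixSeq.of_prefix {A : Type*} {L M : List A} {u : ℕ → A}
    (hLM : L <+: M) (hM : IsPrefixSeq M u) : IsPrefixSeq L u := by
  obtain ⟨t, rfl⟩ := hLM
  intro i hi
  rw [← List.getElem?_append_left hi]
  exact hM i (by rw [List.length_append]; omega)

theorem tmMorph_append (L M : List (Fin 2)) : tmMorph (L ++ M) = tmMorph L ++ tmMorph M :=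
  List.flatMap_append

theorem tmMorph_iterate_append (n : ℕ) (L M : List (Fin 2)) :
    tmMorph^[n] (L ++ M) = tmMorph^[n] L ++ tmMorph^[n] M := by
  induction n generalizing L M with
  | zero => rfl
  | succ n ih => simp only [Function.iterate_succ_apply, tmMorph_append, ih]

theorem List.IsPrefix.tmMorph_iterate {L M : List (Fin 2)} (h : L <+: M) (n : ℕ) :
    tmMorph^[n] L <+: tmMorph^[n] M := by
  obtain ⟨t, rfl⟩ := h
  rw [tmMorph_iterate_append]
  exact List.prefix_append _ _

theorem tmMorph_iterate_prefix_of_le {L : List (Fin 2)} (h : L <+: tmMorph L) {m n : ℕ}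
    (hmn : m ≤ n) : tmMorph^[m] L <+: tmMorph^[n] L := by
  induction n, hmn using Nat.le_induction with
  | base => exact List.prefix_refl _
  | succ n _ ih =>
    rw [Function.iterate_succ_apply]
    exact ih.trans (h.tmMorph_iterate n)

theorem length_tmMorph (L : List (Fin 2)) : (tmMorph L).length = 2 * L.length := by
  induction L with
  | nil => rfl
  | cons c L ih =>
    rw [tmMorph, List.flatMap_cons, List.length_append, ← tmMorph, ih]
    split <;> simp only [List.length_cons, List.length_nil] <;> ring

theorem getElem?_tmMorph (L : List (Fin 2)) (i : ℕ) :
    (tmMorph L)[2 * i]? = L[i]? ∧ (tmMorph L)[2 * i + 1]? = L[i]?.map (1 - ·) := by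
  induction L generalizing i with
  | nil => simp [tmMorph]
  | cons c L ih =>
    have hcons : tmMorph (c :: L) = (if c = 0 then [0, 1] else [1, 0]) ++ tmMorph L :=
      List.flatMap_cons
    rw [hcons]
    cases i with
    | zero => fin_cases c <;> simp
    | succ i =>
      have hlen : (if c = 0 then [0, 1] else [1, 0] : List (Fin 2)).length = 2 := by split <;> rfl
      rw [mul_add, mul_one, List.getElem?_append_right (by omega),
        List.getElem?_append_right (by omega), hlen,
        show 2 * i + 2 + 1 - 2 = 2 * i + 1 by omega, Nat.add_sub_cancel, List.getElem?_cons_succ]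
      exact ih i

theorem IsPrefixSeq.tmMorph {a : ℕ → Fin 2} (heven : ∀ n, a (2 * n) = a n)
    (hodd : ∀ n, a (2 * n + 1) = 1 - a n) {L : List (Fin 2)} (hL : IsPrefixSeq L a) :
    IsPrefixSeq (tmMorph L) a := by
  intro i hi
  rw [length_tmMorph] at hi
  obtain ⟨j, rfl | rfl⟩ := Nat.even_or_odd' i
  · rw [(getElem?_tmMorph L j).1, heven]
    exact hL j (by omega)
  · rw [(getElem?_tmMorph L j).2, hL j (by omega), hodd, Option.map_some]

theorem isPrefixSeq_tmMorph_iterate_zero {a : ℕ → Fin 2} (heven : ∀ n, a (2 * n) = a n)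
    (hodd : ∀ n, a (2 * n + 1) = 1 - a n) (h0 : a 0 = 0) (m : ℕ) :
    IsPrefixSeq (tmMorph^[m] [0]) a := by
  induction m with
  | zero => intro i hi; simp_all
  | succ m ih =>
    rw [Function.iterate_succ_apply']
    exact ih.tmMorph heven hodd

theorem stmt7 (a : ℕ → Fin 2)
    -- `a` is the fixed point of the Thue–Morse morphism starting with `0`
    (h0 : a 0 = 0) (heven : ∀ n, a (2 * n) = a n) (hodd : ∀ n, a (2 * n + 1) = 1 - a n)
    (n : ℕ) (hn : 2 ≤ n) :
    IsPrefixSeq (tmMorph^[n] [0, 1, 1] ++ tmMorph^[n] [0, 1] ++ [0, 1, 1, 0]) a := by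
  have h0110 : [0, 1, 1, 0] <+: tmMorph^[n] [0] :=
    tmMorph_iterate_prefix_of_le (L := [0]) ⟨[1], rfl⟩ hn
  have h011010 : ([0, 1, 1] ++ [0, 1] ++ [0] : List (Fin 2)) <+: tmMorph^[3] [0] :=
    ⟨[0, 1], rfl⟩
  refine IsPrefixSeq.of_prefix ?_ (isPrefixSeq_tmMorph_iterate_zero heven hodd h0 (n + 3))
  rw [Function.iterate_add_apply]
  refine List.IsPrefix.trans ?_ (h011010.tmMorph_iterate n)
  rw [tmMorph_iterate_append, tmMorph_iterate_append]
  exact (List.prefix_append_right_inj _).2 h0110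
end

section
/- Let β > 1 be a Pisot or Salem number of degree l, let U, V be finite words over {0,…,⌊β⌋} of lengths r and s ≥ 1, and let α = Σ_{n≥1} a_n β^{−n} where (a_n) is the eventually periodic sequence with preperiod U and period V. Let ξ ∈ (0,1) have β-expansion (greedy expansion) 0.b_1 b_2 …, and suppose there exists j > r + s with a_n = b_n for 1 ≤ n < j and a_j ≠ b_j. Then |ξ − α| > 1 / ((s+1)^{l−1} β^{j+s+l−1}). -/
/-!
Let `j` be the first position where the digits differ, `t_j ∈ [0, 1)` the greedy remainder of `ξ`
after `j` digits and `ρ` the value of the tail of `α` after position `j`, so that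
`β^j (ξ - α) = (b_j - a_j) + t_j - ρ`. Put `d = b_j - a_j` and `p = ∑_{i<s} b_{j-i} β^i`. Since the
preperiod ends before `j - s`, the digits `b_{j-s+1}, …, b_{j-1}` coincide with
`a_{j+1}, …, a_{j+s-1}`, which gives `(β^s - 1) ρ = p - d`, while the greedy condition at
position `j - s` reads `β^s - p > t_j ≥ 0`.

If `d < 0` then `(β^s - 1) ρ ≥ 1`, hence `|ξ - α| > β^{-j-s}`. If `d > 0` then
`(β^s - 1)(d + t_j - ρ) ≥ β^s - p`, and it remains to show `β^s - p ≥ ((s+1)β)^{1-l}`. Here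
`β^s - p = R(β)` for an integer polynomial `R` of degree `s` whose coefficients are bounded by
`⌊β⌋`, so `|R(z)| ≤ (s+1)β` at every conjugate `z ≠ β` of `β`. The product of `R` over all
conjugates is the resultant `Res(P, R)`, a nonzero integer, and therefore
`|R(β)| ≥ ((s+1)β)^{1-l}`.
-/

open Polynomial Finset

lemma Finset.sum_range_eq_add_sub_of_eq {M : Type*} [AddCommGroup M] {f g : ℕ → M} {n : ℕ}
    (hn : 0 < n) (hfg : ∀ i, 1 ≤ i → i < n → f i = g i) :
    ∑ i ∈ range n, f i = ∑ i ∈ range n, g i + (f 0 - g 0) := by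
  obtain ⟨n, rfl⟩ := Nat.exists_eq_add_of_lt hn
  rw [sum_range_succ', sum_range_succ', sum_congr rfl fun i hi => hfg (i + 1) (by omega)
    (by simp at hi; omega)]
  abel

section DigitRecursion

variable {β : ℝ} {x y d e : ℕ → ℝ}

lemma pow_mul_eq_sum_add (h : ∀ m, β * x m = d (m + 1) + x (m + 1)) (m n : ℕ) :
    β ^ n * x m = ∑ i ∈ range n, d (m + n - i) * β ^ i + x (m + n) := by
  induction n with
  | zero => simp
  | succ n ih =>
    rw [sum_range_succ', pow_succ', mul_assoc, ih, mul_add, mul_sum, ← add_assoc m n 1, h]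
    simp only [Nat.add_sub_add_right, Nat.sub_zero, pow_zero, mul_one, pow_succ']
    rw [sum_congr rfl fun i _ => mul_left_comm β _ _]
    ring

lemma pow_mul_sub_eq_of_digits_agree (hx : ∀ m, β * x m = d (m + 1) + x (m + 1))
    (hy : ∀ m, β * y m = e (m + 1) + y (m + 1)) {j : ℕ} (hj : 0 < j)
    (hagree : ∀ n, 1 ≤ n → n < j → d n = e n) :
    β ^ j * (x 0 - y 0) = d j - e j + (x j - y j) := by
  have hsum := Finset.sum_range_eq_add_sub_of_eq (f := fun i => d (0 + j - i) * β ^ i)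
    (g := fun i => e (0 + j - i) * β ^ i) hj fun i hi1 hi2 => by
      simp only [hagree (0 + j - i) (by omega) (by omega)]
  rw [mul_sub, pow_mul_eq_sum_add hx, pow_mul_eq_sum_add hy, hsum]
  simp only [zero_add, Nat.sub_zero, pow_zero, mul_one]
  ring

end DigitRecursion

noncomputable def expansionTail (β : ℝ) (c : ℕ → ℝ) (m : ℕ) : ℝ :=
  ∑' k, c (m + k + 1) / β ^ (k + 1)

section ExpansionTail

variable {β B : ℝ} {c : ℕ → ℝ}

lemma summable_div_pow_succ (hβ : 1 < β) (hc : ∀ n, |c n| ≤ B) :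
    Summable fun k => c k / β ^ (k + 1) := by
  have hβ0 : 0 < β := by linarith
  refine Summable.of_norm_bounded
    ((summable_geometric_of_lt_one (by positivity) (inv_lt_one_of_one_lt₀ hβ)).mul_left B)
    fun k => ?_
  calc ‖c k / β ^ (k + 1)‖ = |c k| / β ^ (k + 1) := by
        rw [Real.norm_eq_abs, abs_div, abs_of_pos (pow_pos hβ0 _)]
    _ ≤ B / β ^ k := div_le_div₀ ((abs_nonneg _).trans (hc k)) (hc k) (by positivity)
        (pow_le_pow_right₀ hβ.le k.le_succ)
    _ = B * β⁻¹ ^ k := by rw [inv_pow, div_eq_mul_inv]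

lemma mul_expansionTail (hβ : 1 < β) (hc : ∀ n, |c n| ≤ B) (m : ℕ) :
    β * expansionTail β c m = c (m + 1) + expansionTail β c (m + 1) := by
  have hβ0 : β ≠ 0 := by positivity
  rw [expansionTail, (summable_div_pow_succ hβ fun n => hc (m + n + 1)).tsum_eq_zero_add,
    mul_add, ← tsum_mul_left, expansionTail]
  congr 1
  · rw [add_zero, zero_add, pow_one, mul_div_cancel₀ _ hβ0]
  · refine tsum_congr fun k => ?_
    rw [show m + (k + 1) + 1 = m + 1 + k + 1 by omega, pow_succ' β (k + 1)]
    field_simp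

lemma pow_sub_one_mul_expansionTail (hβ : 1 < β) (hc : ∀ n, |c n| ≤ B) {r s m : ℕ}
    (hper : ∀ n, r < n → c (n + s) = c n) (hm : r ≤ m) :
    (β ^ s - 1) * expansionTail β c m = ∑ i ∈ range s, c (m + s - i) * β ^ i := by
  have hshift : expansionTail β c (m + s) = expansionTail β c m := by
    refine tsum_congr fun k => ?_
    rw [show m + s + k + 1 = m + k + 1 + s by omega, hper _ (by omega)]
  have h := pow_mul_eq_sum_add (mul_expansionTail hβ hc) m s
  rw [hshift] at h
  linear_combination h

lemma pow_sub_one_mul_expansionTail_eq_of_agree (hβ : 1 < β) (hc : ∀ n, |c n| ≤ B) {r s m : ℕ}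
    (hs : 0 < s) (hper : ∀ n, r < n → c (n + s) = c n) (hm : r + s ≤ m) {b : ℕ → ℝ}
    (hbc : ∀ n, m - s < n → n < m → b n = c n) :
    (β ^ s - 1) * expansionTail β c m = ∑ i ∈ range s, b (m - i) * β ^ i - (b m - c m) := by
  rw [pow_sub_one_mul_expansionTail hβ hc hper (by omega),
    Finset.sum_range_eq_add_sub_of_eq (g := fun i => b (m - i) * β ^ i) hs fun i hi1 hi2 => by
      rw [show m + s - i = m - i + s by omega, hper _ (by omega), hbc _ (by omega) (by omega)]]
  simp only [Nat.sub_zero, pow_zero, mul_one, hper m (by omega)]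
  ring

end ExpansionTail

noncomputable def betaTransform (β x : ℝ) : ℝ := β * x - ⌊β * x⌋

section BetaTransform

variable {β ξ : ℝ} {bdig : ℕ → ℤ}

lemma iterate_betaTransform_mem_Ico (hξ : ξ ∈ Set.Ico 0 1) (n : ℕ) :
    (betaTransform β)^[n] ξ ∈ Set.Ico 0 1 := by
  cases n with
  | zero => exact hξ
  | succ n =>
    rw [Function.iterate_succ_apply']
    exact ⟨Int.fract_nonneg _, Int.fract_lt_one _⟩

lemma mul_iterate_betaTransform (hbdig : ∀ n, bdig (n + 1) = ⌊β * (betaTransform β)^[n] ξ⌋)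
    (n : ℕ) : β * (betaTransform β)^[n] ξ = bdig (n + 1) + (betaTransform β)^[n + 1] ξ := by
  rw [Function.iterate_succ_apply', betaTransform, hbdig]
  ring

lemma greedyDigit_mem_Icc (hβ : 0 ≤ β) (hξ : ξ ∈ Set.Ico 0 1)
    (hbdig : ∀ n, bdig (n + 1) = ⌊β * (betaTransform β)^[n] ξ⌋) {n : ℕ} (hn : 1 ≤ n) :
    (bdig n : ℝ) ∈ Set.Icc 0 β := by
  obtain ⟨m, rfl⟩ := Nat.exists_eq_add_of_le' hn
  have hx := iterate_betaTransform_mem_Ico (β := β) hξ m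
  rw [hbdig]
  exact ⟨Int.cast_nonneg (Int.floor_nonneg.mpr (mul_nonneg hβ hx.1)),
    (Int.floor_le _).trans (mul_le_of_le_one_right hβ hx.2.le)⟩

end BetaTransform

section ResultantBound

variable {P R : ℤ[X]} {β : ℝ}

lemma resultant_ne_zero_of_aeval_ne_zero (hirr : Irreducible (P.map (algebraMap ℤ ℚ)))
    (hPβ : aeval β P = 0) (hRβ : aeval β R ≠ 0) : P.resultant R ≠ 0 := by
  have hcop : IsCoprime (P.map (algebraMap ℤ ℚ)) (R.map (algebraMap ℤ ℚ)) := by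
    refine (hirr.isCoprime_or_dvd _).resolve_right ?_
    rintro ⟨q, hq⟩
    have h := congrArg (aeval β) hq
    rw [aeval_map_algebraMap, map_mul, aeval_map_algebraMap, hPβ, zero_mul] at h
    exact hRβ h
  intro h
  have hℚ := resultant_map_map P R P.natDegree R.natDegree (algebraMap ℤ ℚ)
  rw [h, map_zero, ← natDegree_map_eq_of_injective (algebraMap ℤ ℚ).injective_int P,
    ← natDegree_map_eq_of_injective (algebraMap ℤ ℚ).injective_int R] at hℚ
  exact (resultant_eq_zero_iff.mp hℚ).2 hcop

lemma resultant_eq_prod_roots_aeval (hP : P.Monic) :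
    (P.resultant R : ℂ) = ((P.map (algebraMap ℤ ℂ)).roots.map fun z => aeval z R).prod := by
  have h := resultant_eq_prod_eval (P.map (algebraMap ℤ ℂ)) (R.map (algebraMap ℤ ℂ)) R.natDegree
    natDegree_map_le (IsAlgClosed.splits _)
  rw [(hP.map _).leadingCoeff, one_pow, one_mul, hP.natDegree_map, resultant_map_map] at h
  simp only [eval_map_algebraMap] at h
  exact h

lemma aeval_ofReal_of_int (p : ℤ[X]) (x : ℝ) : aeval (x : ℂ) p = (aeval x p : ℂ) :=
  aeval_algebraMap_apply ℂ x p

theorem one_le_abs_aeval_mul_pow {l : ℕ} (hP : P.Monic)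
    (hirr : Irreducible (P.map (algebraMap ℤ ℚ))) (hdeg : P.natDegree = l)
    (hPβ : aeval β P = 0) (hRβ : aeval β R ≠ 0) {M : ℝ}
    (hM : ∀ z : ℂ, aeval z P = 0 → z ≠ β → ‖aeval z R‖ ≤ M) :
    1 ≤ |aeval β R| * M ^ (l - 1) := by
  classical
  set Z := (P.map (algebraMap ℤ ℂ)).roots
  have hP0 : P.map (algebraMap ℤ ℂ) ≠ 0 := (hP.map _).ne_zero
  have hmemZ : ∀ z, z ∈ Z ↔ aeval z P = 0 := fun z => by
    rw [mem_roots hP0, IsRoot, eval_map_algebraMap]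
  have hnodup : Z.Nodup := by
    refine nodup_roots ?_
    have h := hirr.separable.map (f := algebraMap ℚ ℂ)
    rwa [Polynomial.map_map, ← IsScalarTower.algebraMap_eq] at h
  have hβZ : (β : ℂ) ∈ Z := by
    rw [hmemZ, aeval_ofReal_of_int, hPβ, Complex.ofReal_zero]
  have hcard : (Z.erase (β : ℂ)).card = l - 1 := by
    rw [Multiset.card_erase_of_mem hβZ, ← (IsAlgClosed.splits _).natDegree_eq_card_roots,
      hP.natDegree_map, hdeg, Nat.pred_eq_sub_one]
  have hres : (1 : ℝ) ≤ ‖(P.resultant R : ℂ)‖ := by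
    rw [Complex.norm_intCast]
    exact_mod_cast Int.one_le_abs (resultant_ne_zero_of_aeval_ne_zero hirr hPβ hRβ)
  have hrest : ‖((Z.erase (β : ℂ)).map fun z => aeval z R).prod‖ ≤ M ^ (l - 1) := by
    rw [← hcard, ← Multiset.prod_replicate, ← Multiset.map_const']
    refine (map_multiset_prod (normHom : ℂ →*₀ ℝ) _).trans_le ?_
    rw [Multiset.map_map]
    refine Multiset.prod_map_le_prod_map₀ _ _ (fun _ _ => norm_nonneg (E := ℂ) _) fun z hz => ?_
    obtain ⟨hzβ, hzZ⟩ := (hnodup.mem_erase_iff).mp hz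
    exact hM z ((hmemZ z).mp hzZ) hzβ
  calc 1 ≤ ‖(P.resultant R : ℂ)‖ := hres
    _ = |aeval β R| * ‖((Z.erase (β : ℂ)).map fun z => aeval z R).prod‖ := by
      rw [resultant_eq_prod_roots_aeval hP, ← Multiset.prod_map_erase hβZ, norm_mul,
        aeval_ofReal_of_int, Complex.norm_real, Real.norm_eq_abs]
    _ ≤ |aeval β R| * M ^ (l - 1) := by gcongr

end ResultantBound

lemma norm_pow_sub_sum_le {z : ℂ} (hz : ‖z‖ ≤ 1) {c : ℕ → ℂ} {B : ℝ} {s : ℕ}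
    (hc : ∀ i < s, ‖c i‖ ≤ B) :
    ‖z ^ s - ∑ i ∈ range s, c i * z ^ i‖ ≤ 1 + s * B := by
  calc ‖z ^ s - ∑ i ∈ range s, c i * z ^ i‖ ≤ ‖z ^ s‖ + ∑ i ∈ range s, ‖c i * z ^ i‖ :=
        (norm_sub_le _ _).trans (by gcongr; exact norm_sum_le _ _)
    _ ≤ 1 + ∑ _i ∈ range s, B := by
        rw [norm_pow]
        gcongr with i hi
        · exact pow_le_one₀ (norm_nonneg _) hz
        · rw [norm_mul, norm_pow]
          exact (mul_le_of_le_one_right (norm_nonneg _) (pow_le_one₀ (norm_nonneg _) hz)).trans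
            (hc i (mem_range.mp hi))
    _ = 1 + s * B := by simp

lemma one_le_abs_pow_sub_sum_mul_pow {β : ℝ} (hβ : 1 ≤ β) {l : ℕ} {P : ℤ[X]} (hmonic : P.Monic)
    (hdeg : P.natDegree = l) (hroot : aeval β P = 0) (hirr : Irreducible P)
    (hconj : ∀ z : ℂ, aeval z P = 0 → z ≠ (β : ℂ) → ‖z‖ ≤ 1) {s : ℕ} {w : ℕ → ℤ}
    (hw : ∀ i < s, |(w i : ℝ)| ≤ β) (hne : β ^ s - ∑ i ∈ range s, w i * β ^ i ≠ 0) :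
    1 ≤ |β ^ s - ∑ i ∈ range s, w i * β ^ i| * ((s + 1) * β) ^ (l - 1) := by
  set R : ℤ[X] := X ^ s - ∑ i ∈ range s, C (w i) * X ^ i
  have haeval : ∀ {A : Type} [CommRing A] [Algebra ℤ A] (z : A),
      aeval z R = z ^ s - ∑ i ∈ range s, (w i : A) * z ^ i := fun z => by simp [R]
  have hirrℚ : Irreducible (P.map (algebraMap ℤ ℚ)) :=
    (IsPrimitive.Int.irreducible_iff_irreducible_map_cast hmonic.isPrimitive).mp hirr
  rw [← haeval] at hne ⊢
  refine one_le_abs_aeval_mul_pow hmonic hirrℚ hdeg hroot hne fun z hz hzβ => ?_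
  rw [haeval]
  refine (norm_pow_sub_sum_le (B := β) (hconj z hz hzβ) fun i hi => ?_).trans (by linarith)
  rw [Complex.norm_intCast]
  exact hw i hi

-- `B = β^s`; `tu`, `tj` are the greedy remainders at positions `j - s` and `j`, `ρ` the tail of `α`
-- after position `j`, `d = b_j - a_j` and `p = ∑_{i<s} b_{j-i} β^i`.
lemma one_div_mul_lt_abs_of_greedy_periodic {B p tu tj ρ d M : ℝ} (hB : 1 < B) (htu : tu < 1)
    (htj : tj ∈ Set.Ico 0 1) (hp : 0 ≤ p) (hd : d ≤ -1 ∨ 1 ≤ d) (hgreedy : B * tu = p + tj)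
    (hper : (B - 1) * ρ = p - d) (hM : 1 ≤ M) (hnorm : B - p ≠ 0 → 1 ≤ |B - p| * M) :
    1 / (M * B) < |d + tj - ρ| := by
  have hB0 : 0 < B := by linarith
  have hpos : 0 < B - p := by nlinarith [mul_pos hB0 (show 0 < 1 - tu by linarith), htj.1]
  have hK1 : 1 / M ≤ 1 := div_le_one_of_le₀ hM (by linarith)
  have hKp : 1 / M ≤ B - p := by
    rw [div_le_iff₀ (by linarith), ← abs_of_pos hpos]
    exact hnorm hpos.ne'
  rw [← div_div, div_lt_iff₀ hB0]
  rcases hd with hd | hd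
  · have hρ : 1 ≤ (B - 1) * ρ := by linarith
    have hρ0 : 0 < ρ := pos_of_mul_pos_right (one_pos.trans_le hρ) (by linarith)
    rw [abs_of_neg (by linarith [htj.2])]
    nlinarith [mul_pos (show 0 < -d - tj by linarith [htj.2]) hB0]
  · have hlow : B - p ≤ (B - 1) * (d + tj - ρ) := by
      nlinarith [mul_nonneg (show 0 ≤ B - 1 by linarith) htj.1,
        mul_nonneg hB0.le (show 0 ≤ d - 1 by linarith)]
    have hy : 0 < d + tj - ρ := pos_of_mul_pos_right (hpos.trans_le hlow) (by linarith)
    rw [abs_of_pos hy]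
    nlinarith

theorem stmt13 (β : ℝ) (hβ : 1 < β) (l : ℕ)
    -- `β` is a Pisot or Salem number of degree `l`: a real algebraic integer `> 1`
    -- all of whose conjugates lie in the closed unit disc
    (P : Polynomial ℤ) (hmonic : P.Monic) (hdeg : P.natDegree = l)
    (hroot : aeval β P = 0) (hirr : Irreducible P)
    (hconj : ∀ z : ℂ, aeval z P = 0 → z ≠ (β : ℂ) → ‖z‖ ≤ 1)
    (r s : ℕ) (hs : 1 ≤ s)
    -- `(a_n)` is eventually periodic with preperiod of length `r` and period of length `s`,
    -- with digits in `{0,…,⌊β⌋}`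
    (a : ℕ → ℕ) (ha : ∀ n, (a n : ℤ) ≤ ⌊β⌋)
    (hper : ∀ n, r < n → a (n + s) = a n)
    (α : ℝ) (hα : α = ∑' n : ℕ, (a (n + 1) : ℝ) / β ^ (n + 1))
    (ξ : ℝ) (hξ0 : 0 < ξ) (hξ1 : ξ < 1)
    -- `(b_n)` is the digit sequence of the greedy `β`-expansion of `ξ`
    (bdig : ℕ → ℤ)
    (hbdig : ∀ n : ℕ, bdig (n + 1) = ⌊β * ((fun x => β * x - ⌊β * x⌋)^[n] ξ)⌋)
    (j : ℕ) (hj : r + s < j)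
    (hagree : ∀ n, 1 ≤ n → n < j → (a n : ℤ) = bdig n)
    (hdiff : (a j : ℤ) ≠ bdig j) :
    1 / ((s + 1 : ℝ) ^ (l - 1) * β ^ (j + s + l - 1)) < |ξ - α| := by
  have hl : 0 < l := hdeg ▸ natDegree_pos_of_aeval_root hmonic.ne_zero hroot
    fun x hx => (algebraMap ℤ ℝ).injective_int (hx.trans (map_zero _).symm)
  obtain ⟨u, rfl⟩ : ∃ u, j = u + s := ⟨j - s, by omega⟩
  set t : ℕ → ℝ := fun n => (betaTransform β)^[n] ξ
  set b : ℕ → ℝ := fun n => (bdig n : ℝ)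
  set c : ℕ → ℝ := fun n => (a n : ℝ)
  set ρ := expansionTail β c
  have ht : ∀ n, t n ∈ Set.Ico 0 1 := iterate_betaTransform_mem_Ico ⟨hξ0.le, hξ1⟩
  have hb : ∀ n, 1 ≤ n → b n ∈ Set.Icc 0 β := fun n =>
    greedyDigit_mem_Icc (by linarith) ⟨hξ0.le, hξ1⟩ hbdig
  have hc : ∀ n, |c n| ≤ β := fun n => by
    rw [abs_of_nonneg (Nat.cast_nonneg _)]
    exact (Int.cast_le.mpr (ha n)).trans (Int.floor_le β)
  have hcper : ∀ n, r < n → c (n + s) = c n := fun n hn => by simp only [c, hper n hn]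
  have hagreeℝ : ∀ n, 1 ≤ n → n < u + s → b n = c n := fun n h1 h2 => by
    simp only [b, c, ← hagree n h1 h2, Int.cast_natCast]
  set p := ∑ i ∈ range s, b (u + s - i) * β ^ i
  set d := b (u + s) - c (u + s)
  have hkey : β ^ (u + s) * (ξ - α) = d + t (u + s) - ρ (u + s) := by
    rw [show α = ρ 0 by simp [hα, ρ, expansionTail, c], show ξ = t 0 from rfl,
      pow_mul_sub_eq_of_digits_agree (mul_iterate_betaTransform hbdig) (mul_expansionTail hβ hc)
        (by omega) hagreeℝ]
    ring
  have hgreedy : β ^ s * t u = p + t (u + s) :=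
    pow_mul_eq_sum_add (mul_iterate_betaTransform hbdig) u s
  have hperiodic : (β ^ s - 1) * ρ (u + s) = p - d :=
    pow_sub_one_mul_expansionTail_eq_of_agree hβ hc (by omega) hcper (by omega)
      fun n h1 h2 => hagreeℝ n (by omega) h2
  have hd : d ≤ -1 ∨ 1 ≤ d := by
    have : bdig (u + s) - a (u + s) ≤ -1 ∨ 1 ≤ bdig (u + s) - a (u + s) := by omega
    simp only [d, b, c]
    exact_mod_cast this
  have hgap := one_div_mul_lt_abs_of_greedy_periodic (one_lt_pow₀ hβ (by omega)) (ht u).2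
    (ht (u + s)) (sum_nonneg fun i hi => mul_nonneg (hb _ (by simp at hi; omega)).1 (by positivity))
    hd hgreedy hperiodic (one_le_pow₀ (by nlinarith))
    (one_le_abs_pow_sub_sum_mul_pow hβ.le hmonic hdeg hroot hirr hconj
      (w := fun i => bdig (u + s - i))
      fun i hi => (abs_of_nonneg (hb _ (by omega)).1).trans_le (hb _ (by omega)).2)
  calc 1 / ((s + 1 : ℝ) ^ (l - 1) * β ^ (u + s + s + l - 1))
      = 1 / (((s + 1) * β) ^ (l - 1) * β ^ s) / β ^ (u + s) := by
        rw [show u + s + s + l - 1 = (l - 1) + s + (u + s) by omega, pow_add, pow_add, mul_pow]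
        field_simp
    _ < |d + t (u + s) - ρ (u + s)| / β ^ (u + s) := by gcongr
    _ = |ξ - α| := by
        rw [← hkey, abs_mul, abs_of_pos (by positivity), mul_div_cancel_left₀ _ (by positivity)]
end

section
/- Let β be a real algebraic integer > 1 of degree l all of whose conjugates have modulus ≤ 1 (a Pisot or Salem number), and let Q be a nonzero integer polynomial of degree s with coefficients of absolute value at most ⌊β⌋ such that Q(β) > 0. Then Q(β) ≥ ((s+1)β)^{−(l−1)}. -/
/-!
`Q(β)` is a nonzero algebraic integer of `ℚ(β)`, so its norm `∏ⱼ Q(βⱼ)` is a nonzero rational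
integer and has absolute value at least `1`. Each factor with `j ≥ 2` is the value of `Q` at a
point of the closed unit disc, hence has modulus at most `(s + 1)⌊β⌋ ≤ (s + 1)β`; therefore
`1 ≤ Q(β) ((s + 1)β)^(l - 1)`.
-/

open Polynomial IntermediateField

theorem Fintype.prod_le_mul_pow_card_sub_one {ι R : Type*} [Fintype ι] [DecidableEq ι]
    [CommSemiring R] [PartialOrder R] [IsOrderedRing R] {f : ι → R} (hf : ∀ i, 0 ≤ f i)
    (a : ι) {C : R} (hC : ∀ i, i ≠ a → f i ≤ C) :
    ∏ i, f i ≤ f a * C ^ (Fintype.card ι - 1) := by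
  rw [← Finset.mul_prod_erase Finset.univ f (Finset.mem_univ a), Fintype.card,
    ← Finset.card_erase_of_mem (Finset.mem_univ a), ← Finset.prod_const]
  exact mul_le_mul_of_nonneg_left (Finset.prod_le_prod (fun i _ => hf i)
    fun i hi => hC i (Finset.ne_of_mem_erase hi)) (hf a)

theorem Polynomial.isIntegral_aeval {R A : Type*} [CommRing R] [CommRing A] [Algebra R A]
    {x : A} (hx : IsIntegral R x) (Q : R[X]) : IsIntegral R (aeval x Q) := by
  simpa only [aeval_subalgebra_coe, mem_integralClosure_iff] using
    (aeval (⟨x, hx⟩ : integralClosure R A) Q).2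

theorem Polynomial.norm_aeval_le_of_norm_le_one (Q : ℤ[X]) {B : ℝ}
    (hB : ∀ i, |(Q.coeff i : ℝ)| ≤ B) {z : ℂ} (hz : ‖z‖ ≤ 1) :
    ‖aeval z Q‖ ≤ (Q.natDegree + 1) * B := by
  rw [aeval_eq_sum_range]
  calc ‖∑ i ∈ Finset.range (Q.natDegree + 1), Q.coeff i • z ^ i‖
      ≤ ∑ i ∈ Finset.range (Q.natDegree + 1), ‖Q.coeff i • z ^ i‖ := norm_sum_le _ _
    _ ≤ ∑ _i ∈ Finset.range (Q.natDegree + 1), B := by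
      gcongr with i
      rw [zsmul_eq_mul, norm_mul, norm_pow, Complex.norm_intCast]
      exact (mul_le_of_le_one_right (abs_nonneg _) (pow_le_one₀ (norm_nonneg z) hz)).trans (hB i)
    _ = (Q.natDegree + 1) * B := by simp

theorem one_le_prod_norm_embeddings {K : Type*} [Field K] [Algebra ℚ K] [FiniteDimensional ℚ K]
    {x : K} (hx : IsIntegral ℤ x) (hx0 : x ≠ 0) : 1 ≤ ∏ σ : K →ₐ[ℚ] ℂ, ‖σ x‖ := by
  obtain ⟨m, hm⟩ := IsIntegrallyClosed.isIntegral_iff.mp (Algebra.isIntegral_norm ℚ hx)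
  have hm0 : m ≠ 0 := by
    rintro rfl
    exact Algebra.norm_ne_zero_iff.mpr hx0 (by rw [← hm, map_zero])
  calc (1 : ℝ) ≤ |(m : ℝ)| := by exact_mod_cast Int.one_le_abs hm0
    _ = ‖algebraMap ℚ ℂ (Algebra.norm ℚ x)‖ := by simp [← hm]
    _ = ∏ σ : K →ₐ[ℚ] ℂ, ‖σ x‖ := by rw [Algebra.norm_eq_prod_embeddings ℚ ℂ, norm_prod]

theorem minpoly_rat_eq_map_of_monic_of_irreducible {L : Type*} [Field L] [CharZero L] {α : L}
    {P : ℤ[X]} (hmonic : P.Monic) (hirr : Irreducible P) (hroot : aeval α P = 0) :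
    minpoly ℚ α = P.map (algebraMap ℤ ℚ) :=
  (minpoly.eq_of_irreducible_of_monic
    (hmonic.irreducible_iff_irreducible_map_fraction_map.mp hirr)
    (by rw [aeval_map_algebraMap, hroot]) (hmonic.map _)).symm

theorem IntermediateField.algHom_adjoin_simple_ext {F E K : Type*} [Field F] [Field E]
    [Algebra F E] [Semiring K] [Algebra F K] {α : E} ⦃φ₁ φ₂ : F⟮α⟯ →ₐ[F] K⦄
    (h : φ₁ (AdjoinSimple.gen F α) = φ₂ (AdjoinSimple.gen F α)) : φ₁ = φ₂ :=
  adjoin_algHom_ext F fun x hx => by obtain rfl := Set.mem_singleton_iff.mp hx; exact h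

theorem one_le_norm_aeval_mul_pow_of_conj_le {β : ℂ} {P Q : ℤ[X]} (hmonic : P.Monic)
    (hirr : Irreducible P) (hroot : aeval β P = 0) (hQ : aeval β Q ≠ 0) {C : ℝ}
    (hC : ∀ z : ℂ, aeval z P = 0 → z ≠ β → ‖aeval z Q‖ ≤ C) :
    1 ≤ ‖aeval β Q‖ * C ^ (P.natDegree - 1) := by
  classical
  have hβℤ : IsIntegral ℤ β := ⟨P, hmonic, hroot⟩
  have hβℚ : IsIntegral ℚ β := hβℤ.tower_top
  have : FiniteDimensional ℚ ℚ⟮β⟯ := adjoin.finiteDimensional hβℚ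
  set γ := AdjoinSimple.gen ℚ β
  have hσ (σ : ℚ⟮β⟯ →ₐ[ℚ] ℂ) (R : ℤ[X]) : σ (aeval γ R) = aeval (σ γ) R :=
    (aeval_algHom_apply (σ.restrictScalars ℤ) γ R).symm
  have hval (R : ℤ[X]) : (ℚ⟮β⟯).val (aeval γ R) = aeval β R := hσ _ R
  have hσP (σ : ℚ⟮β⟯ →ₐ[ℚ] ℂ) : aeval (σ γ) P = 0 := by
    have hγP : aeval γ P = 0 :=
      (ℚ⟮β⟯).val.injective ((hval P).trans (hroot.trans (map_zero _).symm))
    rw [← hσ, hγP, map_zero]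
  have hγℤ : IsIntegral ℤ γ :=
    (isIntegral_algHom_iff ((ℚ⟮β⟯).val.restrictScalars ℤ) (ℚ⟮β⟯).val.injective).mp hβℤ
  have hx0 : aeval γ Q ≠ 0 := fun h => hQ (by rw [← hval, h, map_zero])
  have hcard : Fintype.card (ℚ⟮β⟯ →ₐ[ℚ] ℂ) = P.natDegree := by
    rw [AlgHom.card, adjoin.finrank hβℚ,
      minpoly_rat_eq_map_of_monic_of_irreducible hmonic hirr hroot, hmonic.natDegree_map]
  calc 1 ≤ ∏ σ : ℚ⟮β⟯ →ₐ[ℚ] ℂ, ‖σ (aeval γ Q)‖ :=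
        one_le_prod_norm_embeddings (isIntegral_aeval hγℤ Q) hx0
    _ ≤ ‖(ℚ⟮β⟯).val (aeval γ Q)‖ * C ^ (Fintype.card (ℚ⟮β⟯ →ₐ[ℚ] ℂ) - 1) :=
      Fintype.prod_le_mul_pow_card_sub_one (fun _ => norm_nonneg _) _ fun σ hσ₀ => by
        rw [hσ]; exact hC _ (hσP σ) fun h => hσ₀ (algHom_adjoin_simple_ext h)
    _ = ‖aeval β Q‖ * C ^ (P.natDegree - 1) := by rw [hval, hcard]

theorem stmt15_general (β : ℝ) (hβ : 1 < β) (l : ℕ)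
    -- `β` is a real algebraic integer `> 1` of degree `l` whose conjugates all have modulus `≤ 1`
    (P : Polynomial ℤ) (hmonic : P.Monic) (hdeg : P.natDegree = l)
    (hroot : aeval β P = 0) (hirr : Irreducible P)
    (hconj : ∀ z : ℂ, aeval z P = 0 → z ≠ (β : ℂ) → ‖z‖ ≤ 1)
    (s : ℕ) (Q : Polynomial ℤ) (hQdeg : Q.natDegree = s)
    (hQcoeff : ∀ i, |Q.coeff i| ≤ ⌊β⌋) (hQpos : 0 < aeval β Q) :
    1 / ((s + 1 : ℝ) * β) ^ (l - 1) ≤ aeval β Q := by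
  have hcast (R : ℤ[X]) : aeval (β : ℂ) R = (aeval β R : ℂ) := aeval_algebraMap_apply ℂ β R
  have hconjQ (z : ℂ) (hz : aeval z P = 0) (hzβ : z ≠ β) : ‖aeval z Q‖ ≤ (s + 1) * β :=
    calc ‖aeval z Q‖ ≤ (Q.natDegree + 1) * ⌊β⌋ :=
          norm_aeval_le_of_norm_le_one Q (fun i => by exact_mod_cast hQcoeff i) (hconj z hz hzβ)
      _ ≤ (s + 1) * β := by rw [hQdeg]; gcongr; exact Int.floor_le β
  have key := one_le_norm_aeval_mul_pow_of_conj_le hmonic hirr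
    (by rw [hcast, hroot, Complex.ofReal_zero]) (by rw [hcast]; exact_mod_cast hQpos.ne') hconjQ
  rw [hcast, Complex.norm_real, Real.norm_of_nonneg hQpos.le, hdeg] at key
  rw [div_le_iff₀ (by positivity)]
  exact key

theorem stmt15 (β : ℝ) (hβ : 1 < β) (l : ℕ)
    -- `β` is a real algebraic integer `> 1` of degree `l` whose conjugates all have modulus `≤ 1`
    (P : Polynomial ℤ) (hmonic : P.Monic) (hdeg : P.natDegree = l)
    (hroot : aeval β P = 0) (hirr : Irreducible P)
    (hconj : ∀ z : ℂ, aeval z P = 0 → z ≠ (β : ℂ) → ‖z‖ ≤ 1)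
    (s : ℕ) (Q : Polynomial ℤ) (hQ0 : Q ≠ 0) (hQdeg : Q.natDegree = s)
    (hQcoeff : ∀ i, |Q.coeff i| ≤ ⌊β⌋) (hQpos : 0 < aeval β Q) :
    1 / ((s + 1 : ℝ) * β) ^ (l - 1) ≤ aeval β Q :=
  stmt15_general β hβ l P hmonic hdeg hroot hirr hconj s Q hQdeg hQcoeff hQpos
end

section
/- Let M > 0, and let α = [0; a_1, a_2, …] and ξ = [0; b_1, b_2, …] be real numbers given by continued fractions whose partial quotients are all at most M. Suppose a_i = b_i for i = 1, …, n and a_{n+1} ≠ b_{n+1}. Then |ξ − α| ≥ 1 / ((M+2)^3 q_n^2), where q_n is the denominator of the n-th convergent of α. -/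
/-!
Let `α_{n+1}` be the complete quotient of `α`, so that
`α = (p_n α_{n+1} + p_{n-1}) / (q_n α_{n+1} + q_{n-1})`;
it is `-(q_{n-1} α - p_{n-1}) / (q_n α - p_n)`, which is positive because the convergents
alternate around `α`. Since `ξ` shares `p_n, q_n, p_{n-1}, q_{n-1}` with `α`, the determinant
identity `p_{n-1} q_n - p_n q_{n-1} = (-1)^n` gives
`|ξ - α| = |α_{n+1} - ξ_{n+1}| / ((q_n α_{n+1} + q_{n-1}) (q_n ξ_{n+1} + q_{n-1}))`.
From `α_m = a_m + 1 / α_{m+1}` and `1 ≤ a_i ≤ M`, every `α_m` is at most `M + 1` and lies in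
`[a_m, a_m + 1 - 1/(M+2)]`. So two complete quotients with different integer parts are
`1/(M+2)` apart, and each denominator is at most `(M + 2) q_n`.
-/

/-- Denominators of the convergents of `[0; a 1, a 2, …]`: `q₀ = 1`, `q₁ = a₁`,
`q_{n+2} = a_{n+2} q_{n+1} + q_n`. -/
def cfDen (a : ℕ → ℕ) : ℕ → ℕ
  | 0 => 1
  | 1 => a 1
  | (n + 2) => a (n + 2) * cfDen a (n + 1) + cfDen a n

/-- Numerators of the convergents of `[0; a 1, a 2, …]`. -/
def cfNum (a : ℕ → ℕ) : ℕ → ℕ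
  | 0 => 0
  | 1 => 1
  | (n + 2) => a (n + 2) * cfNum a (n + 1) + cfNum a n

open Filter Topology

theorem le_abs_sub_of_ne_of_mem_Icc {k l : ℕ} (hkl : k ≠ l) {s u ε : ℝ}
    (hs : s ∈ Set.Icc (k : ℝ) (k + 1 - ε)) (hu : u ∈ Set.Icc (l : ℝ) (l + 1 - ε)) :
    ε ≤ |s - u| := by
  rcases hkl.lt_or_gt with hlt | hlt
  · have : (k : ℝ) + 1 ≤ l := by exact_mod_cast hlt
    exact le_abs.2 (Or.inr (by linarith [hs.2, hu.1]))
  · have : (l : ℝ) + 1 ≤ k := by exact_mod_cast hlt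
    exact le_abs.2 (Or.inl (by linarith [hs.1, hu.2]))

/-- `x` and `y` are the images of `s` and `u` under one Möbius map `t ↦ (P t + P') / (Q t + R)`
with `P R - P' Q = -ε`. -/
theorem abs_sub_eq_of_mul_eq {Q P R x y s u ε : ℝ} (hQ : Q ≠ 0) (hε : |ε| = 1)
    (hs : 0 < Q * s + R) (hu : 0 < Q * u + R)
    (hx : (Q * x - P) * (Q * s + R) = ε) (hy : (Q * y - P) * (Q * u + R) = ε) :
    |y - x| = |s - u| / ((Q * s + R) * (Q * u + R)) := by
  have hdiff : y - x = ε * (s - u) / ((Q * s + R) * (Q * u + R)) := by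
    rw [eq_div_iff (mul_pos hs hu).ne']
    apply mul_left_cancel₀ hQ
    linear_combination (Q * s + R) * hy - (Q * u + R) * hx
  rw [hdiff, abs_div, abs_mul, hε, one_mul, abs_of_pos (mul_pos hs hu)]

namespace ContinuedFractionGap

variable {a : ℕ → ℕ}

theorem cfDen_pos (ha : ∀ i, 1 ≤ i → 1 ≤ a i) : ∀ m, 0 < cfDen a m
  | 0 => Nat.one_pos
  | 1 => ha 1 le_rfl
  | m + 2 => Nat.add_pos_left (Nat.mul_pos (ha _ (by omega)) (cfDen_pos ha (m + 1))) _

theorem cfDen_lt_cfDen_add_two (ha : ∀ i, 1 ≤ i → 1 ≤ a i) (m : ℕ) :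
    cfDen a m < cfDen a (m + 2) :=
  Nat.lt_add_of_pos_left (Nat.mul_pos (ha _ (by omega)) (cfDen_pos ha (m + 1)))

/-- `prevDen a m = q_{m-1}` and `prevNum a m = p_{m-1}`: the shift gives `q_{-1} = 0` and
`p_{-1} = 1` an index. -/
def prevDen (a : ℕ → ℕ) : ℕ → ℕ
  | 0 => 0
  | m + 1 => cfDen a m

def prevNum (a : ℕ → ℕ) : ℕ → ℕ
  | 0 => 1
  | m + 1 => cfNum a m

theorem prevDen_add_two (a : ℕ → ℕ) :
    ∀ m, prevDen a (m + 2) = a (m + 1) * prevDen a (m + 1) + prevDen a m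
  | 0 => by simp [prevDen, cfDen]
  | _ + 1 => rfl

theorem prevNum_add_two (a : ℕ → ℕ) :
    ∀ m, prevNum a (m + 2) = a (m + 1) * prevNum a (m + 1) + prevNum a m
  | 0 => by simp [prevNum, cfNum]
  | _ + 1 => rfl

theorem prevDen_le_prevDen_succ (ha : ∀ i, 1 ≤ i → 1 ≤ a i) :
    ∀ m, prevDen a m ≤ prevDen a (m + 1)
  | 0 => Nat.zero_le _
  | m + 1 => by
      rw [prevDen_add_two]
      exact Nat.le_add_right_of_le (Nat.le_mul_of_pos_left _ (ha _ (by omega)))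

theorem prevNum_mul_prevDen_sub (a : ℕ → ℕ) : ∀ m,
    (prevNum a m * prevDen a (m + 1) - prevNum a (m + 1) * prevDen a m : ℝ) = (-1) ^ m
  | 0 => by simp [prevNum, prevDen, cfNum, cfDen]
  | m + 1 => by
      have ih := prevNum_mul_prevDen_sub a m
      rw [prevDen_add_two, prevNum_add_two]
      push_cast
      linear_combination -ih

theorem agree_prevDen_prevNum {a b : ℕ → ℕ} {n : ℕ} (hab : ∀ i, 1 ≤ i → i ≤ n → a i = b i) :
    ∀ m, m ≤ n + 1 → prevDen a m = prevDen b m ∧ prevNum a m = prevNum b m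
  | 0, _ => ⟨rfl, rfl⟩
  | 1, _ => ⟨rfl, rfl⟩
  | m + 2, hm => by
      obtain ⟨hd₁, hn₁⟩ := agree_prevDen_prevNum hab (m + 1) (by omega)
      obtain ⟨hd₀, hn₀⟩ := agree_prevDen_prevNum hab m (by omega)
      rw [prevDen_add_two, prevNum_add_two, prevDen_add_two, prevNum_add_two,
        hab (m + 1) (by omega) (by omega), hd₁, hn₁, hd₀, hn₀]
      exact ⟨rfl, rfl⟩

theorem neg_one_pow_mul_self (m : ℕ) : (-1 : ℝ) ^ m * (-1) ^ m = 1 := by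
  rw [← mul_pow]
  norm_num

noncomputable def convergent (a : ℕ → ℕ) (m : ℕ) : ℝ := cfNum a m / cfDen a m

theorem convergent_succ_sub (ha : ∀ i, 1 ≤ i → 1 ≤ a i) (m : ℕ) :
    convergent a (m + 1) - convergent a m = (-1) ^ m / (cfDen a m * cfDen a (m + 1)) := by
  have h₀ : (cfDen a m : ℝ) ≠ 0 := by exact_mod_cast (cfDen_pos ha m).ne'
  have h₁ : (cfDen a (m + 1) : ℝ) ≠ 0 := by exact_mod_cast (cfDen_pos ha (m + 1)).ne'
  have hdet := prevNum_mul_prevDen_sub a (m + 1)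
  simp only [prevNum, prevDen] at hdet
  rw [convergent, convergent]
  field_simp
  linear_combination -hdet

theorem neg_one_pow_mul_convergent_add_two_sub_pos (ha : ∀ i, 1 ≤ i → 1 ≤ a i) (m : ℕ) :
    0 < (-1) ^ m * (convergent a (m + 2) - convergent a m) := by
  have hq₀ : (0 : ℝ) < cfDen a m := by exact_mod_cast cfDen_pos ha m
  have hq₁ : (0 : ℝ) < cfDen a (m + 1) := by exact_mod_cast cfDen_pos ha (m + 1)
  have hq₀₂ : (cfDen a m : ℝ) < cfDen a (m + 2) := by exact_mod_cast cfDen_lt_cfDen_add_two ha m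
  have hsplit : (-1) ^ m * (convergent a (m + 2) - convergent a m)
      = 1 / (cfDen a m * cfDen a (m + 1)) - 1 / (cfDen a (m + 1) * cfDen a (m + 2)) := by
    rw [← sub_add_sub_cancel _ (convergent a (m + 1)), convergent_succ_sub ha,
      convergent_succ_sub ha, pow_succ]
    linear_combination
      (1 / (cfDen a m * cfDen a (m + 1)) - 1 / (cfDen a (m + 1) * cfDen a (m + 2)) : ℝ) *
        neg_one_pow_mul_self m
  rw [hsplit, sub_pos, mul_comm (cfDen a m : ℝ)]
  gcongr

theorem neg_one_pow_mul_convergent_add_sub_nonneg (ha : ∀ i, 1 ≤ i → 1 ≤ a i) :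
    ∀ d m, 0 ≤ (-1) ^ m * (convergent a (m + d) - convergent a m)
  | 0, m => by simp
  | 1, m => by
      have hq₀ : (0 : ℝ) < cfDen a m := by exact_mod_cast cfDen_pos ha m
      have hq₁ : (0 : ℝ) < cfDen a (m + 1) := by exact_mod_cast cfDen_pos ha (m + 1)
      rw [convergent_succ_sub ha, ← mul_div_assoc, neg_one_pow_mul_self]
      positivity
  | d + 2, m => by
      have hfar := neg_one_pow_mul_convergent_add_sub_nonneg ha d (m + 2)
      have hnear := neg_one_pow_mul_convergent_add_two_sub_pos ha m
      rw [show m + 2 + d = m + (d + 2) by omega, pow_add] at hfar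
      linarith

theorem neg_one_pow_mul_sub_convergent_pos (ha : ∀ i, 1 ≤ i → 1 ≤ a i) {α : ℝ}
    (hα : Tendsto (convergent a) atTop (𝓝 α)) (m : ℕ) :
    0 < (-1) ^ m * (α - convergent a m) := by
  have hfar : 0 ≤ (-1) ^ (m + 2) * (α - convergent a (m + 2)) :=
    ge_of_tendsto ((hα.sub_const _).const_mul _) <| (eventually_ge_atTop (m + 2)).mono
      fun k hk => by
        obtain ⟨d, rfl⟩ := Nat.exists_eq_add_of_le hk
        exact neg_one_pow_mul_convergent_add_sub_nonneg ha d (m + 2)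
  have hnear := neg_one_pow_mul_convergent_add_two_sub_pos ha m
  rw [pow_add] at hfar
  linarith

noncomputable def err (a : ℕ → ℕ) (α : ℝ) (m : ℕ) : ℝ := prevDen a m * α - prevNum a m

theorem err_add_two (a : ℕ → ℕ) (α : ℝ) (m : ℕ) :
    err a α (m + 2) = a (m + 1) * err a α (m + 1) + err a α m := by
  simp only [err, prevDen_add_two, prevNum_add_two]
  push_cast
  ring

theorem neg_one_pow_succ_mul_err_pos (ha : ∀ i, 1 ≤ i → 1 ≤ a i) {α : ℝ}
    (hα : Tendsto (convergent a) atTop (𝓝 α)) : ∀ m, 0 < (-1) ^ (m + 1) * err a α m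
  | 0 => by simp [err, prevDen, prevNum]
  | m + 1 => by
      have hq : (0 : ℝ) < cfDen a m := by exact_mod_cast cfDen_pos ha m
      have hq' : (cfDen a m : ℝ) ≠ 0 := hq.ne'
      have hsign := neg_one_pow_mul_sub_convergent_pos ha hα m
      have herr : (-1) ^ (m + 1 + 1) * err a α (m + 1)
          = cfDen a m * ((-1) ^ m * (α - convergent a m)) := by
        simp only [err, prevDen, prevNum, convergent]
        field_simp
        ring
      rw [herr]
      positivity

theorem err_ne_zero (ha : ∀ i, 1 ≤ i → 1 ≤ a i) {α : ℝ}
    (hα : Tendsto (convergent a) atTop (𝓝 α)) (m : ℕ) : err a α m ≠ 0 := fun h => by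
  simpa [h] using neg_one_pow_succ_mul_err_pos ha hα m

/-- `completeQuot a α m` is the complete quotient `α_{m+1} = [a_{m+1}; a_{m+2}, …]`. -/
noncomputable def completeQuot (a : ℕ → ℕ) (α : ℝ) (m : ℕ) : ℝ := -err a α m / err a α (m + 1)

theorem completeQuot_pos (ha : ∀ i, 1 ≤ i → 1 ≤ a i) {α : ℝ}
    (hα : Tendsto (convergent a) atTop (𝓝 α)) (m : ℕ) : 0 < completeQuot a α m := by
  have h₀ := neg_one_pow_succ_mul_err_pos ha hα m
  have h₁ := neg_one_pow_succ_mul_err_pos ha hα (m + 1)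
  have hquot : completeQuot a α m
      = (-1) ^ (m + 1) * err a α m / ((-1) ^ (m + 1 + 1) * err a α (m + 1)) := by
    have h₁ := err_ne_zero ha hα (m + 1)
    rw [completeQuot, pow_succ _ (m + 1)]
    field_simp
  rw [hquot]
  exact div_pos h₀ h₁

theorem completeQuot_eq (ha : ∀ i, 1 ≤ i → 1 ≤ a i) {α : ℝ}
    (hα : Tendsto (convergent a) atTop (𝓝 α)) (m : ℕ) :
    completeQuot a α m = a (m + 1) + 1 / completeQuot a α (m + 1) := by
  have h₁ := err_ne_zero ha hα (m + 1)
  have h₂ := err_ne_zero ha hα (m + 2)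
  rw [completeQuot, completeQuot, one_div_div, err_add_two]
  field_simp
  ring

theorem err_mul_denom_eq (ha : ∀ i, 1 ≤ i → 1 ≤ a i) {α : ℝ}
    (hα : Tendsto (convergent a) atTop (𝓝 α)) (m : ℕ) :
    err a α (m + 1) * (prevDen a (m + 1) * completeQuot a α m + prevDen a m) = (-1) ^ m := by
  have h₁ := err_ne_zero ha hα (m + 1)
  have hquot : err a α (m + 1) * completeQuot a α m = -err a α m := by
    rw [completeQuot]
    field_simp
  have hdet := prevNum_mul_prevDen_sub a m
  simp only [err] at hquot ⊢
  linear_combination (prevDen a (m + 1) : ℝ) * hquot + hdet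

theorem natCast_lt_completeQuot (ha : ∀ i, 1 ≤ i → 1 ≤ a i) {α : ℝ}
    (hα : Tendsto (convergent a) atTop (𝓝 α)) (m : ℕ) : (a (m + 1) : ℝ) < completeQuot a α m := by
  rw [completeQuot_eq ha hα m]
  linarith [one_div_pos.2 (completeQuot_pos ha hα (m + 1))]

theorem one_lt_completeQuot (ha : ∀ i, 1 ≤ i → 1 ≤ a i) {α : ℝ}
    (hα : Tendsto (convergent a) atTop (𝓝 α)) (m : ℕ) : 1 < completeQuot a α m := by
  have h : (1 : ℝ) ≤ a (m + 1) := by exact_mod_cast ha (m + 1) (by omega)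
  linarith [natCast_lt_completeQuot ha hα m]

theorem prevDen_mul_completeQuot_add_pos (ha : ∀ i, 1 ≤ i → 1 ≤ a i) {α : ℝ}
    (hα : Tendsto (convergent a) atTop (𝓝 α)) (m : ℕ) :
    0 < prevDen a (m + 1) * completeQuot a α m + prevDen a m := by
  have hq : (0 : ℝ) < prevDen a (m + 1) := by exact_mod_cast cfDen_pos ha m
  have ht := completeQuot_pos ha hα m
  positivity

section Bounded

variable {M : ℝ} (ha : ∀ i, 1 ≤ i → 1 ≤ a i) (haM : ∀ i, 1 ≤ i → (a i : ℝ) ≤ M)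
  {α : ℝ} (hα : Tendsto (convergent a) atTop (𝓝 α))

include ha haM hα

theorem completeQuot_le (m : ℕ) : completeQuot a α m ≤ M + 1 := by
  have hlt := one_lt_completeQuot ha hα (m + 1)
  have hinv : 1 / completeQuot a α (m + 1) ≤ 1 := by
    rw [div_le_one (by linarith)]
    exact hlt.le
  rw [completeQuot_eq ha hα m]
  linarith [haM (m + 1) (by omega)]

theorem natCast_add_le_completeQuot (m : ℕ) :
    (a (m + 1) : ℝ) + 1 / (M + 1) ≤ completeQuot a α m := by
  rw [completeQuot_eq ha hα m]
  gcongr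
  · exact completeQuot_pos ha hα (m + 1)
  · exact completeQuot_le ha haM hα (m + 1)

theorem completeQuot_le_natCast_add (m : ℕ) :
    completeQuot a α m ≤ a (m + 1) + 1 - 1 / (M + 2) := by
  have hM : (1 : ℝ) ≤ M := le_trans (by exact_mod_cast ha 1 le_rfl) (haM 1 le_rfl)
  have h₁ : (1 : ℝ) ≤ a (m + 2) := by exact_mod_cast ha (m + 2) (by omega)
  have hnext : (M + 2) / (M + 1) ≤ completeQuot a α (m + 1) := by
    have h := natCast_add_le_completeQuot ha haM hα (m + 1)
    have : (M + 2) / (M + 1) = 1 + 1 / (M + 1) := by field_simp; ring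
    linarith
  have hinv : 1 / completeQuot a α (m + 1) ≤ 1 - 1 / (M + 2) := by
    calc 1 / completeQuot a α (m + 1) ≤ 1 / ((M + 2) / (M + 1)) :=
          one_div_le_one_div_of_le (by positivity) hnext
      _ = 1 - 1 / (M + 2) := by field_simp; ring
  rw [completeQuot_eq ha hα m]
  linarith

theorem prevDen_mul_completeQuot_add_le (m : ℕ) :
    prevDen a (m + 1) * completeQuot a α m + prevDen a m ≤ (M + 2) * prevDen a (m + 1) := by
  have hq : (0 : ℝ) ≤ prevDen a (m + 1) := Nat.cast_nonneg _
  have hle : (prevDen a m : ℝ) ≤ prevDen a (m + 1) := by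
    exact_mod_cast prevDen_le_prevDen_succ ha m
  have ht := mul_le_mul_of_nonneg_left (completeQuot_le ha haM hα m) hq
  linarith

end Bounded

end ContinuedFractionGap

open ContinuedFractionGap

theorem stmt16_general (M : ℝ) (a b : ℕ → ℕ)
    (ha : ∀ i, 1 ≤ i → 1 ≤ a i ∧ (a i : ℝ) ≤ M)
    (hb : ∀ i, 1 ≤ i → 1 ≤ b i ∧ (b i : ℝ) ≤ M)
    -- `α = [0; a 1, a 2, …]` and `ξ = [0; b 1, b 2, …]`
    (α ξ : ℝ)
    (hα : Filter.Tendsto (fun n => (cfNum a n : ℝ) / (cfDen a n : ℝ)) Filter.atTop (nhds α))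
    (hξ : Filter.Tendsto (fun n => (cfNum b n : ℝ) / (cfDen b n : ℝ)) Filter.atTop (nhds ξ))
    (n : ℕ) (hagree : ∀ i, 1 ≤ i → i ≤ n → a i = b i) (hdiff : a (n + 1) ≠ b (n + 1)) :
    1 / ((M + 2) ^ 3 * (cfDen a n : ℝ) ^ 2) ≤ |ξ - α| := by
  have ha₁ i hi : 1 ≤ a i := (ha i hi).1
  have hb₁ i hi : 1 ≤ b i := (hb i hi).1
  have haM i hi : (a i : ℝ) ≤ M := (ha i hi).2
  have hbM i hi : (b i : ℝ) ≤ M := (hb i hi).2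
  change Tendsto (convergent a) atTop (𝓝 α) at hα
  change Tendsto (convergent b) atTop (𝓝 ξ) at hξ
  obtain ⟨hR, -⟩ := agree_prevDen_prevNum hagree n (by omega)
  obtain ⟨hQ, hP⟩ := agree_prevDen_prevNum hagree (n + 1) le_rfl
  have hξ_err := err_mul_denom_eq hb₁ hξ n
  rw [err, ← hQ, ← hP, ← hR] at hξ_err
  have hQ_pos : (0 : ℝ) < prevDen a (n + 1) := by exact_mod_cast cfDen_pos ha₁ n
  have hdA_pos := prevDen_mul_completeQuot_add_pos ha₁ hα n
  have hdA_le := prevDen_mul_completeQuot_add_le ha₁ haM hα n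
  have hdB_pos := prevDen_mul_completeQuot_add_pos hb₁ hξ n
  have hdB_le := prevDen_mul_completeQuot_add_le hb₁ hbM hξ n
  rw [← hQ, ← hR] at hdB_pos hdB_le
  have hgap : 1 / (M + 2) ≤ |completeQuot a α n - completeQuot b ξ n| :=
    le_abs_sub_of_ne_of_mem_Icc hdiff
      ⟨(natCast_lt_completeQuot ha₁ hα n).le, completeQuot_le_natCast_add ha₁ haM hα n⟩
      ⟨(natCast_lt_completeQuot hb₁ hξ n).le, completeQuot_le_natCast_add hb₁ hbM hξ n⟩
  change 1 / ((M + 2) ^ 3 * (prevDen a (n + 1) : ℝ) ^ 2) ≤ _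
  rw [abs_sub_eq_of_mul_eq hQ_pos.ne' (by simp) hdA_pos hdB_pos (err_mul_denom_eq ha₁ hα n) hξ_err]
  calc 1 / ((M + 2) ^ 3 * (prevDen a (n + 1) : ℝ) ^ 2)
      = 1 / (M + 2) / ((M + 2) * prevDen a (n + 1) * ((M + 2) * prevDen a (n + 1))) := by
        rw [div_div]; ring
    _ ≤ _ := div_le_div₀ (abs_nonneg _) hgap (mul_pos hdA_pos hdB_pos)
        (mul_le_mul hdA_le hdB_le hdB_pos.le (hdA_pos.le.trans hdA_le))

theorem stmt16 (M : ℝ) (hM : 0 < M) (a b : ℕ → ℕ)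
    (ha : ∀ i, 1 ≤ i → 1 ≤ a i ∧ (a i : ℝ) ≤ M)
    (hb : ∀ i, 1 ≤ i → 1 ≤ b i ∧ (b i : ℝ) ≤ M)
    -- `α = [0; a 1, a 2, …]` and `ξ = [0; b 1, b 2, …]`
    (α ξ : ℝ)
    (hα : Filter.Tendsto (fun n => (cfNum a n : ℝ) / (cfDen a n : ℝ)) Filter.atTop (nhds α))
    (hξ : Filter.Tendsto (fun n => (cfNum b n : ℝ) / (cfDen b n : ℝ)) Filter.atTop (nhds ξ))
    (n : ℕ) (hagree : ∀ i, 1 ≤ i → i ≤ n → a i = b i) (hdiff : a (n + 1) ≠ b (n + 1)) :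
    1 / ((M + 2) ^ 3 * (cfDen a n : ℝ) ^ 2) ≤ |ξ - α| :=
  stmt16_general M a b ha hb α ξ hα hξ n hagree hdiff
end
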